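/- arXiv:2108.03939 — 3 statements merged into one kernel-verified Lean document; each statement's English description precedes it below -/
import Mathlib

section
/- Any deduction in the system C can be transformed into a deduction of the same conclusion from the same undischarged assumptions in which every application of a general introduction rule (∧I, ∨I, ⊃I, TR, ¬I) discharges exactly one occurrence of its major assumption. -/
/- Milne's system **C** of classical propositional logic with general
introduction and general elimination rules (Kürbis, "Normalisation and
Subformula Property for a System of Classical Logic with Tarski's Rule").

Formulas are built from atoms by ¬, ∧, ∨, ⊃. -/
inductive Formula : Type
  | atom : ℕ → Formula
  | neg  : Formula → Formula
  | conj : Formula → Formula → Formula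
  | disj : Formula → Formula → Formula
  | imp  : Formula → Formula → Formula
  deriving DecidableEq

/-- Raw deduction trees of the system **C**.  Assumption occurrences carry a
label (natural number) marking their assumption class; each rule that
discharges assumptions records the label(s) of the class(es) it discharges.
Constructor arguments list first the labels, then the formulas figuring in the
rule, then the immediate subdeductions (major premise first for eliminations;
for introductions: the specific premise(s), then the deduction of the
arbitrary premise from the discharged major assumption).

* `ass ℓ A`           : the assumption `A`, in assumption class `ℓ`.
* `andI ℓ A B ΣA ΣB Π` : from `A`, `B` and `C`-from-`[A∧B]^ℓ` infer `C`.
* `andE ℓA ℓB A B M Π` : from `A∧B` and `C`-from-`[A]^ℓA,[B]^ℓB` infer `C`.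
* `orI₁ ℓ A B ΣA Π`    : from `A` and `C`-from-`[A∨B]^ℓ` infer `C`.
* `orI₂ ℓ A B ΣB Π`    : from `B` and `C`-from-`[A∨B]^ℓ` infer `C`.
* `orE ℓA ℓB A B M Π Ξ`: from `A∨B`, `C`-from-`[A]^ℓA`, `C`-from-`[B]^ℓB` infer `C`.
* `impI ℓ A B ΣB Π`    : from `B` and `C`-from-`[A⊃B]^ℓ` infer `C`.
* `tr ℓA ℓAB A B Π Ξ`  : Tarski's Rule: from `C`-from-`[A]^ℓA` and
                         `C`-from-`[A⊃B]^ℓAB` infer `C`.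
* `impE ℓ A B M ΣA Π`  : from `A⊃B`, `A` and `C`-from-`[B]^ℓ` infer `C`.
* `negI ℓA ℓnA A Π Ξ`  : from `C`-from-`[A]^ℓA` and `C`-from-`[¬A]^ℓnA` infer `C`.
* `negE A C M ΣA`      : from `¬A` and `A` infer any `C`. -/
inductive PT : Type
  | ass  : ℕ → Formula → PT
  | andI : ℕ → Formula → Formula → PT → PT → PT → PT
  | andE : ℕ → ℕ → Formula → Formula → PT → PT → PT
  | orI₁ : ℕ → Formula → Formula → PT → PT → PT
  | orI₂ : ℕ → Formula → Formula → PT → PT → PT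
  | orE  : ℕ → ℕ → Formula → Formula → PT → PT → PT → PT
  | impI : ℕ → Formula → Formula → PT → PT → PT
  | tr   : ℕ → ℕ → Formula → Formula → PT → PT → PT
  | impE : ℕ → Formula → Formula → PT → PT → PT → PT
  | negI : ℕ → ℕ → Formula → PT → PT → PT
  | negE : Formula → Formula → PT → PT → PT
  deriving DecidableEq

namespace PT

/-- The conclusion (root formula) of a deduction tree. -/
def concl : PT → Formula
  | .ass _ A => A
  | .andI _ _ _ _ _ r => r.concl
  | .andE _ _ _ _ _ q => q.concl
  | .orI₁ _ _ _ _ q => q.concl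
  | .orI₂ _ _ _ _ q => q.concl
  | .orE _ _ _ _ _ q _ => q.concl
  | .impI _ _ _ _ q => q.concl
  | .tr _ _ _ _ p _ => p.concl
  | .impE _ _ _ _ _ r => r.concl
  | .negI _ _ _ p _ => p.concl
  | .negE _ C _ _ => C

/-- The multiset of open (undischarged) labelled assumptions of a deduction. -/
def openAss : PT → Multiset (ℕ × Formula)
  | .ass ℓ A => {(ℓ, A)}
  | .andI ℓ _ _ p q r =>
      p.openAss + q.openAss + (r.openAss.filter fun z => z.1 ≠ ℓ)
  | .andE ℓA ℓB _ _ p q =>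
      p.openAss + (q.openAss.filter fun z => z.1 ≠ ℓA ∧ z.1 ≠ ℓB)
  | .orI₁ ℓ _ _ p q => p.openAss + (q.openAss.filter fun z => z.1 ≠ ℓ)
  | .orI₂ ℓ _ _ p q => p.openAss + (q.openAss.filter fun z => z.1 ≠ ℓ)
  | .orE ℓA ℓB _ _ p q r =>
      p.openAss + (q.openAss.filter fun z => z.1 ≠ ℓA) +
        (r.openAss.filter fun z => z.1 ≠ ℓB)
  | .impI ℓ _ _ p q => p.openAss + (q.openAss.filter fun z => z.1 ≠ ℓ)
  | .tr ℓA ℓAB _ _ p q =>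
      (p.openAss.filter fun z => z.1 ≠ ℓA) + (q.openAss.filter fun z => z.1 ≠ ℓAB)
  | .impE ℓ _ _ p q r =>
      p.openAss + q.openAss + (r.openAss.filter fun z => z.1 ≠ ℓ)
  | .negI ℓA ℓnA _ p q =>
      (p.openAss.filter fun z => z.1 ≠ ℓA) + (q.openAss.filter fun z => z.1 ≠ ℓnA)
  | .negE _ _ p q => p.openAss + q.openAss

/-- Correctness of a deduction tree: the subdeductions conclude the right
formulas, every open assumption in a discharged class has the form required
by the rule, and (ban on vacuous discharge above arbitrary premises) each
discharge actually discharges at least one assumption occurrence — in `∧E`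
at least one of the two classes `[A]`, `[B]` is non-empty, which reflects the
option of discharging only one of the two assumptions. -/
def wf : PT → Prop
  | .ass _ _ => True
  | .andI ℓ A B p q r => p.wf ∧ q.wf ∧ r.wf ∧ p.concl = A ∧ q.concl = B ∧
      (∀ F, (ℓ, F) ∈ r.openAss → F = Formula.conj A B) ∧
      (ℓ, Formula.conj A B) ∈ r.openAss
  | .andE ℓA ℓB A B p q => p.wf ∧ q.wf ∧ p.concl = Formula.conj A B ∧
      (∀ F, (ℓA, F) ∈ q.openAss → F = A) ∧ (∀ F, (ℓB, F) ∈ q.openAss → F = B) ∧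
      ((ℓA, A) ∈ q.openAss ∨ (ℓB, B) ∈ q.openAss)
  | .orI₁ ℓ A B p q => p.wf ∧ q.wf ∧ p.concl = A ∧
      (∀ F, (ℓ, F) ∈ q.openAss → F = Formula.disj A B) ∧
      (ℓ, Formula.disj A B) ∈ q.openAss
  | .orI₂ ℓ A B p q => p.wf ∧ q.wf ∧ p.concl = B ∧
      (∀ F, (ℓ, F) ∈ q.openAss → F = Formula.disj A B) ∧
      (ℓ, Formula.disj A B) ∈ q.openAss
  | .orE ℓA ℓB A B p q r => p.wf ∧ q.wf ∧ r.wf ∧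
      p.concl = Formula.disj A B ∧ q.concl = r.concl ∧
      (∀ F, (ℓA, F) ∈ q.openAss → F = A) ∧ (ℓA, A) ∈ q.openAss ∧
      (∀ F, (ℓB, F) ∈ r.openAss → F = B) ∧ (ℓB, B) ∈ r.openAss
  | .impI ℓ A B p q => p.wf ∧ q.wf ∧ p.concl = B ∧
      (∀ F, (ℓ, F) ∈ q.openAss → F = Formula.imp A B) ∧
      (ℓ, Formula.imp A B) ∈ q.openAss
  | .tr ℓA ℓAB A B p q => p.wf ∧ q.wf ∧ p.concl = q.concl ∧
      (∀ F, (ℓA, F) ∈ p.openAss → F = A) ∧ (ℓA, A) ∈ p.openAss ∧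
      (∀ F, (ℓAB, F) ∈ q.openAss → F = Formula.imp A B) ∧
      (ℓAB, Formula.imp A B) ∈ q.openAss
  | .impE ℓ A B p q r => p.wf ∧ q.wf ∧ r.wf ∧
      p.concl = Formula.imp A B ∧ q.concl = A ∧
      (∀ F, (ℓ, F) ∈ r.openAss → F = B) ∧ (ℓ, B) ∈ r.openAss
  | .negI ℓA ℓnA A p q => p.wf ∧ q.wf ∧ p.concl = q.concl ∧
      (∀ F, (ℓA, F) ∈ p.openAss → F = A) ∧ (ℓA, A) ∈ p.openAss ∧
      (∀ F, (ℓnA, F) ∈ q.openAss → F = Formula.neg A) ∧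
      (ℓnA, Formula.neg A) ∈ q.openAss
  | .negE A _ p q => p.wf ∧ q.wf ∧ p.concl = Formula.neg A ∧ q.concl = A

/-- The set of formulas that occur as undischarged assumptions of a deduction. -/
def assumptions (d : PT) : Set Formula := {A | ∃ ℓ, (ℓ, A) ∈ d.openAss}

end PT

namespace PT

/-- Every application of a general introduction rule (`∧I`, `∨I`, `⊃I`, `TR`,
`¬I`) in the deduction discharges exactly one occurrence of its major
assumption (the discharged formula with the governed connective as main
operator: `A∧B`, `A∨B`, `A⊃B`, `¬A`). -/
def uniqueDischarge : PT → Prop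
  | .ass _ _ => True
  | .andI ℓ A B p q r => p.uniqueDischarge ∧ q.uniqueDischarge ∧
      r.uniqueDischarge ∧ r.openAss.count (ℓ, Formula.conj A B) = 1
  | .andE _ _ _ _ p q => p.uniqueDischarge ∧ q.uniqueDischarge
  | .orI₁ ℓ A B p q => p.uniqueDischarge ∧ q.uniqueDischarge ∧
      q.openAss.count (ℓ, Formula.disj A B) = 1
  | .orI₂ ℓ A B p q => p.uniqueDischarge ∧ q.uniqueDischarge ∧
      q.openAss.count (ℓ, Formula.disj A B) = 1
  | .orE _ _ _ _ p q r =>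
      p.uniqueDischarge ∧ q.uniqueDischarge ∧ r.uniqueDischarge
  | .impI ℓ A B p q => p.uniqueDischarge ∧ q.uniqueDischarge ∧
      q.openAss.count (ℓ, Formula.imp A B) = 1
  | .tr _ ℓAB A B p q => p.uniqueDischarge ∧ q.uniqueDischarge ∧
      q.openAss.count (ℓAB, Formula.imp A B) = 1
  | .impE _ _ _ p q r =>
      p.uniqueDischarge ∧ q.uniqueDischarge ∧ r.uniqueDischarge
  | .negI _ ℓnA A p q => p.uniqueDischarge ∧ q.uniqueDischarge ∧
      q.openAss.count (ℓnA, Formula.neg A) = 1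
  | .negE _ _ p q => p.uniqueDischarge ∧ q.uniqueDischarge

end PT

namespace PT

/-- All labels occurring anywhere in a deduction tree. -/
def labels : PT → Finset ℕ
  | .ass ℓ _ => {ℓ}
  | .andI ℓ _ _ p q r => insert ℓ (p.labels ∪ q.labels ∪ r.labels)
  | .andE ℓA ℓB _ _ p q => insert ℓA (insert ℓB (p.labels ∪ q.labels))
  | .orI₁ ℓ _ _ p q => insert ℓ (p.labels ∪ q.labels)
  | .orI₂ ℓ _ _ p q => insert ℓ (p.labels ∪ q.labels)
  | .orE ℓA ℓB _ _ p q r => insert ℓA (insert ℓB (p.labels ∪ q.labels ∪ r.labels))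
  | .impI ℓ _ _ p q => insert ℓ (p.labels ∪ q.labels)
  | .tr ℓA ℓAB _ _ p q => insert ℓA (insert ℓAB (p.labels ∪ q.labels))
  | .impE ℓ _ _ p q r => insert ℓ (p.labels ∪ q.labels ∪ r.labels)
  | .negI ℓA ℓnA _ p q => insert ℓA (insert ℓnA (p.labels ∪ q.labels))
  | .negE _ _ p q => p.labels ∪ q.labels

lemma fst_mem_labels : ∀ (d : PT) {z : ℕ × Formula}, z ∈ d.openAss → z.1 ∈ d.labels := by
  intro d
  induction d with
  | ass ℓ A =>
      intro z hz
      simp only [openAss, Multiset.mem_singleton] at hz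
      subst hz; simp [labels]
  | _ =>
      intro z hz <;>
      simp only [openAss, Multiset.mem_add, Multiset.mem_filter] at hz <;>
      simp only [labels, Finset.mem_insert, Finset.mem_union]
      all_goals try (rename_i ih1 ih2 ih3; have h1 := @ih1 z; have h2 := @ih2 z; have h3 := @ih3 z; tauto)
      all_goals try (rename_i ih1 ih2; have h1 := @ih1 z; have h2 := @ih2 z; tauto)

end PT

section MultisetHelpers

variable {α : Type*} [DecidableEq α]

lemma count_erase' (a e : α) (s : Multiset α) :
    (s.erase e).count a = s.count a - if a = e then 1 else 0 := by
  rcases eq_or_ne a e with rfl | h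
  · simp [Multiset.count_erase_self]
  · simp [Multiset.count_erase_of_ne h, h]

lemma ce2L {e c : α} {s : Multiset α} (t : Multiset α) (h : e ∈ s) :
    (c ::ₘ s.erase e) + t = c ::ₘ (s + t).erase e := by
  ext a
  rcases eq_or_ne a e with rfl | hne
  · have hp := Multiset.count_pos.2 h
    simp only [Multiset.count_add, Multiset.count_cons, count_erase', if_pos rfl]
    split_ifs <;> omega
  · simp only [Multiset.count_add, Multiset.count_cons, count_erase', if_neg hne]
    split_ifs <;> omega

lemma ce2R {e c : α} (s : Multiset α) {t : Multiset α} (h : e ∈ t) :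
    s + (c ::ₘ t.erase e) = c ::ₘ (s + t).erase e := by
  ext a
  rcases eq_or_ne a e with rfl | hne
  · have hp := Multiset.count_pos.2 h
    simp only [Multiset.count_add, Multiset.count_cons, count_erase', if_pos rfl]
    split_ifs <;> omega
  · simp only [Multiset.count_add, Multiset.count_cons, count_erase', if_neg hne]
    split_ifs <;> omega

lemma ce3L {e c : α} {s : Multiset α} (t u : Multiset α) (h : e ∈ s) :
    (c ::ₘ s.erase e) + t + u = c ::ₘ (s + t + u).erase e := by
  rw [ce2L t h, Multiset.cons_add, Multiset.erase_add_left_pos u (by simp [h])]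

lemma ce3M {e c : α} (s : Multiset α) {t : Multiset α} (u : Multiset α) (h : e ∈ t) :
    s + (c ::ₘ t.erase e) + u = c ::ₘ (s + t + u).erase e := by
  rw [ce2R s h, Multiset.cons_add, Multiset.erase_add_left_pos u (by simp [h])]

lemma ce3R {e c : α} (s t : Multiset α) {u : Multiset α} (h : e ∈ u) :
    s + t + (c ::ₘ u.erase e) = c ::ₘ (s + t + u).erase e := by
  rw [ce2R (s + t) h]

lemma filter_erase_pos (p : α → Prop) [DecidablePred p] {e : α} (he : p e) (s : Multiset α) :
    (s.erase e).filter p = (s.filter p).erase e := by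
  ext a
  rcases eq_or_ne a e with rfl | hne
  · simp [Multiset.count_filter, count_erase', he]
  · simp only [Multiset.count_filter, count_erase', if_neg hne]
    split_ifs <;> omega

lemma filter_erase_neg (p : α → Prop) [DecidablePred p] {e : α} (he : ¬ p e) (s : Multiset α) :
    (s.erase e).filter p = s.filter p := by
  ext a
  rcases eq_or_ne a e with rfl | hne
  · simp [Multiset.count_filter, he, Multiset.count_erase_self]
  · simp only [Multiset.count_filter, count_erase', if_neg hne]
    split_ifs <;> omega

lemma filter_split (p : α → Prop) [DecidablePred p] {c e : α} (hc : p c) (he : p e)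
    (s : Multiset α) : (c ::ₘ s.erase e).filter p = c ::ₘ (s.filter p).erase e := by
  rw [Multiset.filter_cons_of_pos _ hc, filter_erase_pos p he]

end MultisetHelpers

lemma pair_ne {a b : ℕ} {X Y : Formula} (h : a ≠ b) : (a, X) ≠ (b, Y) :=
  fun hh => h (congrArg Prod.fst hh)

lemma count_split {s : Multiset (ℕ × Formula)} {ℓ b ℓ' : ℕ} {F X : Formula}
    (h1 : ℓ' ≠ b) (h2 : ℓ' ≠ ℓ) :
    ((b, F) ::ₘ s.erase (ℓ, F)).count (ℓ', X) = s.count (ℓ', X) := by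
  rw [Multiset.count_cons_of_ne (pair_ne h1), Multiset.count_erase_of_ne (pair_ne h2)]

lemma mem_split {s : Multiset (ℕ × Formula)} {ℓ b ℓ' : ℕ} {F X : Formula}
    (h1 : ℓ' ≠ b) (h2 : ℓ' ≠ ℓ) :
    ((ℓ', X) ∈ (b, F) ::ₘ s.erase (ℓ, F)) ↔ (ℓ', X) ∈ s := by
  rw [← Multiset.count_pos, count_split h1 h2, Multiset.count_pos]

namespace PT

set_option maxHeartbeats 3000000 in
lemma split : ∀ (d : PT) (ℓ b : ℕ) (F : Formula), d.wf → (ℓ, F) ∈ d.openAss →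
    b ∉ d.labels →
    ∃ d' : PT, d'.wf ∧ d'.concl = d.concl ∧
      d'.openAss = (b, F) ::ₘ d.openAss.erase (ℓ, F) ∧
      (∀ m ∈ d'.labels, m = b ∨ m ∈ d.labels) ∧
      (d.uniqueDischarge → d'.uniqueDischarge) := by
  intro d
  induction d with
  | ass ℓ₀ A =>
    intro ℓ b F hwf hmem hb
    simp only [openAss, Multiset.mem_singleton] at hmem
    have hF : F = A := congrArg Prod.snd hmem
    refine ⟨.ass b F, trivial, ?_, ?_, ?_, fun _ => trivial⟩
    · simpa [concl] using hF
    · simp only [openAss]; rw [hmem]; simp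
    · intro m hm
      simp only [labels, Finset.mem_singleton] at hm
      exact Or.inl hm
  | andI ℓ' A B p q r ihp ihq ihr =>
    intro ℓ b F hwf hmem hb
    simp only [wf] at hwf
    obtain ⟨hwp, hwq, hwr, hcp, hcq, hall, hm0⟩ := hwf
    simp only [labels, Finset.mem_insert, Finset.mem_union] at hb
    push_neg at hb
    obtain ⟨hb1, ⟨hb2, hb3⟩, hb4⟩ := hb
    simp only [openAss, Multiset.mem_add, Multiset.mem_filter] at hmem
    rcases hmem with (hp | hq) | hr
    · obtain ⟨d₁, w₁, c₁, o₁, l₁, u₁⟩ := ihp ℓ b F hwp hp hb2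
      refine ⟨.andI ℓ' A B d₁ q r, ?_, ?_, ?_, ?_, ?_⟩
      · simp only [wf]; exact ⟨w₁, hwq, hwr, c₁.trans hcp, hcq, hall, hm0⟩
      · simp only [concl]
      · simp only [openAss, o₁]; exact ce3L _ _ hp
      · intro m hm
        simp only [labels, Finset.mem_insert, Finset.mem_union] at hm ⊢
        rcases hm with h | (h | h) | h
        · tauto
        · rcases l₁ m h with h' | h' <;> tauto
        · tauto
        · tauto
      · intro hud; simp only [uniqueDischarge] at hud ⊢
        exact ⟨u₁ hud.1, hud.2.1, hud.2.2.1, hud.2.2.2⟩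
    · obtain ⟨d₁, w₁, c₁, o₁, l₁, u₁⟩ := ihq ℓ b F hwq hq hb3
      refine ⟨.andI ℓ' A B p d₁ r, ?_, ?_, ?_, ?_, ?_⟩
      · simp only [wf]; exact ⟨hwp, w₁, hwr, hcp, c₁.trans hcq, hall, hm0⟩
      · simp only [concl]
      · simp only [openAss, o₁]; exact ce3M _ _ hq
      · intro m hm
        simp only [labels, Finset.mem_insert, Finset.mem_union] at hm ⊢
        rcases hm with h | (h | h) | h
        · tauto
        · tauto
        · rcases l₁ m h with h' | h' <;> tauto
        · tauto
      · intro hud; simp only [uniqueDischarge] at hud ⊢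
        exact ⟨hud.1, u₁ hud.2.1, hud.2.2.1, hud.2.2.2⟩
    · have hlne : ℓ ≠ ℓ' := by simpa using hr.2
      obtain ⟨d₁, w₁, c₁, o₁, l₁, u₁⟩ := ihr ℓ b F hwr hr.1 hb4
      refine ⟨.andI ℓ' A B p q d₁, ?_, ?_, ?_, ?_, ?_⟩
      · simp only [wf]
        refine ⟨hwp, hwq, w₁, hcp, hcq, ?_, ?_⟩
        · intro F' hF'
          rw [o₁, mem_split (Ne.symm hb1) (Ne.symm hlne)] at hF'
          exact hall F' hF'
        · rw [o₁, mem_split (Ne.symm hb1) (Ne.symm hlne)]; exact hm0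
      · simp only [concl]; exact c₁
      · simp only [openAss, o₁]
        rw [filter_split (fun z => z.1 ≠ ℓ') hb1 hlne r.openAss]
        exact ce3R _ _ (Multiset.mem_filter.2 ⟨hr.1, hlne⟩)
      · intro m hm
        simp only [labels, Finset.mem_insert, Finset.mem_union] at hm ⊢
        rcases hm with h | (h | h) | h
        · tauto
        · tauto
        · tauto
        · rcases l₁ m h with h' | h' <;> tauto
      · intro hud; simp only [uniqueDischarge] at hud ⊢
        refine ⟨hud.1, hud.2.1, u₁ hud.2.2.1, ?_⟩
        rw [o₁, count_split (Ne.symm hb1) (Ne.symm hlne)]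
        exact hud.2.2.2
  | andE ℓA ℓB A B p q ihp ihq =>
    intro ℓ b F hwf hmem hb
    simp only [wf] at hwf
    obtain ⟨hwp, hwq, hcp, hA, hB, hor⟩ := hwf
    simp only [labels, Finset.mem_insert, Finset.mem_union] at hb
    push_neg at hb
    obtain ⟨hb1, hb2, hb3, hb4⟩ := hb
    simp only [openAss, Multiset.mem_add, Multiset.mem_filter] at hmem
    rcases hmem with hp | hq
    · obtain ⟨d₁, w₁, c₁, o₁, l₁, u₁⟩ := ihp ℓ b F hwp hp hb3
      refine ⟨.andE ℓA ℓB A B d₁ q, ?_, ?_, ?_, ?_, ?_⟩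
      · simp only [wf]; exact ⟨w₁, hwq, c₁.trans hcp, hA, hB, hor⟩
      · simp only [concl]
      · simp only [openAss, o₁]; exact ce2L _ hp
      · intro m hm
        simp only [labels, Finset.mem_insert, Finset.mem_union] at hm ⊢
        rcases hm with h | h | h | h
        · tauto
        · tauto
        · rcases l₁ m h with h' | h' <;> tauto
        · tauto
      · intro hud; simp only [uniqueDischarge] at hud ⊢
        exact ⟨u₁ hud.1, hud.2⟩
    · have hl1 : ℓ ≠ ℓA := by simpa using hq.2.1
      have hl2 : ℓ ≠ ℓB := by simpa using hq.2.2
      obtain ⟨d₁, w₁, c₁, o₁, l₁, u₁⟩ := ihq ℓ b F hwq hq.1 hb4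
      refine ⟨.andE ℓA ℓB A B p d₁, ?_, ?_, ?_, ?_, ?_⟩
      · simp only [wf]
        refine ⟨hwp, w₁, hcp, ?_, ?_, ?_⟩
        · intro F' hF'
          rw [o₁, mem_split (Ne.symm hb1) (Ne.symm hl1)] at hF'
          exact hA F' hF'
        · intro F' hF'
          rw [o₁, mem_split (Ne.symm hb2) (Ne.symm hl2)] at hF'
          exact hB F' hF'
        · rcases hor with h | h
          · exact Or.inl (by rw [o₁, mem_split (Ne.symm hb1) (Ne.symm hl1)]; exact h)
          · exact Or.inr (by rw [o₁, mem_split (Ne.symm hb2) (Ne.symm hl2)]; exact h)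
      · simp only [concl]; exact c₁
      · simp only [openAss, o₁]
        rw [filter_split (fun z => z.1 ≠ ℓA ∧ z.1 ≠ ℓB) ⟨hb1, hb2⟩ ⟨hl1, hl2⟩ q.openAss]
        exact ce2R _ (Multiset.mem_filter.2 ⟨hq.1, ⟨hl1, hl2⟩⟩)
      · intro m hm
        simp only [labels, Finset.mem_insert, Finset.mem_union] at hm ⊢
        rcases hm with h | h | h | h
        · tauto
        · tauto
        · tauto
        · rcases l₁ m h with h' | h' <;> tauto
      · intro hud; simp only [uniqueDischarge] at hud ⊢
        exact ⟨hud.1, u₁ hud.2⟩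
  | orI₁ ℓ' A B p q ihp ihq =>
    intro ℓ b F hwf hmem hb
    simp only [wf] at hwf
    obtain ⟨hwp, hwq, hcp, hall, hm0⟩ := hwf
    simp only [labels, Finset.mem_insert, Finset.mem_union] at hb
    push_neg at hb
    obtain ⟨hb1, hb2, hb3⟩ := hb
    simp only [openAss, Multiset.mem_add, Multiset.mem_filter] at hmem
    rcases hmem with hp | hq
    · obtain ⟨d₁, w₁, c₁, o₁, l₁, u₁⟩ := ihp ℓ b F hwp hp hb2
      refine ⟨.orI₁ ℓ' A B d₁ q, ?_, ?_, ?_, ?_, ?_⟩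
      · simp only [wf]; exact ⟨w₁, hwq, c₁.trans hcp, hall, hm0⟩
      · simp only [concl]
      · simp only [openAss, o₁]; exact ce2L _ hp
      · intro m hm
        simp only [labels, Finset.mem_insert, Finset.mem_union] at hm ⊢
        rcases hm with h | h | h
        · tauto
        · rcases l₁ m h with h' | h' <;> tauto
        · tauto
      · intro hud; simp only [uniqueDischarge] at hud ⊢
        exact ⟨u₁ hud.1, hud.2.1, hud.2.2⟩
    · have hlne : ℓ ≠ ℓ' := by simpa using hq.2
      obtain ⟨d₁, w₁, c₁, o₁, l₁, u₁⟩ := ihq ℓ b F hwq hq.1 hb3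
      refine ⟨.orI₁ ℓ' A B p d₁, ?_, ?_, ?_, ?_, ?_⟩
      · simp only [wf]
        refine ⟨hwp, w₁, hcp, ?_, ?_⟩
        · intro F' hF'
          rw [o₁, mem_split (Ne.symm hb1) (Ne.symm hlne)] at hF'
          exact hall F' hF'
        · rw [o₁, mem_split (Ne.symm hb1) (Ne.symm hlne)]; exact hm0
      · simp only [concl]; exact c₁
      · simp only [openAss, o₁]
        rw [filter_split (fun z => z.1 ≠ ℓ') hb1 hlne q.openAss]
        exact ce2R _ (Multiset.mem_filter.2 ⟨hq.1, hlne⟩)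
      · intro m hm
        simp only [labels, Finset.mem_insert, Finset.mem_union] at hm ⊢
        rcases hm with h | h | h
        · tauto
        · tauto
        · rcases l₁ m h with h' | h' <;> tauto
      · intro hud; simp only [uniqueDischarge] at hud ⊢
        refine ⟨hud.1, u₁ hud.2.1, ?_⟩
        rw [o₁, count_split (Ne.symm hb1) (Ne.symm hlne)]
        exact hud.2.2
  | orI₂ ℓ' A B p q ihp ihq =>
    intro ℓ b F hwf hmem hb
    simp only [wf] at hwf
    obtain ⟨hwp, hwq, hcp, hall, hm0⟩ := hwf
    simp only [labels, Finset.mem_insert, Finset.mem_union] at hb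
    push_neg at hb
    obtain ⟨hb1, hb2, hb3⟩ := hb
    simp only [openAss, Multiset.mem_add, Multiset.mem_filter] at hmem
    rcases hmem with hp | hq
    · obtain ⟨d₁, w₁, c₁, o₁, l₁, u₁⟩ := ihp ℓ b F hwp hp hb2
      refine ⟨.orI₂ ℓ' A B d₁ q, ?_, ?_, ?_, ?_, ?_⟩
      · simp only [wf]; exact ⟨w₁, hwq, c₁.trans hcp, hall, hm0⟩
      · simp only [concl]
      · simp only [openAss, o₁]; exact ce2L _ hp
      · intro m hm
        simp only [labels, Finset.mem_insert, Finset.mem_union] at hm ⊢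
        rcases hm with h | h | h
        · tauto
        · rcases l₁ m h with h' | h' <;> tauto
        · tauto
      · intro hud; simp only [uniqueDischarge] at hud ⊢
        exact ⟨u₁ hud.1, hud.2.1, hud.2.2⟩
    · have hlne : ℓ ≠ ℓ' := by simpa using hq.2
      obtain ⟨d₁, w₁, c₁, o₁, l₁, u₁⟩ := ihq ℓ b F hwq hq.1 hb3
      refine ⟨.orI₂ ℓ' A B p d₁, ?_, ?_, ?_, ?_, ?_⟩
      · simp only [wf]
        refine ⟨hwp, w₁, hcp, ?_, ?_⟩
        · intro F' hF'
          rw [o₁, mem_split (Ne.symm hb1) (Ne.symm hlne)] at hF'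
          exact hall F' hF'
        · rw [o₁, mem_split (Ne.symm hb1) (Ne.symm hlne)]; exact hm0
      · simp only [concl]; exact c₁
      · simp only [openAss, o₁]
        rw [filter_split (fun z => z.1 ≠ ℓ') hb1 hlne q.openAss]
        exact ce2R _ (Multiset.mem_filter.2 ⟨hq.1, hlne⟩)
      · intro m hm
        simp only [labels, Finset.mem_insert, Finset.mem_union] at hm ⊢
        rcases hm with h | h | h
        · tauto
        · tauto
        · rcases l₁ m h with h' | h' <;> tauto
      · intro hud; simp only [uniqueDischarge] at hud ⊢
        refine ⟨hud.1, u₁ hud.2.1, ?_⟩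
        rw [o₁, count_split (Ne.symm hb1) (Ne.symm hlne)]
        exact hud.2.2
  | orE ℓA ℓB A B p q r ihp ihq ihr =>
    intro ℓ b F hwf hmem hb
    simp only [wf] at hwf
    obtain ⟨hwp, hwq, hwr, hcp, hqr, hallA, hmA, hallB, hmB⟩ := hwf
    simp only [labels, Finset.mem_insert, Finset.mem_union] at hb
    push_neg at hb
    obtain ⟨hb1, hb2, ⟨hb3, hb4⟩, hb5⟩ := hb
    simp only [openAss, Multiset.mem_add, Multiset.mem_filter] at hmem
    rcases hmem with (hp | hq) | hr
    · obtain ⟨d₁, w₁, c₁, o₁, l₁, u₁⟩ := ihp ℓ b F hwp hp hb3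
      refine ⟨.orE ℓA ℓB A B d₁ q r, ?_, ?_, ?_, ?_, ?_⟩
      · simp only [wf]; exact ⟨w₁, hwq, hwr, c₁.trans hcp, hqr, hallA, hmA, hallB, hmB⟩
      · simp only [concl]
      · simp only [openAss, o₁]; exact ce3L _ _ hp
      · intro m hm
        simp only [labels, Finset.mem_insert, Finset.mem_union] at hm ⊢
        rcases hm with h | h | (h | h) | h
        · tauto
        · tauto
        · rcases l₁ m h with h' | h' <;> tauto
        · tauto
        · tauto
      · intro hud; simp only [uniqueDischarge] at hud ⊢
        exact ⟨u₁ hud.1, hud.2.1, hud.2.2⟩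
    · have hlne : ℓ ≠ ℓA := by simpa using hq.2
      obtain ⟨d₁, w₁, c₁, o₁, l₁, u₁⟩ := ihq ℓ b F hwq hq.1 hb4
      refine ⟨.orE ℓA ℓB A B p d₁ r, ?_, ?_, ?_, ?_, ?_⟩
      · simp only [wf]
        refine ⟨hwp, w₁, hwr, hcp, c₁.trans hqr, ?_, ?_, hallB, hmB⟩
        · intro F' hF'
          rw [o₁, mem_split (Ne.symm hb1) (Ne.symm hlne)] at hF'
          exact hallA F' hF'
        · rw [o₁, mem_split (Ne.symm hb1) (Ne.symm hlne)]; exact hmA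
      · simp only [concl]; exact c₁
      · simp only [openAss, o₁]
        rw [filter_split (fun z => z.1 ≠ ℓA) hb1 hlne q.openAss]
        exact ce3M _ _ (Multiset.mem_filter.2 ⟨hq.1, hlne⟩)
      · intro m hm
        simp only [labels, Finset.mem_insert, Finset.mem_union] at hm ⊢
        rcases hm with h | h | (h | h) | h
        · tauto
        · tauto
        · tauto
        · rcases l₁ m h with h' | h' <;> tauto
        · tauto
      · intro hud; simp only [uniqueDischarge] at hud ⊢
        exact ⟨hud.1, u₁ hud.2.1, hud.2.2⟩
    · have hlne : ℓ ≠ ℓB := by simpa using hr.2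
      obtain ⟨d₁, w₁, c₁, o₁, l₁, u₁⟩ := ihr ℓ b F hwr hr.1 hb5
      refine ⟨.orE ℓA ℓB A B p q d₁, ?_, ?_, ?_, ?_, ?_⟩
      · simp only [wf]
        refine ⟨hwp, hwq, w₁, hcp, hqr.trans c₁.symm, hallA, hmA, ?_, ?_⟩
        · intro F' hF'
          rw [o₁, mem_split (Ne.symm hb2) (Ne.symm hlne)] at hF'
          exact hallB F' hF'
        · rw [o₁, mem_split (Ne.symm hb2) (Ne.symm hlne)]; exact hmB
      · simp only [concl]
      · simp only [openAss, o₁]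
        rw [filter_split (fun z => z.1 ≠ ℓB) hb2 hlne r.openAss]
        exact ce3R _ _ (Multiset.mem_filter.2 ⟨hr.1, hlne⟩)
      · intro m hm
        simp only [labels, Finset.mem_insert, Finset.mem_union] at hm ⊢
        rcases hm with h | h | (h | h) | h
        · tauto
        · tauto
        · tauto
        · tauto
        · rcases l₁ m h with h' | h' <;> tauto
      · intro hud; simp only [uniqueDischarge] at hud ⊢
        exact ⟨hud.1, hud.2.1, u₁ hud.2.2⟩
  | impI ℓ' A B p q ihp ihq =>
    intro ℓ b F hwf hmem hb
    simp only [wf] at hwf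
    obtain ⟨hwp, hwq, hcp, hall, hm0⟩ := hwf
    simp only [labels, Finset.mem_insert, Finset.mem_union] at hb
    push_neg at hb
    obtain ⟨hb1, hb2, hb3⟩ := hb
    simp only [openAss, Multiset.mem_add, Multiset.mem_filter] at hmem
    rcases hmem with hp | hq
    · obtain ⟨d₁, w₁, c₁, o₁, l₁, u₁⟩ := ihp ℓ b F hwp hp hb2
      refine ⟨.impI ℓ' A B d₁ q, ?_, ?_, ?_, ?_, ?_⟩
      · simp only [wf]; exact ⟨w₁, hwq, c₁.trans hcp, hall, hm0⟩
      · simp only [concl]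
      · simp only [openAss, o₁]; exact ce2L _ hp
      · intro m hm
        simp only [labels, Finset.mem_insert, Finset.mem_union] at hm ⊢
        rcases hm with h | h | h
        · tauto
        · rcases l₁ m h with h' | h' <;> tauto
        · tauto
      · intro hud; simp only [uniqueDischarge] at hud ⊢
        exact ⟨u₁ hud.1, hud.2.1, hud.2.2⟩
    · have hlne : ℓ ≠ ℓ' := by simpa using hq.2
      obtain ⟨d₁, w₁, c₁, o₁, l₁, u₁⟩ := ihq ℓ b F hwq hq.1 hb3
      refine ⟨.impI ℓ' A B p d₁, ?_, ?_, ?_, ?_, ?_⟩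
      · simp only [wf]
        refine ⟨hwp, w₁, hcp, ?_, ?_⟩
        · intro F' hF'
          rw [o₁, mem_split (Ne.symm hb1) (Ne.symm hlne)] at hF'
          exact hall F' hF'
        · rw [o₁, mem_split (Ne.symm hb1) (Ne.symm hlne)]; exact hm0
      · simp only [concl]; exact c₁
      · simp only [openAss, o₁]
        rw [filter_split (fun z => z.1 ≠ ℓ') hb1 hlne q.openAss]
        exact ce2R _ (Multiset.mem_filter.2 ⟨hq.1, hlne⟩)
      · intro m hm
        simp only [labels, Finset.mem_insert, Finset.mem_union] at hm ⊢
        rcases hm with h | h | h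
        · tauto
        · tauto
        · rcases l₁ m h with h' | h' <;> tauto
      · intro hud; simp only [uniqueDischarge] at hud ⊢
        refine ⟨hud.1, u₁ hud.2.1, ?_⟩
        rw [o₁, count_split (Ne.symm hb1) (Ne.symm hlne)]
        exact hud.2.2
  | tr ℓA ℓAB A B p q ihp ihq =>
    intro ℓ b F hwf hmem hb
    simp only [wf] at hwf
    obtain ⟨hwp, hwq, hpq, hallA, hmA, hallAB, hmAB⟩ := hwf
    simp only [labels, Finset.mem_insert, Finset.mem_union] at hb
    push_neg at hb
    obtain ⟨hb1, hb2, hb3, hb4⟩ := hb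
    simp only [openAss, Multiset.mem_add, Multiset.mem_filter] at hmem
    rcases hmem with hp | hq
    · have hlne : ℓ ≠ ℓA := by simpa using hp.2
      obtain ⟨d₁, w₁, c₁, o₁, l₁, u₁⟩ := ihp ℓ b F hwp hp.1 hb3
      refine ⟨.tr ℓA ℓAB A B d₁ q, ?_, ?_, ?_, ?_, ?_⟩
      · simp only [wf]
        refine ⟨w₁, hwq, c₁.trans hpq, ?_, ?_, hallAB, hmAB⟩
        · intro F' hF'
          rw [o₁, mem_split (Ne.symm hb1) (Ne.symm hlne)] at hF'
          exact hallA F' hF'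
        · rw [o₁, mem_split (Ne.symm hb1) (Ne.symm hlne)]; exact hmA
      · simp only [concl]; exact c₁
      · simp only [openAss, o₁]
        rw [filter_split (fun z => z.1 ≠ ℓA) hb1 hlne p.openAss]
        exact ce2L _ (Multiset.mem_filter.2 ⟨hp.1, hlne⟩)
      · intro m hm
        simp only [labels, Finset.mem_insert, Finset.mem_union] at hm ⊢
        rcases hm with h | h | h | h
        · tauto
        · tauto
        · rcases l₁ m h with h' | h' <;> tauto
        · tauto
      · intro hud; simp only [uniqueDischarge] at hud ⊢
        exact ⟨u₁ hud.1, hud.2.1, hud.2.2⟩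
    · have hlne : ℓ ≠ ℓAB := by simpa using hq.2
      obtain ⟨d₁, w₁, c₁, o₁, l₁, u₁⟩ := ihq ℓ b F hwq hq.1 hb4
      refine ⟨.tr ℓA ℓAB A B p d₁, ?_, ?_, ?_, ?_, ?_⟩
      · simp only [wf]
        refine ⟨hwp, w₁, hpq.trans c₁.symm, hallA, hmA, ?_, ?_⟩
        · intro F' hF'
          rw [o₁, mem_split (Ne.symm hb2) (Ne.symm hlne)] at hF'
          exact hallAB F' hF'
        · rw [o₁, mem_split (Ne.symm hb2) (Ne.symm hlne)]; exact hmAB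
      · simp only [concl]
      · simp only [openAss, o₁]
        rw [filter_split (fun z => z.1 ≠ ℓAB) hb2 hlne q.openAss]
        exact ce2R _ (Multiset.mem_filter.2 ⟨hq.1, hlne⟩)
      · intro m hm
        simp only [labels, Finset.mem_insert, Finset.mem_union] at hm ⊢
        rcases hm with h | h | h | h
        · tauto
        · tauto
        · tauto
        · rcases l₁ m h with h' | h' <;> tauto
      · intro hud; simp only [uniqueDischarge] at hud ⊢
        refine ⟨hud.1, u₁ hud.2.1, ?_⟩
        rw [o₁, count_split (Ne.symm hb2) (Ne.symm hlne)]
        exact hud.2.2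
  | impE ℓ' A B p q r ihp ihq ihr =>
    intro ℓ b F hwf hmem hb
    simp only [wf] at hwf
    obtain ⟨hwp, hwq, hwr, hcp, hcq, hall, hm0⟩ := hwf
    simp only [labels, Finset.mem_insert, Finset.mem_union] at hb
    push_neg at hb
    obtain ⟨hb1, ⟨hb2, hb3⟩, hb4⟩ := hb
    simp only [openAss, Multiset.mem_add, Multiset.mem_filter] at hmem
    rcases hmem with (hp | hq) | hr
    · obtain ⟨d₁, w₁, c₁, o₁, l₁, u₁⟩ := ihp ℓ b F hwp hp hb2
      refine ⟨.impE ℓ' A B d₁ q r, ?_, ?_, ?_, ?_, ?_⟩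
      · simp only [wf]; exact ⟨w₁, hwq, hwr, c₁.trans hcp, hcq, hall, hm0⟩
      · simp only [concl]
      · simp only [openAss, o₁]; exact ce3L _ _ hp
      · intro m hm
        simp only [labels, Finset.mem_insert, Finset.mem_union] at hm ⊢
        rcases hm with h | (h | h) | h
        · tauto
        · rcases l₁ m h with h' | h' <;> tauto
        · tauto
        · tauto
      · intro hud; simp only [uniqueDischarge] at hud ⊢
        exact ⟨u₁ hud.1, hud.2.1, hud.2.2⟩
    · obtain ⟨d₁, w₁, c₁, o₁, l₁, u₁⟩ := ihq ℓ b F hwq hq hb3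
      refine ⟨.impE ℓ' A B p d₁ r, ?_, ?_, ?_, ?_, ?_⟩
      · simp only [wf]; exact ⟨hwp, w₁, hwr, hcp, c₁.trans hcq, hall, hm0⟩
      · simp only [concl]
      · simp only [openAss, o₁]; exact ce3M _ _ hq
      · intro m hm
        simp only [labels, Finset.mem_insert, Finset.mem_union] at hm ⊢
        rcases hm with h | (h | h) | h
        · tauto
        · tauto
        · rcases l₁ m h with h' | h' <;> tauto
        · tauto
      · intro hud; simp only [uniqueDischarge] at hud ⊢
        exact ⟨hud.1, u₁ hud.2.1, hud.2.2⟩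
    · have hlne : ℓ ≠ ℓ' := by simpa using hr.2
      obtain ⟨d₁, w₁, c₁, o₁, l₁, u₁⟩ := ihr ℓ b F hwr hr.1 hb4
      refine ⟨.impE ℓ' A B p q d₁, ?_, ?_, ?_, ?_, ?_⟩
      · simp only [wf]
        refine ⟨hwp, hwq, w₁, hcp, hcq, ?_, ?_⟩
        · intro F' hF'
          rw [o₁, mem_split (Ne.symm hb1) (Ne.symm hlne)] at hF'
          exact hall F' hF'
        · rw [o₁, mem_split (Ne.symm hb1) (Ne.symm hlne)]; exact hm0
      · simp only [concl]; exact c₁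
      · simp only [openAss, o₁]
        rw [filter_split (fun z => z.1 ≠ ℓ') hb1 hlne r.openAss]
        exact ce3R _ _ (Multiset.mem_filter.2 ⟨hr.1, hlne⟩)
      · intro m hm
        simp only [labels, Finset.mem_insert, Finset.mem_union] at hm ⊢
        rcases hm with h | (h | h) | h
        · tauto
        · tauto
        · tauto
        · rcases l₁ m h with h' | h' <;> tauto
      · intro hud; simp only [uniqueDischarge] at hud ⊢
        exact ⟨hud.1, hud.2.1, u₁ hud.2.2⟩
  | negI ℓA ℓnA A p q ihp ihq =>
    intro ℓ b F hwf hmem hb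
    simp only [wf] at hwf
    obtain ⟨hwp, hwq, hpq, hallA, hmA, hallnA, hmnA⟩ := hwf
    simp only [labels, Finset.mem_insert, Finset.mem_union] at hb
    push_neg at hb
    obtain ⟨hb1, hb2, hb3, hb4⟩ := hb
    simp only [openAss, Multiset.mem_add, Multiset.mem_filter] at hmem
    rcases hmem with hp | hq
    · have hlne : ℓ ≠ ℓA := by simpa using hp.2
      obtain ⟨d₁, w₁, c₁, o₁, l₁, u₁⟩ := ihp ℓ b F hwp hp.1 hb3
      refine ⟨.negI ℓA ℓnA A d₁ q, ?_, ?_, ?_, ?_, ?_⟩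
      · simp only [wf]
        refine ⟨w₁, hwq, c₁.trans hpq, ?_, ?_, hallnA, hmnA⟩
        · intro F' hF'
          rw [o₁, mem_split (Ne.symm hb1) (Ne.symm hlne)] at hF'
          exact hallA F' hF'
        · rw [o₁, mem_split (Ne.symm hb1) (Ne.symm hlne)]; exact hmA
      · simp only [concl]; exact c₁
      · simp only [openAss, o₁]
        rw [filter_split (fun z => z.1 ≠ ℓA) hb1 hlne p.openAss]
        exact ce2L _ (Multiset.mem_filter.2 ⟨hp.1, hlne⟩)
      · intro m hm
        simp only [labels, Finset.mem_insert, Finset.mem_union] at hm ⊢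
        rcases hm with h | h | h | h
        · tauto
        · tauto
        · rcases l₁ m h with h' | h' <;> tauto
        · tauto
      · intro hud; simp only [uniqueDischarge] at hud ⊢
        exact ⟨u₁ hud.1, hud.2.1, hud.2.2⟩
    · have hlne : ℓ ≠ ℓnA := by simpa using hq.2
      obtain ⟨d₁, w₁, c₁, o₁, l₁, u₁⟩ := ihq ℓ b F hwq hq.1 hb4
      refine ⟨.negI ℓA ℓnA A p d₁, ?_, ?_, ?_, ?_, ?_⟩
      · simp only [wf]
        refine ⟨hwp, w₁, hpq.trans c₁.symm, hallA, hmA, ?_, ?_⟩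
        · intro F' hF'
          rw [o₁, mem_split (Ne.symm hb2) (Ne.symm hlne)] at hF'
          exact hallnA F' hF'
        · rw [o₁, mem_split (Ne.symm hb2) (Ne.symm hlne)]; exact hmnA
      · simp only [concl]
      · simp only [openAss, o₁]
        rw [filter_split (fun z => z.1 ≠ ℓnA) hb2 hlne q.openAss]
        exact ce2R _ (Multiset.mem_filter.2 ⟨hq.1, hlne⟩)
      · intro m hm
        simp only [labels, Finset.mem_insert, Finset.mem_union] at hm ⊢
        rcases hm with h | h | h | h
        · tauto
        · tauto
        · tauto
        · rcases l₁ m h with h' | h' <;> tauto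
      · intro hud; simp only [uniqueDischarge] at hud ⊢
        refine ⟨hud.1, u₁ hud.2.1, ?_⟩
        rw [o₁, count_split (Ne.symm hb2) (Ne.symm hlne)]
        exact hud.2.2
  | negE A C p q ihp ihq =>
    intro ℓ b F hwf hmem hb
    simp only [wf] at hwf
    obtain ⟨hwp, hwq, hcp, hcq⟩ := hwf
    simp only [labels, Finset.mem_union] at hb
    push_neg at hb
    obtain ⟨hb1, hb2⟩ := hb
    simp only [openAss, Multiset.mem_add] at hmem
    rcases hmem with hp | hq
    · obtain ⟨d₁, w₁, c₁, o₁, l₁, u₁⟩ := ihp ℓ b F hwp hp hb1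
      refine ⟨.negE A C d₁ q, ?_, ?_, ?_, ?_, ?_⟩
      · simp only [wf]; exact ⟨w₁, hwq, c₁.trans hcp, hcq⟩
      · simp only [concl]
      · simp only [openAss, o₁]; exact ce2L _ hp
      · intro m hm
        simp only [labels, Finset.mem_union] at hm ⊢
        rcases hm with h | h
        · rcases l₁ m h with h' | h' <;> tauto
        · tauto
      · intro hud; simp only [uniqueDischarge] at hud ⊢
        exact ⟨u₁ hud.1, hud.2⟩
    · obtain ⟨d₁, w₁, c₁, o₁, l₁, u₁⟩ := ihq ℓ b F hwq hq hb2
      refine ⟨.negE A C p d₁, ?_, ?_, ?_, ?_, ?_⟩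
      · simp only [wf]; exact ⟨hwp, w₁, hcp, c₁.trans hcq⟩
      · simp only [concl]
      · simp only [openAss, o₁]; exact ce2R _ hq
      · intro m hm
        simp only [labels, Finset.mem_union] at hm ⊢
        rcases hm with h | h
        · tauto
        · rcases l₁ m h with h' | h' <;> tauto
      · intro hud; simp only [uniqueDischarge] at hud ⊢
        exact ⟨hud.1, u₁ hud.2⟩

end PT

namespace PT

lemma markers_succ (N k : ℕ) (M : Formula) :
    (N, M) ::ₘ (Multiset.range k).map (fun i => (N + 1 + i, M)) =
      (Multiset.range (k + 1)).map (fun i => (N + i, M)) := by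
  induction k with
  | zero => simp
  | succ k ih =>
    rw [Multiset.range_succ, Multiset.map_cons, Multiset.cons_swap, ih,
      Multiset.range_succ (k + 1), Multiset.map_cons]
    have h : N + 1 + k = N + (k + 1) := by omega
    rw [h]

lemma multiSplit : ∀ (k : ℕ) (r : PT) (ℓ : ℕ) (M : Formula) (N : ℕ),
    r.wf → r.uniqueDischarge →
    (∀ m ∈ r.labels, m < N) → r.openAss.count (ℓ, M) = k →
    ∃ r₂ : PT, r₂.wf ∧ r₂.uniqueDischarge ∧ r₂.concl = r.concl ∧
      r₂.openAss = r.openAss.filter (fun z => z ≠ (ℓ, M)) +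
        (Multiset.range k).map (fun i => (N + i, M)) ∧
      (∀ m ∈ r₂.labels, m < N + k) := by
  intro k
  induction k with
  | zero =>
    intro r ℓ M N hwf hud hlab hcnt
    refine ⟨r, hwf, hud, rfl, ?_, fun m hm => by have := hlab m hm; omega⟩
    rw [Multiset.range_zero, Multiset.map_zero, add_zero,
      Multiset.filter_eq_self.2]
    intro z hz hzz
    have : (ℓ, M) ∈ r.openAss := hzz ▸ hz
    rw [← Multiset.count_pos, hcnt] at this
    omega
  | succ k ih =>
    intro r ℓ M N hwf hud hlab hcnt
    have hmem : (ℓ, M) ∈ r.openAss := by rw [← Multiset.count_pos, hcnt]; omega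
    have hbnl : N ∉ r.labels := fun h => absurd (hlab N h) (lt_irrefl N)
    obtain ⟨r₁, w₁, c₁, o₁, l₁, u₁⟩ := split r ℓ N M hwf hmem hbnl
    have hlN : ℓ < N := hlab ℓ (fst_mem_labels r hmem)
    have hlab₁ : ∀ m ∈ r₁.labels, m < N + 1 := by
      intro m hm
      rcases l₁ m hm with rfl | h
      · omega
      · have := hlab m h; omega
    have hcnt₁ : r₁.openAss.count (ℓ, M) = k := by
      rw [o₁, Multiset.count_cons_of_ne (pair_ne (by omega)),
        Multiset.count_erase_self, hcnt]
      omega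
    obtain ⟨r₂, w₂, u₂, c₂, o₂, l₂⟩ := ih r₁ ℓ M (N + 1) w₁ (u₁ hud) hlab₁ hcnt₁
    refine ⟨r₂, w₂, u₂, c₂.trans c₁, ?_, fun m hm => by have := l₂ m hm; omega⟩
    rw [o₂, o₁,
      Multiset.filter_cons_of_pos (p := fun z => z ≠ (ℓ, M)) _ (pair_ne (show N ≠ ℓ by omega)),
      filter_erase_neg (fun z => z ≠ (ℓ, M)) (by simp) _, ← markers_succ N k M,
      Multiset.add_cons, Multiset.cons_add]

lemma wrapAll (C₀ M : Formula) (K : Multiset (ℕ × Formula)) (Lw : Finset ℕ)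
    (W : ℕ → PT → PT)
    (hW : ∀ ℓ' x, x.wf → x.concl = C₀ →
        (∀ F, (ℓ', F) ∈ x.openAss → F = M) → (ℓ', M) ∈ x.openAss →
        (W ℓ' x).wf ∧ (W ℓ' x).concl = x.concl ∧
        (W ℓ' x).openAss = K + x.openAss.filter (fun z => z.1 ≠ ℓ') ∧
        (x.uniqueDischarge → x.openAss.count (ℓ', M) = 1 →
          (W ℓ' x).uniqueDischarge) ∧
        (∀ m ∈ (W ℓ' x).labels, m = ℓ' ∨ m ∈ Lw ∨ m ∈ x.labels))
    (N : ℕ) (hK : ∀ z ∈ K, z.1 < N) (hLw : ∀ m ∈ Lw, m < N) :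
    ∀ (k : ℕ) (S : Multiset (ℕ × Formula)) (r : PT), r.wf → r.uniqueDischarge →
      r.concl = C₀ → (∀ z ∈ S, z.1 < N) →
      r.openAss = S + (Multiset.range k).map (fun i => (N + i, M)) →
      ∃ w : PT, w.wf ∧ w.uniqueDischarge ∧ w.concl = C₀ ∧
        w.openAss = k • K + S ∧
        ∀ m ∈ w.labels, m < N + k ∨ m ∈ r.labels := by
  intro k
  induction k with
  | zero =>
    intro S r hwf hud hc hS hoa
    refine ⟨r, hwf, hud, hc, ?_, fun m hm => Or.inr hm⟩
    simpa using hoa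
  | succ k ih =>
    intro S r hwf hud hc hS hoa
    have hfM : ∀ F, (N + k, F) ∈ r.openAss → F = M := by
      intro F hF
      rw [hoa] at hF
      rcases Multiset.mem_add.1 hF with h | h
      · have h' : N + k < N := hS _ h
        omega
      · obtain ⟨i, hi, he⟩ := Multiset.mem_map.1 h
        exact (congrArg Prod.snd he : M = F).symm
    have hmM : (N + k, M) ∈ r.openAss := by
      rw [hoa]
      refine Multiset.mem_add.2 (Or.inr (Multiset.mem_map.2 ⟨k, ?_, rfl⟩))
      simp [Multiset.mem_range]
    obtain ⟨w₁wf, w₁c, w₁oa, w₁ud, w₁lab⟩ := hW (N + k) r hwf hc hfM hmM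
    have hinj : Function.Injective (fun i => ((N + i, M) : ℕ × Formula)) := by
      intro i j hij
      have := congrArg Prod.fst hij
      simpa using this
    have hcnt : r.openAss.count (N + k, M) = 1 := by
      rw [hoa, Multiset.count_add]
      have h1 : S.count (N + k, M) = 0 := by
        rw [Multiset.count_eq_zero]
        intro h
        have h' : N + k < N := hS _ h
        omega
      have h2 : ((Multiset.range (k + 1)).map (fun i => (N + i, M))).count (N + k, M) = 1 := by
        refine Multiset.count_eq_one_of_mem ((Multiset.nodup_range (k + 1)).map hinj) ?_
        exact Multiset.mem_map.2 ⟨k, by simp [Multiset.mem_range], rfl⟩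
      omega
    have hoa₁ : (W (N + k) r).openAss = (K + S) + (Multiset.range k).map (fun i => (N + i, M)) := by
      rw [w₁oa, hoa, Multiset.filter_add]
      have h1 : S.filter (fun z => z.1 ≠ N + k) = S := by
        rw [Multiset.filter_eq_self]
        intro z hz
        have := hS _ hz; omega
      have h2 : ((Multiset.range (k + 1)).map (fun i => (N + i, M))).filter
          (fun z => z.1 ≠ N + k) = (Multiset.range k).map (fun i => (N + i, M)) := by
        rw [Multiset.range_succ, Multiset.map_cons,
          Multiset.filter_cons_of_neg _ (by simp), Multiset.filter_eq_self.2]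
        intro z hz
        obtain ⟨i, hi, he⟩ := Multiset.mem_map.1 hz
        rw [Multiset.mem_range] at hi
        subst he
        show N + i ≠ N + k
        omega
      rw [h1, h2, add_assoc]
    obtain ⟨w, wwf, wud, wc, woa, wlab⟩ := ih (K + S) (W (N + k) r)
      w₁wf (w₁ud hud hcnt) (w₁c.trans hc)
      (by intro z hz; rcases Multiset.mem_add.1 hz with h | h
          · exact hK _ h
          · exact hS _ h)
      hoa₁
    refine ⟨w, wwf, wud, wc, ?_, ?_⟩
    · rw [woa, succ_nsmul, add_assoc]
    · intro m hm
      rcases wlab m hm with h | h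
      · exact Or.inl (by omega)
      · rcases w₁lab m h with rfl | h | h
        · exact Or.inl (by omega)
        · exact Or.inl (by have := hLw m h; omega)
        · exact Or.inr h

end PT

namespace PT

lemma introStep (C₀ M : Formula) (K : Multiset (ℕ × Formula)) (Lw : Finset ℕ)
    (W : ℕ → PT → PT)
    (hW : ∀ ℓ' x, x.wf → x.concl = C₀ →
        (∀ F, (ℓ', F) ∈ x.openAss → F = M) → (ℓ', M) ∈ x.openAss →
        (W ℓ' x).wf ∧ (W ℓ' x).concl = x.concl ∧
        (W ℓ' x).openAss = K + x.openAss.filter (fun z => z.1 ≠ ℓ') ∧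
        (x.uniqueDischarge → x.openAss.count (ℓ', M) = 1 →
          (W ℓ' x).uniqueDischarge) ∧
        (∀ m ∈ (W ℓ' x).labels, m = ℓ' ∨ m ∈ Lw ∨ m ∈ x.labels))
    (N : ℕ) (hK : ∀ z ∈ K, z.1 < N) (hLw : ∀ m ∈ Lw, m < N)
    (r' : PT) (ℓ : ℕ) (hwf : r'.wf) (hud : r'.uniqueDischarge) (hc : r'.concl = C₀)
    (hlab : ∀ m ∈ r'.labels, m < N)
    (hall : ∀ F, (ℓ, F) ∈ r'.openAss → F = M) (hm : (ℓ, M) ∈ r'.openAss) :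
    ∃ w : PT, w.wf ∧ w.uniqueDischarge ∧ w.concl = C₀ ∧
      (∀ z : ℕ × Formula, z ∈ w.openAss ↔ z ∈ K ∨ (z ∈ r'.openAss ∧ z.1 ≠ ℓ)) ∧
      ∃ N', ∀ m ∈ w.labels, m < N' := by
  obtain ⟨k, hk⟩ : ∃ k, r'.openAss.count (ℓ, M) = k + 1 :=
    ⟨r'.openAss.count (ℓ, M) - 1, by have := Multiset.count_pos.2 hm; omega⟩
  obtain ⟨r₂, w₂, u₂, c₂, o₂, l₂⟩ := multiSplit (k + 1) r' ℓ M N hwf hud hlab hk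
  obtain ⟨w, wwf, wud, wc, woa, wlab⟩ := wrapAll C₀ M K Lw W hW N hK hLw (k + 1)
    (r'.openAss.filter (fun z => z ≠ (ℓ, M))) r₂ w₂ u₂ (c₂.trans hc)
    (by intro z hz
        have hz' := Multiset.mem_filter.1 hz
        have := hlab z.1 (fst_mem_labels r' hz'.1)
        omega) o₂
  refine ⟨w, wwf, wud, wc, ?_, N + (k + 1), ?_⟩
  · intro z
    rw [woa]
    constructor
    · intro h
      rcases Multiset.mem_add.1 h with h | h
      · exact Or.inl (Multiset.mem_nsmul.1 h).2
      · obtain ⟨h1, h2⟩ := Multiset.mem_filter.1 h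
        refine Or.inr ⟨h1, fun hz1 => h2 ?_⟩
        obtain ⟨z1, z2⟩ := z
        have hz1' : z1 = ℓ := hz1
        subst hz1'
        have hz2 : z2 = M := hall z2 h1
        rw [hz2]
    · intro h
      rcases h with h | ⟨h1, h2⟩
      · exact Multiset.mem_add.2 (Or.inl (Multiset.mem_nsmul.2 ⟨by omega, h⟩))
      · refine Multiset.mem_add.2 (Or.inr (Multiset.mem_filter.2 ⟨h1, fun hzz => h2 ?_⟩))
        rw [hzz]
  · intro m hm'
    rcases wlab m hm' with h | h
    · omega
    · have := l₂ m h; omega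

set_option maxHeartbeats 3000000 in
lemma main : ∀ d : PT, d.wf → ∃ (d' : PT) (N' : ℕ), d'.wf ∧ d'.concl = d.concl ∧
    (∀ z : ℕ × Formula, z ∈ d'.openAss ↔ z ∈ d.openAss) ∧ d'.uniqueDischarge ∧
    (∀ m ∈ d'.labels, m < N') := by
  intro d
  induction d with
  | ass ℓ A =>
    intro _
    refine ⟨.ass ℓ A, ℓ + 1, trivial, rfl, fun z => Iff.rfl, trivial, ?_⟩
    intro m hm
    simp only [labels, Finset.mem_singleton] at hm
    omega
  | andI ℓ A B p q r ihp ihq ihr =>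
    intro hwf
    simp only [wf] at hwf
    obtain ⟨hwp, hwq, hwr, hcp, hcq, hall, hm0⟩ := hwf
    obtain ⟨p', Np, wp, cp, sp, up, lp⟩ := ihp hwp
    obtain ⟨q', Nq, wq, cq, sq, uq, lq⟩ := ihq hwq
    obtain ⟨r', Nr, wr, cr, sr, ur, lr⟩ := ihr hwr
    have hall' : ∀ F, (ℓ, F) ∈ r'.openAss → F = Formula.conj A B :=
      fun F hF => hall F ((sr _).1 hF)
    have hm' : (ℓ, Formula.conj A B) ∈ r'.openAss := (sr _).2 hm0
    have hWspec : ∀ ℓ' x, x.wf → x.concl = r'.concl →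
        (∀ F, (ℓ', F) ∈ x.openAss → F = Formula.conj A B) →
        (ℓ', Formula.conj A B) ∈ x.openAss →
        (PT.andI ℓ' A B p' q' x).wf ∧ (PT.andI ℓ' A B p' q' x).concl = x.concl ∧
        (PT.andI ℓ' A B p' q' x).openAss =
          (p'.openAss + q'.openAss) + x.openAss.filter (fun z => z.1 ≠ ℓ') ∧
        (x.uniqueDischarge → x.openAss.count (ℓ', Formula.conj A B) = 1 →
          (PT.andI ℓ' A B p' q' x).uniqueDischarge) ∧
        (∀ m ∈ (PT.andI ℓ' A B p' q' x).labels,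
          m = ℓ' ∨ m ∈ (p'.labels ∪ q'.labels) ∨ m ∈ x.labels) := by
      intro ℓ' x hxwf hxc hxall hxm
      refine ⟨?_, ?_, ?_, ?_, ?_⟩
      · simp only [wf]
        exact ⟨wp, wq, hxwf, cp.trans hcp, cq.trans hcq, hxall, hxm⟩
      · simp only [concl]
      · simp only [openAss]
      · intro h1 h2
        simp only [uniqueDischarge]
        exact ⟨up, uq, h1, h2⟩
      · intro m hm
        simp only [labels, Finset.mem_insert, Finset.mem_union] at hm ⊢
        tauto
    obtain ⟨w, wwf, wud, wc, wset, N', wlab⟩ := introStep r'.concl (Formula.conj A B)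
      (p'.openAss + q'.openAss) (p'.labels ∪ q'.labels) _ hWspec (Np + Nq + Nr)
      (by intro z hz
          rcases Multiset.mem_add.1 hz with h | h
          · have := lp z.1 (fst_mem_labels p' h); omega
          · have := lq z.1 (fst_mem_labels q' h); omega)
      (by intro m hm
          rcases Finset.mem_union.1 hm with h | h
          · have := lp m h; omega
          · have := lq m h; omega)
      r' ℓ wr ur rfl (fun m hm => by have := lr m hm; omega) hall' hm'
    refine ⟨w, N', wwf, ?_, ?_, wud, wlab⟩
    · simp only [concl]; exact wc.trans cr
    · intro z
      rw [wset z]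
      simp only [openAss, Multiset.mem_add, Multiset.mem_filter]
      have h1 := sp z; have h2 := sq z; have h3 := sr z
      tauto
  | andE ℓA ℓB A B p q ihp ihq =>
    intro hwf
    simp only [wf] at hwf
    obtain ⟨hwp, hwq, hcp, hA, hB, hor⟩ := hwf
    obtain ⟨p', Np, wp, cp, sp, up, lp⟩ := ihp hwp
    obtain ⟨q', Nq, wq, cq, sq, uq, lq⟩ := ihq hwq
    refine ⟨.andE ℓA ℓB A B p' q', Np + Nq + ℓA + ℓB + 1, ?_, ?_, ?_, ?_, ?_⟩
    · simp only [wf]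
      refine ⟨wp, wq, cp.trans hcp, ?_, ?_, ?_⟩
      · intro F hF; exact hA F ((sq _).1 hF)
      · intro F hF; exact hB F ((sq _).1 hF)
      · rcases hor with h | h
        · exact Or.inl ((sq _).2 h)
        · exact Or.inr ((sq _).2 h)
    · simp only [concl]; exact cq
    · intro z
      simp only [openAss, Multiset.mem_add, Multiset.mem_filter]
      have h1 := sp z; have h2 := sq z
      tauto
    · simp only [uniqueDischarge]; exact ⟨up, uq⟩
    · intro m hm
      simp only [labels, Finset.mem_insert, Finset.mem_union] at hm
      rcases hm with rfl | rfl | h | h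
      · omega
      · omega
      · have := lp m h; omega
      · have := lq m h; omega
  | orI₁ ℓ A B p q ihp ihq =>
    intro hwf
    simp only [wf] at hwf
    obtain ⟨hwp, hwq, hcp, hall, hm0⟩ := hwf
    obtain ⟨p', Np, wp, cp, sp, up, lp⟩ := ihp hwp
    obtain ⟨q', Nq, wq, cq, sq, uq, lq⟩ := ihq hwq
    have hall' : ∀ F, (ℓ, F) ∈ q'.openAss → F = Formula.disj A B :=
      fun F hF => hall F ((sq _).1 hF)
    have hm' : (ℓ, Formula.disj A B) ∈ q'.openAss := (sq _).2 hm0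
    have hWspec : ∀ ℓ' x, x.wf → x.concl = q'.concl →
        (∀ F, (ℓ', F) ∈ x.openAss → F = Formula.disj A B) →
        (ℓ', Formula.disj A B) ∈ x.openAss →
        (PT.orI₁ ℓ' A B p' x).wf ∧ (PT.orI₁ ℓ' A B p' x).concl = x.concl ∧
        (PT.orI₁ ℓ' A B p' x).openAss =
          p'.openAss + x.openAss.filter (fun z => z.1 ≠ ℓ') ∧
        (x.uniqueDischarge → x.openAss.count (ℓ', Formula.disj A B) = 1 →
          (PT.orI₁ ℓ' A B p' x).uniqueDischarge) ∧
        (∀ m ∈ (PT.orI₁ ℓ' A B p' x).labels,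
          m = ℓ' ∨ m ∈ p'.labels ∨ m ∈ x.labels) := by
      intro ℓ' x hxwf hxc hxall hxm
      refine ⟨?_, ?_, ?_, ?_, ?_⟩
      · simp only [wf]
        exact ⟨wp, hxwf, cp.trans hcp, hxall, hxm⟩
      · simp only [concl]
      · simp only [openAss]
      · intro h1 h2
        simp only [uniqueDischarge]
        exact ⟨up, h1, h2⟩
      · intro m hm
        simp only [labels, Finset.mem_insert, Finset.mem_union] at hm ⊢
        tauto
    obtain ⟨w, wwf, wud, wc, wset, N', wlab⟩ := introStep q'.concl (Formula.disj A B)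
      p'.openAss p'.labels _ hWspec (Np + Nq)
      (by intro z hz; have := lp z.1 (fst_mem_labels p' hz); omega)
      (by intro m hm; have := lp m hm; omega)
      q' ℓ wq uq rfl (fun m hm => by have := lq m hm; omega) hall' hm'
    refine ⟨w, N', wwf, ?_, ?_, wud, wlab⟩
    · simp only [concl]; exact wc.trans cq
    · intro z
      rw [wset z]
      simp only [openAss, Multiset.mem_add, Multiset.mem_filter]
      have h1 := sp z; have h2 := sq z
      tauto
  | orI₂ ℓ A B p q ihp ihq =>
    intro hwf
    simp only [wf] at hwf
    obtain ⟨hwp, hwq, hcp, hall, hm0⟩ := hwf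
    obtain ⟨p', Np, wp, cp, sp, up, lp⟩ := ihp hwp
    obtain ⟨q', Nq, wq, cq, sq, uq, lq⟩ := ihq hwq
    have hall' : ∀ F, (ℓ, F) ∈ q'.openAss → F = Formula.disj A B :=
      fun F hF => hall F ((sq _).1 hF)
    have hm' : (ℓ, Formula.disj A B) ∈ q'.openAss := (sq _).2 hm0
    have hWspec : ∀ ℓ' x, x.wf → x.concl = q'.concl →
        (∀ F, (ℓ', F) ∈ x.openAss → F = Formula.disj A B) →
        (ℓ', Formula.disj A B) ∈ x.openAss →
        (PT.orI₂ ℓ' A B p' x).wf ∧ (PT.orI₂ ℓ' A B p' x).concl = x.concl ∧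
        (PT.orI₂ ℓ' A B p' x).openAss =
          p'.openAss + x.openAss.filter (fun z => z.1 ≠ ℓ') ∧
        (x.uniqueDischarge → x.openAss.count (ℓ', Formula.disj A B) = 1 →
          (PT.orI₂ ℓ' A B p' x).uniqueDischarge) ∧
        (∀ m ∈ (PT.orI₂ ℓ' A B p' x).labels,
          m = ℓ' ∨ m ∈ p'.labels ∨ m ∈ x.labels) := by
      intro ℓ' x hxwf hxc hxall hxm
      refine ⟨?_, ?_, ?_, ?_, ?_⟩
      · simp only [wf]
        exact ⟨wp, hxwf, cp.trans hcp, hxall, hxm⟩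
      · simp only [concl]
      · simp only [openAss]
      · intro h1 h2
        simp only [uniqueDischarge]
        exact ⟨up, h1, h2⟩
      · intro m hm
        simp only [labels, Finset.mem_insert, Finset.mem_union] at hm ⊢
        tauto
    obtain ⟨w, wwf, wud, wc, wset, N', wlab⟩ := introStep q'.concl (Formula.disj A B)
      p'.openAss p'.labels _ hWspec (Np + Nq)
      (by intro z hz; have := lp z.1 (fst_mem_labels p' hz); omega)
      (by intro m hm; have := lp m hm; omega)
      q' ℓ wq uq rfl (fun m hm => by have := lq m hm; omega) hall' hm'
    refine ⟨w, N', wwf, ?_, ?_, wud, wlab⟩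
    · simp only [concl]; exact wc.trans cq
    · intro z
      rw [wset z]
      simp only [openAss, Multiset.mem_add, Multiset.mem_filter]
      have h1 := sp z; have h2 := sq z
      tauto
  | orE ℓA ℓB A B p q r ihp ihq ihr =>
    intro hwf
    simp only [wf] at hwf
    obtain ⟨hwp, hwq, hwr, hcp, hqr, hallA, hmA, hallB, hmB⟩ := hwf
    obtain ⟨p', Np, wp, cp, sp, up, lp⟩ := ihp hwp
    obtain ⟨q', Nq, wq, cq, sq, uq, lq⟩ := ihq hwq
    obtain ⟨r', Nr, wr, cr, sr, ur, lr⟩ := ihr hwr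
    refine ⟨.orE ℓA ℓB A B p' q' r', Np + Nq + Nr + ℓA + ℓB + 1, ?_, ?_, ?_, ?_, ?_⟩
    · simp only [wf]
      refine ⟨wp, wq, wr, cp.trans hcp, (cq.trans hqr).trans cr.symm, ?_, ?_, ?_, ?_⟩
      · intro F hF; exact hallA F ((sq _).1 hF)
      · exact (sq _).2 hmA
      · intro F hF; exact hallB F ((sr _).1 hF)
      · exact (sr _).2 hmB
    · simp only [concl]; exact cq
    · intro z
      simp only [openAss, Multiset.mem_add, Multiset.mem_filter]
      have h1 := sp z; have h2 := sq z; have h3 := sr z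
      tauto
    · simp only [uniqueDischarge]; exact ⟨up, uq, ur⟩
    · intro m hm
      simp only [labels, Finset.mem_insert, Finset.mem_union] at hm
      rcases hm with rfl | rfl | (h | h) | h
      · omega
      · omega
      · have := lp m h; omega
      · have := lq m h; omega
      · have := lr m h; omega
  | impI ℓ A B p q ihp ihq =>
    intro hwf
    simp only [wf] at hwf
    obtain ⟨hwp, hwq, hcp, hall, hm0⟩ := hwf
    obtain ⟨p', Np, wp, cp, sp, up, lp⟩ := ihp hwp
    obtain ⟨q', Nq, wq, cq, sq, uq, lq⟩ := ihq hwq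
    have hall' : ∀ F, (ℓ, F) ∈ q'.openAss → F = Formula.imp A B :=
      fun F hF => hall F ((sq _).1 hF)
    have hm' : (ℓ, Formula.imp A B) ∈ q'.openAss := (sq _).2 hm0
    have hWspec : ∀ ℓ' x, x.wf → x.concl = q'.concl →
        (∀ F, (ℓ', F) ∈ x.openAss → F = Formula.imp A B) →
        (ℓ', Formula.imp A B) ∈ x.openAss →
        (PT.impI ℓ' A B p' x).wf ∧ (PT.impI ℓ' A B p' x).concl = x.concl ∧
        (PT.impI ℓ' A B p' x).openAss =
          p'.openAss + x.openAss.filter (fun z => z.1 ≠ ℓ') ∧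
        (x.uniqueDischarge → x.openAss.count (ℓ', Formula.imp A B) = 1 →
          (PT.impI ℓ' A B p' x).uniqueDischarge) ∧
        (∀ m ∈ (PT.impI ℓ' A B p' x).labels,
          m = ℓ' ∨ m ∈ p'.labels ∨ m ∈ x.labels) := by
      intro ℓ' x hxwf hxc hxall hxm
      refine ⟨?_, ?_, ?_, ?_, ?_⟩
      · simp only [wf]
        exact ⟨wp, hxwf, cp.trans hcp, hxall, hxm⟩
      · simp only [concl]
      · simp only [openAss]
      · intro h1 h2
        simp only [uniqueDischarge]
        exact ⟨up, h1, h2⟩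
      · intro m hm
        simp only [labels, Finset.mem_insert, Finset.mem_union] at hm ⊢
        tauto
    obtain ⟨w, wwf, wud, wc, wset, N', wlab⟩ := introStep q'.concl (Formula.imp A B)
      p'.openAss p'.labels _ hWspec (Np + Nq)
      (by intro z hz; have := lp z.1 (fst_mem_labels p' hz); omega)
      (by intro m hm; have := lp m hm; omega)
      q' ℓ wq uq rfl (fun m hm => by have := lq m hm; omega) hall' hm'
    refine ⟨w, N', wwf, ?_, ?_, wud, wlab⟩
    · simp only [concl]; exact wc.trans cq
    · intro z
      rw [wset z]
      simp only [openAss, Multiset.mem_add, Multiset.mem_filter]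
      have h1 := sp z; have h2 := sq z
      tauto
  | tr ℓA ℓAB A B p q ihp ihq =>
    intro hwf
    simp only [wf] at hwf
    obtain ⟨hwp, hwq, hpq, hallA, hmA, hallAB, hmAB⟩ := hwf
    obtain ⟨p', Np, wp, cp, sp, up, lp⟩ := ihp hwp
    obtain ⟨q', Nq, wq, cq, sq, uq, lq⟩ := ihq hwq
    have hallA' : ∀ F, (ℓA, F) ∈ p'.openAss → F = A :=
      fun F hF => hallA F ((sp _).1 hF)
    have hmA' : (ℓA, A) ∈ p'.openAss := (sp _).2 hmA
    have hall' : ∀ F, (ℓAB, F) ∈ q'.openAss → F = Formula.imp A B :=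
      fun F hF => hallAB F ((sq _).1 hF)
    have hm' : (ℓAB, Formula.imp A B) ∈ q'.openAss := (sq _).2 hmAB
    have hWspec : ∀ ℓ' x, x.wf → x.concl = p'.concl →
        (∀ F, (ℓ', F) ∈ x.openAss → F = Formula.imp A B) →
        (ℓ', Formula.imp A B) ∈ x.openAss →
        (PT.tr ℓA ℓ' A B p' x).wf ∧ (PT.tr ℓA ℓ' A B p' x).concl = x.concl ∧
        (PT.tr ℓA ℓ' A B p' x).openAss =
          p'.openAss.filter (fun z => z.1 ≠ ℓA) +
            x.openAss.filter (fun z => z.1 ≠ ℓ') ∧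
        (x.uniqueDischarge → x.openAss.count (ℓ', Formula.imp A B) = 1 →
          (PT.tr ℓA ℓ' A B p' x).uniqueDischarge) ∧
        (∀ m ∈ (PT.tr ℓA ℓ' A B p' x).labels,
          m = ℓ' ∨ m ∈ insert ℓA p'.labels ∨ m ∈ x.labels) := by
      intro ℓ' x hxwf hxc hxall hxm
      refine ⟨?_, ?_, ?_, ?_, ?_⟩
      · simp only [wf]
        exact ⟨wp, hxwf, hxc.symm, hallA', hmA', hxall, hxm⟩
      · simp only [concl]; exact hxc.symm
      · simp only [openAss]
      · intro h1 h2
        simp only [uniqueDischarge]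
        exact ⟨up, h1, h2⟩
      · intro m hm
        simp only [labels, Finset.mem_insert, Finset.mem_union] at hm ⊢
        tauto
    obtain ⟨w, wwf, wud, wc, wset, N', wlab⟩ := introStep p'.concl (Formula.imp A B)
      (p'.openAss.filter (fun z => z.1 ≠ ℓA)) (insert ℓA p'.labels) _ hWspec
      (Np + Nq + ℓA + 1)
      (by intro z hz
          have hz' := Multiset.mem_filter.1 hz
          have := lp z.1 (fst_mem_labels p' hz'.1); omega)
      (by intro m hm
          rcases Finset.mem_insert.1 hm with rfl | h
          · omega
          · have := lp m h; omega)
      q' ℓAB wq uq (cq.trans (hpq.symm.trans cp.symm))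
      (fun m hm => by have := lq m hm; omega) hall' hm'
    refine ⟨w, N', wwf, ?_, ?_, wud, wlab⟩
    · simp only [concl]; exact wc.trans cp
    · intro z
      rw [wset z]
      simp only [openAss, Multiset.mem_add, Multiset.mem_filter]
      have h1 := sp z; have h2 := sq z
      tauto
  | impE ℓ A B p q r ihp ihq ihr =>
    intro hwf
    simp only [wf] at hwf
    obtain ⟨hwp, hwq, hwr, hcp, hcq, hall, hm0⟩ := hwf
    obtain ⟨p', Np, wp, cp, sp, up, lp⟩ := ihp hwp
    obtain ⟨q', Nq, wq, cq, sq, uq, lq⟩ := ihq hwq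
    obtain ⟨r', Nr, wr, cr, sr, ur, lr⟩ := ihr hwr
    refine ⟨.impE ℓ A B p' q' r', Np + Nq + Nr + ℓ + 1, ?_, ?_, ?_, ?_, ?_⟩
    · simp only [wf]
      refine ⟨wp, wq, wr, cp.trans hcp, cq.trans hcq, ?_, ?_⟩
      · intro F hF; exact hall F ((sr _).1 hF)
      · exact (sr _).2 hm0
    · simp only [concl]; exact cr
    · intro z
      simp only [openAss, Multiset.mem_add, Multiset.mem_filter]
      have h1 := sp z; have h2 := sq z; have h3 := sr z
      tauto
    · simp only [uniqueDischarge]; exact ⟨up, uq, ur⟩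
    · intro m hm
      simp only [labels, Finset.mem_insert, Finset.mem_union] at hm
      rcases hm with rfl | (h | h) | h
      · omega
      · have := lp m h; omega
      · have := lq m h; omega
      · have := lr m h; omega
  | negI ℓA ℓnA A p q ihp ihq =>
    intro hwf
    simp only [wf] at hwf
    obtain ⟨hwp, hwq, hpq, hallA, hmA, hallnA, hmnA⟩ := hwf
    obtain ⟨p', Np, wp, cp, sp, up, lp⟩ := ihp hwp
    obtain ⟨q', Nq, wq, cq, sq, uq, lq⟩ := ihq hwq
    have hallA' : ∀ F, (ℓA, F) ∈ p'.openAss → F = A :=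
      fun F hF => hallA F ((sp _).1 hF)
    have hmA' : (ℓA, A) ∈ p'.openAss := (sp _).2 hmA
    have hall' : ∀ F, (ℓnA, F) ∈ q'.openAss → F = Formula.neg A :=
      fun F hF => hallnA F ((sq _).1 hF)
    have hm' : (ℓnA, Formula.neg A) ∈ q'.openAss := (sq _).2 hmnA
    have hWspec : ∀ ℓ' x, x.wf → x.concl = p'.concl →
        (∀ F, (ℓ', F) ∈ x.openAss → F = Formula.neg A) →
        (ℓ', Formula.neg A) ∈ x.openAss →
        (PT.negI ℓA ℓ' A p' x).wf ∧ (PT.negI ℓA ℓ' A p' x).concl = x.concl ∧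
        (PT.negI ℓA ℓ' A p' x).openAss =
          p'.openAss.filter (fun z => z.1 ≠ ℓA) +
            x.openAss.filter (fun z => z.1 ≠ ℓ') ∧
        (x.uniqueDischarge → x.openAss.count (ℓ', Formula.neg A) = 1 →
          (PT.negI ℓA ℓ' A p' x).uniqueDischarge) ∧
        (∀ m ∈ (PT.negI ℓA ℓ' A p' x).labels,
          m = ℓ' ∨ m ∈ insert ℓA p'.labels ∨ m ∈ x.labels) := by
      intro ℓ' x hxwf hxc hxall hxm
      refine ⟨?_, ?_, ?_, ?_, ?_⟩
      · simp only [wf]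
        exact ⟨wp, hxwf, hxc.symm, hallA', hmA', hxall, hxm⟩
      · simp only [concl]; exact hxc.symm
      · simp only [openAss]
      · intro h1 h2
        simp only [uniqueDischarge]
        exact ⟨up, h1, h2⟩
      · intro m hm
        simp only [labels, Finset.mem_insert, Finset.mem_union] at hm ⊢
        tauto
    obtain ⟨w, wwf, wud, wc, wset, N', wlab⟩ := introStep p'.concl (Formula.neg A)
      (p'.openAss.filter (fun z => z.1 ≠ ℓA)) (insert ℓA p'.labels) _ hWspec
      (Np + Nq + ℓA + 1)
      (by intro z hz
          have hz' := Multiset.mem_filter.1 hz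
          have := lp z.1 (fst_mem_labels p' hz'.1); omega)
      (by intro m hm
          rcases Finset.mem_insert.1 hm with rfl | h
          · omega
          · have := lp m h; omega)
      q' ℓnA wq uq (cq.trans (hpq.symm.trans cp.symm))
      (fun m hm => by have := lq m hm; omega) hall' hm'
    refine ⟨w, N', wwf, ?_, ?_, wud, wlab⟩
    · simp only [concl]; exact wc.trans cp
    · intro z
      rw [wset z]
      simp only [openAss, Multiset.mem_add, Multiset.mem_filter]
      have h1 := sp z; have h2 := sq z
      tauto
  | negE A C p q ihp ihq =>
    intro hwf
    simp only [wf] at hwf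
    obtain ⟨hwp, hwq, hcp, hcq⟩ := hwf
    obtain ⟨p', Np, wp, cp, sp, up, lp⟩ := ihp hwp
    obtain ⟨q', Nq, wq, cq, sq, uq, lq⟩ := ihq hwq
    refine ⟨.negE A C p' q', Np + Nq, ?_, ?_, ?_, ?_, ?_⟩
    · simp only [wf]
      exact ⟨wp, wq, cp.trans hcp, cq.trans hcq⟩
    · simp only [concl]
    · intro z
      simp only [openAss, Multiset.mem_add]
      have h1 := sp z; have h2 := sq z
      tauto
    · simp only [uniqueDischarge]; exact ⟨up, uq⟩
    · intro m hm
      simp only [labels, Finset.mem_union] at hm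
      rcases hm with h | h
      · have := lp m h; omega
      · have := lq m h; omega

end PT


/-- Any deduction in the system C can be transformed into a
deduction of the same conclusion from the same undischarged assumptions in
which every application of a general introduction rule (∧I, ∨I, ⊃I, TR, ¬I)
discharges exactly one occurrence of its major assumption. -/
theorem unique_discharge_convention (d : PT) (hd : d.wf) :
    ∃ d' : PT, d'.wf ∧ d'.concl = d.concl ∧ d'.assumptions = d.assumptions ∧
      d'.uniqueDischarge := by
  obtain ⟨d', N', hw, hc, hs, hu, -⟩ := PT.main d hd
  refine ⟨d', hw, hc, ?_, hu⟩
  ext A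
  simp only [PT.assumptions, Set.mem_setOf_eq]
  exact exists_congr fun ℓ => hs (ℓ, A)
end

section
/- Every deduction in the system C can be converted into a deduction in normal form, i.e. for every deduction of a formula A from assumptions Γ in C there exists a deduction of A in C, from assumptions among Γ, that contains no maximal formulas and no maximal segments. -/
namespace PT

/-- `openLeafMajor d ℓ G` holds when the deduction `d` contains an application
of an elimination rule whose major premise is an assumption occurrence
`ass ℓ G` that is still open (undischarged) at the root of `d`.  If a rule
below `d` discharges the class `ℓ`, such an occurrence is a formula occurrence
that is both the major premise of an elimination rule and discharged by that
lower rule. -/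
def openLeafMajor : PT → ℕ → Formula → Prop
  | .ass _ _, _, _ => False
  | .andI ℓ' _ _ p q r, ℓ, G =>
      p.openLeafMajor ℓ G ∨ q.openLeafMajor ℓ G ∨ (r.openLeafMajor ℓ G ∧ ℓ ≠ ℓ')
  | .andE ℓA ℓB _ _ p q, ℓ, G =>
      p = .ass ℓ G ∨ p.openLeafMajor ℓ G ∨
        (q.openLeafMajor ℓ G ∧ ℓ ≠ ℓA ∧ ℓ ≠ ℓB)
  | .orI₁ ℓ' _ _ p q, ℓ, G => p.openLeafMajor ℓ G ∨ (q.openLeafMajor ℓ G ∧ ℓ ≠ ℓ')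
  | .orI₂ ℓ' _ _ p q, ℓ, G => p.openLeafMajor ℓ G ∨ (q.openLeafMajor ℓ G ∧ ℓ ≠ ℓ')
  | .orE ℓA ℓB _ _ p q r, ℓ, G =>
      p = .ass ℓ G ∨ p.openLeafMajor ℓ G ∨ (q.openLeafMajor ℓ G ∧ ℓ ≠ ℓA) ∨
        (r.openLeafMajor ℓ G ∧ ℓ ≠ ℓB)
  | .impI ℓ' _ _ p q, ℓ, G => p.openLeafMajor ℓ G ∨ (q.openLeafMajor ℓ G ∧ ℓ ≠ ℓ')
  | .tr ℓA ℓAB _ _ p q, ℓ, G =>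
      (p.openLeafMajor ℓ G ∧ ℓ ≠ ℓA) ∨ (q.openLeafMajor ℓ G ∧ ℓ ≠ ℓAB)
  | .impE ℓ' _ _ p q r, ℓ, G =>
      p = .ass ℓ G ∨ p.openLeafMajor ℓ G ∨ q.openLeafMajor ℓ G ∨
        (r.openLeafMajor ℓ G ∧ ℓ ≠ ℓ')
  | .negI ℓA ℓnA _ p q, ℓ, G =>
      (p.openLeafMajor ℓ G ∧ ℓ ≠ ℓA) ∨ (q.openLeafMajor ℓ G ∧ ℓ ≠ ℓnA)
  | .negE _ _ p q, ℓ, G => p = .ass ℓ G ∨ p.openLeafMajor ℓ G ∨ q.openLeafMajor ℓ G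

/-- `d` contains a *maximal formula*: an occurrence of `A∗B` (or `¬A`) that is
the major premise of an application of `∗E` and at the same time the major
assumption discharged by an application of an introduction rule for `∗`
(`⊃I` or `TR` in case `∗` is `⊃`). -/
def hasMaxFormula : PT → Prop
  | .ass _ _ => False
  | .andI ℓ A B p q r => p.hasMaxFormula ∨ q.hasMaxFormula ∨ r.hasMaxFormula ∨
      r.openLeafMajor ℓ (Formula.conj A B)
  | .andE _ _ _ _ p q => p.hasMaxFormula ∨ q.hasMaxFormula
  | .orI₁ ℓ A B p q => p.hasMaxFormula ∨ q.hasMaxFormula ∨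
      q.openLeafMajor ℓ (Formula.disj A B)
  | .orI₂ ℓ A B p q => p.hasMaxFormula ∨ q.hasMaxFormula ∨
      q.openLeafMajor ℓ (Formula.disj A B)
  | .orE _ _ _ _ p q r => p.hasMaxFormula ∨ q.hasMaxFormula ∨ r.hasMaxFormula
  | .impI ℓ A B p q => p.hasMaxFormula ∨ q.hasMaxFormula ∨
      q.openLeafMajor ℓ (Formula.imp A B)
  | .tr _ ℓAB A B p q => p.hasMaxFormula ∨ q.hasMaxFormula ∨
      q.openLeafMajor ℓAB (Formula.imp A B)
  | .impE _ _ _ p q r => p.hasMaxFormula ∨ q.hasMaxFormula ∨ r.hasMaxFormula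
  | .negI _ ℓnA A p q => p.hasMaxFormula ∨ q.hasMaxFormula ∨
      q.openLeafMajor ℓnA (Formula.neg A)
  | .negE _ _ p q => p.hasMaxFormula ∨ q.hasMaxFormula

/-- The deduction is a single assumption occurrence. -/
def isAss : PT → Prop
  | .ass _ _ => True
  | _ => False

/-- `d` contains a *maximal segment*: a segment — a sequence of occurrences of
one and the same formula, each member being an arbitrary premise of a rule
application whose conclusion is the next member, starting either with an
assumption discharged as an arbitrary premise or with the conclusion of `¬E` —
whose last formula is the major premise of an elimination rule.  Since the
conclusion of every rule application of **C** is either the conclusion of `¬E`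
or (an occurrence of the same formula as) one of its arbitrary premises, a
maximal segment occurs exactly when the major premise of some elimination rule
is the conclusion of a rule application, i.e. not an assumption. -/
def hasMaxSegment : PT → Prop
  | .ass _ _ => False
  | .andI _ _ _ p q r => p.hasMaxSegment ∨ q.hasMaxSegment ∨ r.hasMaxSegment
  | .andE _ _ _ _ p q => ¬ p.isAss ∨ p.hasMaxSegment ∨ q.hasMaxSegment
  | .orI₁ _ _ _ p q => p.hasMaxSegment ∨ q.hasMaxSegment
  | .orI₂ _ _ _ p q => p.hasMaxSegment ∨ q.hasMaxSegment
  | .orE _ _ _ _ p q r =>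
      ¬ p.isAss ∨ p.hasMaxSegment ∨ q.hasMaxSegment ∨ r.hasMaxSegment
  | .impI _ _ _ p q => p.hasMaxSegment ∨ q.hasMaxSegment
  | .tr _ _ _ _ p q => p.hasMaxSegment ∨ q.hasMaxSegment
  | .impE _ _ _ p q r =>
      ¬ p.isAss ∨ p.hasMaxSegment ∨ q.hasMaxSegment ∨ r.hasMaxSegment
  | .negI _ _ _ p q => p.hasMaxSegment ∨ q.hasMaxSegment
  | .negE _ _ p q => ¬ p.isAss ∨ p.hasMaxSegment ∨ q.hasMaxSegment

/-- A deduction is in *normal form* if it contains neither maximal formulas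
nor maximal segments. -/
def normal (d : PT) : Prop := ¬ d.hasMaxFormula ∧ ¬ d.hasMaxSegment

end PT

namespace Formula

def evalB (v : ℕ → Bool) : Formula → Bool
  | atom n => v n
  | neg A => !evalB v A
  | conj A B => evalB v A && evalB v B
  | disj A B => evalB v A || evalB v B
  | imp A B => !evalB v A || evalB v B

def wt : Formula → ℕ
  | atom _ => 1
  | neg A => wt A + 1
  | conj A B => wt A + wt B + 1
  | disj A B => wt A + wt B + 1
  | imp A B => wt A + wt B + 1

def isAtomB : Formula → Bool
  | atom _ => true
  | _ => false

lemma isAtomB_iff {A : Formula} : isAtomB A = true ↔ ∃ n, A = atom n := by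
  cases A <;> simp [isAtomB]

end Formula

namespace PT

open Formula

/-- An occurrence counted by `openLeafMajor` is an open assumption. -/
lemma olm_mem : ∀ (d : PT) (ℓ : ℕ) (G : Formula),
    d.openLeafMajor ℓ G → (ℓ, G) ∈ d.openAss := by
  intro d
  induction d with
  | ass l A => intro ℓ G h; simp [openLeafMajor] at h
  | andI l A B p q r ihp ihq ihr =>
      intro ℓ G h
      simp only [openLeafMajor] at h
      simp only [openAss, Multiset.mem_add, Multiset.mem_filter]
      rcases h with h | h | ⟨h, hne⟩
      · exact Or.inl (Or.inl (ihp _ _ h))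
      · exact Or.inl (Or.inr (ihq _ _ h))
      · exact Or.inr ⟨ihr _ _ h, hne⟩
  | andE lA lB A B p q ihp ihq =>
      intro ℓ G h
      simp only [openLeafMajor] at h
      simp only [openAss, Multiset.mem_add, Multiset.mem_filter]
      rcases h with h | h | ⟨h, h1, h2⟩
      · subst h; left; simp [openAss]
      · exact Or.inl (ihp _ _ h)
      · exact Or.inr ⟨ihq _ _ h, h1, h2⟩
  | orI₁ l A B p q ihp ihq =>
      intro ℓ G h
      simp only [openLeafMajor] at h
      simp only [openAss, Multiset.mem_add, Multiset.mem_filter]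
      rcases h with h | ⟨h, hne⟩
      · exact Or.inl (ihp _ _ h)
      · exact Or.inr ⟨ihq _ _ h, hne⟩
  | orI₂ l A B p q ihp ihq =>
      intro ℓ G h
      simp only [openLeafMajor] at h
      simp only [openAss, Multiset.mem_add, Multiset.mem_filter]
      rcases h with h | ⟨h, hne⟩
      · exact Or.inl (ihp _ _ h)
      · exact Or.inr ⟨ihq _ _ h, hne⟩
  | orE lA lB A B p q r ihp ihq ihr =>
      intro ℓ G h
      simp only [openLeafMajor] at h
      simp only [openAss, Multiset.mem_add, Multiset.mem_filter]
      rcases h with h | h | ⟨h, hne⟩ | ⟨h, hne⟩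
      · subst h; left; left; simp [openAss]
      · exact Or.inl (Or.inl (ihp _ _ h))
      · exact Or.inl (Or.inr ⟨ihq _ _ h, hne⟩)
      · exact Or.inr ⟨ihr _ _ h, hne⟩
  | impI l A B p q ihp ihq =>
      intro ℓ G h
      simp only [openLeafMajor] at h
      simp only [openAss, Multiset.mem_add, Multiset.mem_filter]
      rcases h with h | ⟨h, hne⟩
      · exact Or.inl (ihp _ _ h)
      · exact Or.inr ⟨ihq _ _ h, hne⟩
  | tr lA lAB A B p q ihp ihq =>
      intro ℓ G h
      simp only [openLeafMajor] at h
      simp only [openAss, Multiset.mem_add, Multiset.mem_filter]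
      rcases h with ⟨h, hne⟩ | ⟨h, hne⟩
      · exact Or.inl ⟨ihp _ _ h, hne⟩
      · exact Or.inr ⟨ihq _ _ h, hne⟩
  | impE l A B p q r ihp ihq ihr =>
      intro ℓ G h
      simp only [openLeafMajor] at h
      simp only [openAss, Multiset.mem_add, Multiset.mem_filter]
      rcases h with h | h | h | ⟨h, hne⟩
      · subst h; left; left; simp [openAss]
      · exact Or.inl (Or.inl (ihp _ _ h))
      · exact Or.inl (Or.inr (ihq _ _ h))
      · exact Or.inr ⟨ihr _ _ h, hne⟩
  | negI lA lnA A p q ihp ihq =>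
      intro ℓ G h
      simp only [openLeafMajor] at h
      simp only [openAss, Multiset.mem_add, Multiset.mem_filter]
      rcases h with ⟨h, hne⟩ | ⟨h, hne⟩
      · exact Or.inl ⟨ihp _ _ h, hne⟩
      · exact Or.inr ⟨ihq _ _ h, hne⟩
  | negE A C p q ihp ihq =>
      intro ℓ G h
      simp only [openLeafMajor] at h
      simp only [openAss, Multiset.mem_add]
      rcases h with h | h | h
      · subst h; left; simp [openAss]
      · exact Or.inl (ihp _ _ h)
      · exact Or.inr (ihq _ _ h)

/-- In a well-formed deduction no atom is the major premise of an elimination. -/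
lemma olm_atom : ∀ (d : PT), d.wf → ∀ (ℓ n : ℕ), ¬ d.openLeafMajor ℓ (Formula.atom n) := by
  intro d
  induction d with
  | ass l A => intro _ ℓ n h; simp [openLeafMajor] at h
  | andI l A B p q r ihp ihq ihr =>
      intro hw ℓ n h
      obtain ⟨hp, hq, hr, _⟩ := hw
      simp only [openLeafMajor] at h
      rcases h with h | h | ⟨h, _⟩
      exacts [ihp hp ℓ n h, ihq hq ℓ n h, ihr hr ℓ n h]
  | andE lA lB A B p q ihp ihq =>
      intro hw ℓ n h
      obtain ⟨hp, hq, hc, _⟩ := hw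
      simp only [openLeafMajor] at h
      rcases h with h | h | ⟨h, _⟩
      · subst h; simp [concl] at hc
      exacts [ihp hp ℓ n h, ihq hq ℓ n h]
  | orI₁ l A B p q ihp ihq =>
      intro hw ℓ n h
      obtain ⟨hp, hq, _⟩ := hw
      simp only [openLeafMajor] at h
      rcases h with h | ⟨h, _⟩
      exacts [ihp hp ℓ n h, ihq hq ℓ n h]
  | orI₂ l A B p q ihp ihq =>
      intro hw ℓ n h
      obtain ⟨hp, hq, _⟩ := hw
      simp only [openLeafMajor] at h
      rcases h with h | ⟨h, _⟩
      exacts [ihp hp ℓ n h, ihq hq ℓ n h]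
  | orE lA lB A B p q r ihp ihq ihr =>
      intro hw ℓ n h
      obtain ⟨hp, hq, hr, hc, _⟩ := hw
      simp only [openLeafMajor] at h
      rcases h with h | h | ⟨h, _⟩ | ⟨h, _⟩
      · subst h; simp [concl] at hc
      exacts [ihp hp ℓ n h, ihq hq ℓ n h, ihr hr ℓ n h]
  | impI l A B p q ihp ihq =>
      intro hw ℓ n h
      obtain ⟨hp, hq, _⟩ := hw
      simp only [openLeafMajor] at h
      rcases h with h | ⟨h, _⟩
      exacts [ihp hp ℓ n h, ihq hq ℓ n h]
  | tr lA lAB A B p q ihp ihq =>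
      intro hw ℓ n h
      obtain ⟨hp, hq, _⟩ := hw
      simp only [openLeafMajor] at h
      rcases h with ⟨h, _⟩ | ⟨h, _⟩
      exacts [ihp hp ℓ n h, ihq hq ℓ n h]
  | impE l A B p q r ihp ihq ihr =>
      intro hw ℓ n h
      obtain ⟨hp, hq, hr, hc, _⟩ := hw
      simp only [openLeafMajor] at h
      rcases h with h | h | h | ⟨h, _⟩
      · subst h; simp [concl] at hc
      exacts [ihp hp ℓ n h, ihq hq ℓ n h, ihr hr ℓ n h]
  | negI lA lnA A p q ihp ihq =>
      intro hw ℓ n h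
      obtain ⟨hp, hq, _⟩ := hw
      simp only [openLeafMajor] at h
      rcases h with ⟨h, _⟩ | ⟨h, _⟩
      exacts [ihp hp ℓ n h, ihq hq ℓ n h]
  | negE A C p q ihp ihq =>
      intro hw ℓ n h
      obtain ⟨hp, hq, hc, _⟩ := hw
      simp only [openLeafMajor] at h
      rcases h with h | h | h
      · subst h; simp [concl] at hc
      exacts [ihp hp ℓ n h, ihq hq ℓ n h]

end PT

namespace PT

open Formula

/-- Soundness of **C** w.r.t. classical (boolean) valuations. -/
theorem sound : ∀ (d : PT), d.wf → ∀ (v : ℕ → Bool),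
    (∀ x ∈ d.openAss, evalB v x.2 = true) → evalB v d.concl = true := by
  intro d
  induction d with
  | ass l A => intro _ v hv; exact hv (l, A) (by simp [openAss])
  | andI l A B p q r ihp ihq ihr =>
      intro hw v hv
      obtain ⟨hp, hq, hr, hpc, hqc, hall, hmem⟩ := hw
      have hA : evalB v A = true := by
        rw [← hpc]; exact ihp hp v (fun x hx => hv x (by
          simp only [openAss, Multiset.mem_add]; exact Or.inl (Or.inl hx)))
      have hB : evalB v B = true := by
        rw [← hqc]; exact ihq hq v (fun x hx => hv x (by
          simp only [openAss, Multiset.mem_add]; exact Or.inl (Or.inr hx)))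
      show evalB v r.concl = true
      refine ihr hr v (fun x hx => ?_)
      by_cases hxl : x.1 = l
      · have : x.2 = Formula.conj A B := hall x.2 (by
          have : (x.1, x.2) ∈ r.openAss := by simpa using hx
          rwa [hxl] at this)
        rw [this]; simp [evalB, hA, hB]
      · exact hv x (by
          simp only [openAss, Multiset.mem_add, Multiset.mem_filter]
          exact Or.inr ⟨hx, hxl⟩)
  | andE lA lB A B p q ihp ihq =>
      intro hw v hv
      obtain ⟨hp, hq, hpc, hallA, hallB, _⟩ := hw
      have hAB : evalB v (Formula.conj A B) = true := by
        rw [← hpc]; exact ihp hp v (fun x hx => hv x (by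
          simp only [openAss, Multiset.mem_add]; exact Or.inl hx))
      simp only [evalB, Bool.and_eq_true] at hAB
      show evalB v q.concl = true
      refine ihq hq v (fun x hx => ?_)
      by_cases hxA : x.1 = lA
      · have : x.2 = A := hallA x.2 (by
          have : (x.1, x.2) ∈ q.openAss := by simpa using hx
          rwa [hxA] at this)
        rw [this]; exact hAB.1
      · by_cases hxB : x.1 = lB
        · have : x.2 = B := hallB x.2 (by
            have : (x.1, x.2) ∈ q.openAss := by simpa using hx
            rwa [hxB] at this)
          rw [this]; exact hAB.2
        · exact hv x (by
            simp only [openAss, Multiset.mem_add, Multiset.mem_filter]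
            exact Or.inr ⟨hx, hxA, hxB⟩)
  | orI₁ l A B p q ihp ihq =>
      intro hw v hv
      obtain ⟨hp, hq, hpc, hall, hmem⟩ := hw
      have hA : evalB v A = true := by
        rw [← hpc]; exact ihp hp v (fun x hx => hv x (by
          simp only [openAss, Multiset.mem_add]; exact Or.inl hx))
      show evalB v q.concl = true
      refine ihq hq v (fun x hx => ?_)
      by_cases hxl : x.1 = l
      · have : x.2 = Formula.disj A B := hall x.2 (by
          have : (x.1, x.2) ∈ q.openAss := by simpa using hx
          rwa [hxl] at this)
        rw [this]; simp [evalB, hA]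
      · exact hv x (by
          simp only [openAss, Multiset.mem_add, Multiset.mem_filter]
          exact Or.inr ⟨hx, hxl⟩)
  | orI₂ l A B p q ihp ihq =>
      intro hw v hv
      obtain ⟨hp, hq, hpc, hall, hmem⟩ := hw
      have hB : evalB v B = true := by
        rw [← hpc]; exact ihp hp v (fun x hx => hv x (by
          simp only [openAss, Multiset.mem_add]; exact Or.inl hx))
      show evalB v q.concl = true
      refine ihq hq v (fun x hx => ?_)
      by_cases hxl : x.1 = l
      · have : x.2 = Formula.disj A B := hall x.2 (by
          have : (x.1, x.2) ∈ q.openAss := by simpa using hx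
          rwa [hxl] at this)
        rw [this]; simp [evalB, hB]
      · exact hv x (by
          simp only [openAss, Multiset.mem_add, Multiset.mem_filter]
          exact Or.inr ⟨hx, hxl⟩)
  | orE lA lB A B p q r ihp ihq ihr =>
      intro hw v hv
      obtain ⟨hp, hq, hr, hpc, hqr, hallA, _, hallB, _⟩ := hw
      have hAB : evalB v (Formula.disj A B) = true := by
        rw [← hpc]; exact ihp hp v (fun x hx => hv x (by
          simp only [openAss, Multiset.mem_add]; exact Or.inl (Or.inl hx)))
      simp only [evalB, Bool.or_eq_true] at hAB
      show evalB v q.concl = true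
      rcases hAB with hA | hB
      · refine ihq hq v (fun x hx => ?_)
        by_cases hxl : x.1 = lA
        · have : x.2 = A := hallA x.2 (by
            have : (x.1, x.2) ∈ q.openAss := by simpa using hx
            rwa [hxl] at this)
          rw [this]; exact hA
        · exact hv x (by
            simp only [openAss, Multiset.mem_add, Multiset.mem_filter]
            exact Or.inl (Or.inr ⟨hx, hxl⟩))
      · rw [hqr]
        refine ihr hr v (fun x hx => ?_)
        by_cases hxl : x.1 = lB
        · have : x.2 = B := hallB x.2 (by
            have : (x.1, x.2) ∈ r.openAss := by simpa using hx
            rwa [hxl] at this)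
          rw [this]; exact hB
        · exact hv x (by
            simp only [openAss, Multiset.mem_add, Multiset.mem_filter]
            exact Or.inr ⟨hx, hxl⟩)
  | impI l A B p q ihp ihq =>
      intro hw v hv
      obtain ⟨hp, hq, hpc, hall, hmem⟩ := hw
      have hB : evalB v B = true := by
        rw [← hpc]; exact ihp hp v (fun x hx => hv x (by
          simp only [openAss, Multiset.mem_add]; exact Or.inl hx))
      show evalB v q.concl = true
      refine ihq hq v (fun x hx => ?_)
      by_cases hxl : x.1 = l
      · have : x.2 = Formula.imp A B := hall x.2 (by
          have : (x.1, x.2) ∈ q.openAss := by simpa using hx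
          rwa [hxl] at this)
        rw [this]; simp [evalB, hB]
      · exact hv x (by
          simp only [openAss, Multiset.mem_add, Multiset.mem_filter]
          exact Or.inr ⟨hx, hxl⟩)
  | tr lA lAB A B p q ihp ihq =>
      intro hw v hv
      obtain ⟨hp, hq, hpq, hallA, _, hallAB, _⟩ := hw
      by_cases hA : evalB v A = true
      · show evalB v p.concl = true
        refine ihp hp v (fun x hx => ?_)
        by_cases hxl : x.1 = lA
        · have : x.2 = A := hallA x.2 (by
            have : (x.1, x.2) ∈ p.openAss := by simpa using hx
            rwa [hxl] at this)
          rw [this]; exact hA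
        · exact hv x (by
            simp only [openAss, Multiset.mem_add, Multiset.mem_filter]
            exact Or.inl ⟨hx, hxl⟩)
      · show evalB v p.concl = true
        rw [hpq]
        refine ihq hq v (fun x hx => ?_)
        by_cases hxl : x.1 = lAB
        · have : x.2 = Formula.imp A B := hallAB x.2 (by
            have : (x.1, x.2) ∈ q.openAss := by simpa using hx
            rwa [hxl] at this)
          rw [this]; simp [evalB]
          left; simpa using hA
        · exact hv x (by
            simp only [openAss, Multiset.mem_add, Multiset.mem_filter]
            exact Or.inr ⟨hx, hxl⟩)
  | impE l A B p q r ihp ihq ihr =>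
      intro hw v hv
      obtain ⟨hp, hq, hr, hpc, hqc, hall, hmem⟩ := hw
      have hAB : evalB v (Formula.imp A B) = true := by
        rw [← hpc]; exact ihp hp v (fun x hx => hv x (by
          simp only [openAss, Multiset.mem_add]; exact Or.inl (Or.inl hx)))
      have hA : evalB v A = true := by
        rw [← hqc]; exact ihq hq v (fun x hx => hv x (by
          simp only [openAss, Multiset.mem_add]; exact Or.inl (Or.inr hx)))
      have hB : evalB v B = true := by
        simp [evalB, hA] at hAB; exact hAB
      show evalB v r.concl = true
      refine ihr hr v (fun x hx => ?_)
      by_cases hxl : x.1 = l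
      · have : x.2 = B := hall x.2 (by
          have : (x.1, x.2) ∈ r.openAss := by simpa using hx
          rwa [hxl] at this)
        rw [this]; exact hB
      · exact hv x (by
          simp only [openAss, Multiset.mem_add, Multiset.mem_filter]
          exact Or.inr ⟨hx, hxl⟩)
  | negI lA lnA A p q ihp ihq =>
      intro hw v hv
      obtain ⟨hp, hq, hpq, hallA, _, hallnA, _⟩ := hw
      by_cases hA : evalB v A = true
      · show evalB v p.concl = true
        refine ihp hp v (fun x hx => ?_)
        by_cases hxl : x.1 = lA
        · have : x.2 = A := hallA x.2 (by
            have : (x.1, x.2) ∈ p.openAss := by simpa using hx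
            rwa [hxl] at this)
          rw [this]; exact hA
        · exact hv x (by
            simp only [openAss, Multiset.mem_add, Multiset.mem_filter]
            exact Or.inl ⟨hx, hxl⟩)
      · show evalB v p.concl = true
        rw [hpq]
        refine ihq hq v (fun x hx => ?_)
        by_cases hxl : x.1 = lnA
        · have : x.2 = Formula.neg A := hallnA x.2 (by
            have : (x.1, x.2) ∈ q.openAss := by simpa using hx
            rwa [hxl] at this)
          rw [this]; simp [evalB]; simpa using hA
        · exact hv x (by
            simp only [openAss, Multiset.mem_add, Multiset.mem_filter]
            exact Or.inr ⟨hx, hxl⟩)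
  | negE A C p q ihp ihq =>
      intro hw v hv
      obtain ⟨hp, hq, hpc, hqc⟩ := hw
      have hnA : evalB v (Formula.neg A) = true := by
        rw [← hpc]; exact ihp hp v (fun x hx => hv x (by
          simp only [openAss, Multiset.mem_add]; exact Or.inl hx))
      have hA : evalB v A = true := by
        rw [← hqc]; exact ihq hq v (fun x hx => hv x (by
          simp only [openAss, Multiset.mem_add]; exact Or.inr hx))
      simp [evalB, hA] at hnA

end PT

namespace PT

open Formula

/-- Maximum label occurring in a labelled context. -/
def mxl : List (ℕ × Formula) → ℕ
  | [] => 0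
  | x :: l => max x.1 (mxl l)

lemma le_mxl : ∀ {T : List (ℕ × Formula)} {x}, x ∈ T → x.1 ≤ mxl T := by
  intro T; induction T with
  | nil => intro x h; simp at h
  | cons y l ih =>
      intro x h
      rcases List.mem_cons.1 h with h | h
      · subst h; simp [mxl]
      · exact le_trans (ih h) (by simp [mxl])

lemma mxl_append (T L : List (ℕ × Formula)) :
    mxl (T ++ L) = max (mxl T) (mxl L) := by
  induction T with
  | nil => simp [mxl]
  | cons y l ih => simp [mxl, ih, Nat.max_assoc]

lemma fresh_not_mem {T : List (ℕ × Formula)} {k : ℕ} {F : Formula}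
    (h : mxl T < k) : (k, F) ∉ T := fun hm => absurd (le_mxl hm) (by omega)

/-- Total weight of a labelled context. -/
def lwt (Γ : List (ℕ × Formula)) : ℕ := (Γ.map (fun x => wt x.2)).sum

/-- Total weight of a list of formulas. -/
def dwt (Δ : List Formula) : ℕ := (Δ.map wt).sum

/-- Delete all copies of a labelled assumption. -/
def del (Γ : List (ℕ × Formula)) (x : ℕ × Formula) : List (ℕ × Formula) :=
  Γ.filter (fun y => y ≠ x)

lemma mem_del {Γ : List (ℕ × Formula)} {x y} :
    y ∈ del Γ x ↔ y ∈ Γ ∧ y ≠ x := by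
  simp [del, List.mem_filter]

/-- Delete all copies of a formula. -/
def delF (Δ : List Formula) (E : Formula) : List Formula :=
  Δ.filter (fun y => y ≠ E)

lemma mem_delF {Δ : List Formula} {E F} :
    F ∈ delF Δ E ↔ F ∈ Δ ∧ F ≠ E := by
  simp [delF, List.mem_filter]

lemma lwt_cons (y : ℕ × Formula) (l : List (ℕ × Formula)) :
    lwt (y :: l) = wt y.2 + lwt l := by simp [lwt]

lemma dwt_cons (E : Formula) (l : List Formula) :
    dwt (E :: l) = wt E + dwt l := by simp [dwt]

lemma lwt_del_le (Γ : List (ℕ × Formula)) (x : ℕ × Formula) :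
    lwt (del Γ x) ≤ lwt Γ := by
  induction Γ with
  | nil => simp [del, lwt]
  | cons y l ih =>
      by_cases hyx : y = x
      · have : del (y :: l) x = del l x := by simp [del, List.filter_cons, hyx]
        rw [this, lwt_cons]; omega
      · have : del (y :: l) x = y :: del l x := by simp [del, List.filter_cons, hyx]
        rw [this, lwt_cons, lwt_cons]; omega

lemma lwt_del {Γ : List (ℕ × Formula)} {x} (h : x ∈ Γ) :
    lwt (del Γ x) + wt x.2 ≤ lwt Γ := by
  induction Γ with
  | nil => cases h
  | cons y l ih =>
      by_cases hyx : y = x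
      · have : del (y :: l) x = del l x := by simp [del, List.filter_cons, hyx]
        rw [this, lwt_cons, hyx]
        have := lwt_del_le l x
        omega
      · have : del (y :: l) x = y :: del l x := by simp [del, List.filter_cons, hyx]
        rw [this, lwt_cons, lwt_cons]
        rcases List.mem_cons.1 h with h' | h'
        · exact absurd h'.symm hyx
        · have := ih h'
          omega

lemma dwt_delF_le (Δ : List Formula) (E : Formula) :
    dwt (delF Δ E) ≤ dwt Δ := by
  induction Δ with
  | nil => simp [delF, dwt]
  | cons y l ih =>
      by_cases hyx : y = E
      · have : delF (y :: l) E = delF l E := by simp [delF, List.filter_cons, hyx]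
        rw [this, dwt_cons]; omega
      · have : delF (y :: l) E = y :: delF l E := by simp [delF, List.filter_cons, hyx]
        rw [this, dwt_cons, dwt_cons]; omega

lemma dwt_delF {Δ : List Formula} {E} (h : E ∈ Δ) :
    dwt (delF Δ E) + wt E ≤ dwt Δ := by
  induction Δ with
  | nil => cases h
  | cons y l ih =>
      by_cases hyx : y = E
      · have : delF (y :: l) E = delF l E := by simp [delF, List.filter_cons, hyx]
        rw [this, dwt_cons, hyx]
        have := dwt_delF_le l E
        omega
      · have : delF (y :: l) E = y :: delF l E := by simp [delF, List.filter_cons, hyx]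
        rw [this, dwt_cons, dwt_cons]
        rcases List.mem_cons.1 h with h' | h'
        · exact absurd h'.symm hyx
        · have := ih h'
          omega

lemma lwt_append (Γ L : List (ℕ × Formula)) :
    lwt (Γ ++ L) = lwt Γ + lwt L := by simp [lwt]

lemma dwt_append (Δ L : List Formula) :
    dwt (Δ ++ L) = dwt Δ + dwt L := by simp [dwt]

lemma wt_pos (A : Formula) : 1 ≤ wt A := by
  cases A <;> simp [wt]

/-- Output contract: a normal well-formed deduction of `C` from assumptions
in `T` whose elimination majors are all in `MP`. -/
def Outp (T MP : List (ℕ × Formula)) (d : PT) (C : Formula) : Prop :=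
  d.wf ∧ ¬ d.hasMaxFormula ∧ ¬ d.hasMaxSegment ∧ d.concl = C ∧
    (∀ x ∈ d.openAss, x ∈ T) ∧
    (∀ ℓ G, d.openLeafMajor ℓ G → (ℓ, G) ∈ MP)

/-- Continuation contract for a succedent formula `E`: for any admissible
label `ℓ`, a normal deduction of `C` that uses the extra assumption `(ℓ, E)`
only innocuously. -/
def Kont (T MP : List (ℕ × Formula)) (E C : Formula) : Prop :=
  ∀ ℓ : ℕ, (∀ F, (ℓ, F) ∈ T → F = E ∧ ∃ n, E = Formula.atom n) →
    ∃ d : PT, d.wf ∧ ¬ d.hasMaxFormula ∧ ¬ d.hasMaxSegment ∧ d.concl = C ∧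
      (∀ x ∈ d.openAss, x ∈ T ∨ x = (ℓ, E)) ∧
      (∀ ℓ' G, d.openLeafMajor ℓ' G → (ℓ', G) ∈ MP)

lemma kont_mono {T T' MP MP' : List (ℕ × Formula)} {E C : Formula}
    (hT : ∀ x ∈ T, x ∈ T') (hMP : ∀ x ∈ MP, x ∈ MP')
    (h : Kont T MP E C) : Kont T' MP' E C := by
  intro ℓ hcond
  obtain ⟨d, h1, h2, h3, h4, h5, h6⟩ := h ℓ (fun F hF => hcond F (hT _ hF))
  exact ⟨d, h1, h2, h3, h4,
    fun x hx => (h5 x hx).imp (hT x) id,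
    fun ℓ' G hg => hMP _ (h6 ℓ' G hg)⟩

/-- If the extra assumptions `L` do not actually occur, they can be dropped
from the contracts. -/
lemma outp_drop {T MP L : List (ℕ × Formula)} {d : PT} {C : Formula}
    (h : Outp (T ++ L) (MP ++ L) d C)
    (habs : ∀ y ∈ L, y ∉ d.openAss) : Outp T MP d C := by
  obtain ⟨h1, h2, h3, h4, h5, h6⟩ := h
  refine ⟨h1, h2, h3, h4, fun x hx => ?_, fun ℓ G hg => ?_⟩
  · rcases List.mem_append.1 (h5 x hx) with h | h
    · exact h
    · exact absurd hx (habs x h)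
  · rcases List.mem_append.1 (h6 ℓ G hg) with h | h
    · exact h
    · exact absurd (olm_mem d ℓ G hg) (habs _ h)

end PT

namespace PT

open Formula

/-- Statement of the CPS-style completeness lemma, for strong induction. -/
def MainStmt (N : ℕ) : Prop :=
  ∀ (Γ : List (ℕ × Formula)) (Δ : List Formula) (C : Formula)
    (T MP : List (ℕ × Formula)),
    lwt Γ + dwt Δ ≤ N →
    (∀ x ∈ Γ, x ∈ MP) →
    (∀ x ∈ MP, x ∈ T) →
    (∀ ℓ F F', (ℓ, F) ∈ T → (ℓ, F') ∈ T → F = F') →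
    (∀ E ∈ Δ, Kont T MP E C) →
    (∀ v : ℕ → Bool, (∀ x ∈ Γ, evalB v x.2 = true) → ∃ E ∈ Δ, evalB v E = true) →
    ∃ d : PT, Outp T MP d C

lemma case_atomic {N : ℕ} {Γ : List (ℕ × Formula)} {Δ : List Formula} {C : Formula}
    {T MP : List (ℕ × Formula)}
    (IH : ∀ M, M < N → MainStmt M)
    (hsz : lwt Γ + dwt Δ ≤ N)
    (hΓMP : ∀ x ∈ Γ, x ∈ MP)
    (hMPT : ∀ x ∈ MP, x ∈ T)
    (hfunc : ∀ ℓ F F', (ℓ, F) ∈ T → (ℓ, F') ∈ T → F = F')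
    (hK : ∀ E ∈ Δ, Kont T MP E C)
    (hval : ∀ v : ℕ → Bool,
      (∀ x ∈ Γ, evalB v x.2 = true) → ∃ E ∈ Δ, evalB v E = true)
    (hΓa : ∀ x ∈ Γ, ∃ n, x.2 = Formula.atom n)
    (hΔa : ∀ E ∈ Δ, ∃ n, E = Formula.atom n) :
    ∃ d : PT, Outp T MP d C := by
  -- the valuation making exactly the atoms of Γ true
  classical
  set v : ℕ → Bool := fun k => decide (∃ m, (m, Formula.atom k) ∈ Γ) with hv
  have hsat : ∀ x ∈ Γ, evalB v x.2 = true := by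
    intro x hx
    obtain ⟨n, hn⟩ := hΓa x hx
    rw [hn]
    simp only [evalB, hv, decide_eq_true_eq]
    exact ⟨x.1, by rw [← hn]; exact hx⟩
  obtain ⟨E, hE, hEv⟩ := hval v hsat
  obtain ⟨r, hr⟩ := hΔa E hE
  subst hr
  simp only [evalB, hv, decide_eq_true_eq] at hEv
  obtain ⟨m, hmΓ⟩ := hEv
  have hmT : (m, Formula.atom r) ∈ T := hMPT _ (hΓMP _ hmΓ)
  obtain ⟨d, h1, h2, h3, h4, h5, h6⟩ := hK _ hE m
    (fun F hF => ⟨hfunc m F (Formula.atom r) hF hmT, r, rfl⟩)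
  refine ⟨d, h1, h2, h3, h4, fun x hx => ?_, h6⟩
  rcases h5 x hx with h | h
  · exact h
  · rw [h]; exact hmT

lemma case_conjL {N : ℕ} {Γ : List (ℕ × Formula)} {Δ : List Formula} {C : Formula}
    {T MP : List (ℕ × Formula)}
    (IH : ∀ M, M < N → MainStmt M)
    (hsz : lwt Γ + dwt Δ ≤ N)
    (hΓMP : ∀ x ∈ Γ, x ∈ MP)
    (hMPT : ∀ x ∈ MP, x ∈ T)
    (hfunc : ∀ ℓ F F', (ℓ, F) ∈ T → (ℓ, F') ∈ T → F = F')
    (hK : ∀ E ∈ Δ, Kont T MP E C)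
    (hval : ∀ v : ℕ → Bool,
      (∀ x ∈ Γ, evalB v x.2 = true) → ∃ E ∈ Δ, evalB v E = true)
    (m : ℕ) (A B : Formula) (hm : (m, Formula.conj A B) ∈ Γ) :
    ∃ d : PT, Outp T MP d C := by
  classical
  set G := Formula.conj A B with hG
  set ℓA := mxl T + 1 with hℓA
  set ℓB := mxl T + 2 with hℓB
  set Γ' := del Γ (m, G) ++ [(ℓA, A), (ℓB, B)] with hΓ'
  set T' := T ++ [(ℓA, A), (ℓB, B)] with hT'
  set MP' := MP ++ [(ℓA, A), (ℓB, B)] with hMP'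
  have hmT : (m, G) ∈ T := hMPT _ (hΓMP _ hm)
  have hfreshA : ∀ F, (ℓA, F) ∉ T := fun F => fresh_not_mem (by omega)
  have hfreshB : ∀ F, (ℓB, F) ∉ T := fun F => fresh_not_mem (by omega)
  have hAB : ℓA ≠ ℓB := by omega
  have hT'mem : ∀ x, x ∈ T' → x ∈ T ∨ x = (ℓA, A) ∨ x = (ℓB, B) := by
    intro x hx
    rcases List.mem_append.1 hx with h | h
    · exact Or.inl h
    · simp only [List.mem_cons, List.mem_singleton] at h
      tauto
  have hlt : lwt Γ' + dwt Δ < N := by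
    have h1 := lwt_del (x := (m, G)) hm
    have he : wt (m, G).2 = wt A + wt B + 1 := by simp [hG, wt]
    have h2 : lwt Γ' = lwt (del Γ (m, G)) + lwt [(ℓA, A), (ℓB, B)] := lwt_append _ _
    have h3 : lwt [(ℓA, A), (ℓB, B)] = wt A + wt B := by simp [lwt]
    omega
  have hΓMP' : ∀ x ∈ Γ', x ∈ MP' := by
    intro x hx
    rcases List.mem_append.1 hx with h | h
    · exact List.mem_append.2 (Or.inl (hΓMP _ (mem_del.1 h).1))
    · exact List.mem_append.2 (Or.inr h)
  have hMPT' : ∀ x ∈ MP', x ∈ T' := by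
    intro x hx
    rcases List.mem_append.1 hx with h | h
    · exact List.mem_append.2 (Or.inl (hMPT _ h))
    · exact List.mem_append.2 (Or.inr h)
  have hfunc' : ∀ ℓ F F', (ℓ, F) ∈ T' → (ℓ, F') ∈ T' → F = F' := by
    intro ℓ F F' h1 h2
    rcases hT'mem _ h1 with h1 | h1 | h1 <;> rcases hT'mem _ h2 with h2 | h2 | h2 <;>
        (try simp only [Prod.mk.injEq] at h1 h2)
    · exact hfunc ℓ F F' h1 h2
    · exact absurd h1 (by rw [h2.1]; exact hfreshA F)
    · exact absurd h1 (by rw [h2.1]; exact hfreshB F)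
    · exact absurd h2 (by rw [h1.1]; exact hfreshA F')
    · rw [h1.2, h2.2]
    · omega
    · exact absurd h2 (by rw [h1.1]; exact hfreshB F')
    · omega
    · rw [h1.2, h2.2]
  have hK' : ∀ E ∈ Δ, Kont T' MP' E C := fun E hE =>
    kont_mono (fun x hx => List.mem_append.2 (Or.inl hx))
      (fun x hx => List.mem_append.2 (Or.inl hx)) (hK E hE)
  have hval' : ∀ v, (∀ x ∈ Γ', evalB v x.2 = true) → ∃ E ∈ Δ, evalB v E = true := by
    intro v hv
    have hA : evalB v A = true := hv (ℓA, A) (List.mem_append.2 (Or.inr (by simp)))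
    have hB : evalB v B = true := hv (ℓB, B) (List.mem_append.2 (Or.inr (by simp)))
    refine hval v ?_
    intro x hx
    by_cases hxm : x = (m, G)
    · rw [hxm]; show evalB v G = true; simp [hG, evalB, hA, hB]
    · exact hv x (List.mem_append.2 (Or.inl (mem_del.2 ⟨hx, hxm⟩)))
  obtain ⟨d₁, hw1, hmf1, hms1, hc1, ho1, holm1⟩ :=
    IH _ hlt Γ' Δ C T' MP' le_rfl hΓMP' hMPT' hfunc' hK' hval'
  have hfin : ((ℓA, A) ∈ d₁.openAss ∨ (ℓB, B) ∈ d₁.openAss) →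
      ∃ d : PT, Outp T MP d C := by
    intro hor
    refine ⟨PT.andE ℓA ℓB A B (PT.ass m G) d₁, ⟨trivial, hw1, rfl, ?_, ?_, hor⟩,
      ?_, ?_, ?_, ?_, ?_⟩
    · intro F hF
      rcases hT'mem _ (ho1 _ hF) with h | h | h
      · exact absurd h (hfreshA F)
      · simp only [Prod.mk.injEq] at h; exact h.2
      · simp only [Prod.mk.injEq] at h; omega
    · intro F hF
      rcases hT'mem _ (ho1 _ hF) with h | h | h
      · exact absurd h (hfreshB F)
      · simp only [Prod.mk.injEq] at h; omega
      · simp only [Prod.mk.injEq] at h; exact h.2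
    · intro h
      simp only [hasMaxFormula] at h
      rcases h with h | h
      · exact h
      · exact hmf1 h
    · intro h
      simp only [hasMaxSegment, isAss, not_true_eq_false, false_or] at h
      exact hms1 h
    · show d₁.concl = C
      exact hc1
    · intro x hx
      simp only [openAss, Multiset.mem_add, Multiset.mem_filter] at hx
      rcases hx with hx | ⟨hx, hxA, hxB⟩
      · simp only [Multiset.mem_singleton] at hx; rw [hx]; exact hmT
      · rcases hT'mem _ (ho1 _ hx) with h | h | h
        · exact h
        · exact absurd (by rw [h]) hxA
        · exact absurd (by rw [h]) hxB
    · intro ℓ G' hg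
      simp only [openLeafMajor] at hg
      rcases hg with hg | hg | ⟨hg, hgA, hgB⟩
      · simp only [PT.ass.injEq] at hg
        rw [← hg.1, ← hg.2]; exact hΓMP _ hm
      · simp only [openLeafMajor] at hg
      · rcases List.mem_append.1 (holm1 _ _ hg) with h | h
        · exact h
        · simp only [List.mem_cons, List.not_mem_nil, or_false, Prod.mk.injEq] at h
          rcases h with ⟨h1, _⟩ | ⟨h1, _⟩
          · exact absurd h1 hgA
          · exact absurd h1 hgB
  by_cases hmemA : (ℓA, A) ∈ d₁.openAss
  · exact hfin (Or.inl hmemA)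
  by_cases hmemB : (ℓB, B) ∈ d₁.openAss
  · exact hfin (Or.inr hmemB)
  refine ⟨d₁, outp_drop ⟨hw1, hmf1, hms1, hc1, ho1, holm1⟩ ?_⟩
  intro y hy
  simp only [List.mem_cons, List.not_mem_nil, or_false] at hy
  rcases hy with hy | hy
  · rw [hy]; exact hmemA
  · rw [hy]; exact hmemB

lemma case_disjL {N : ℕ} {Γ : List (ℕ × Formula)} {Δ : List Formula} {C : Formula}
    {T MP : List (ℕ × Formula)}
    (IH : ∀ M, M < N → MainStmt M)
    (hsz : lwt Γ + dwt Δ ≤ N)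
    (hΓMP : ∀ x ∈ Γ, x ∈ MP)
    (hMPT : ∀ x ∈ MP, x ∈ T)
    (hfunc : ∀ ℓ F F', (ℓ, F) ∈ T → (ℓ, F') ∈ T → F = F')
    (hK : ∀ E ∈ Δ, Kont T MP E C)
    (hval : ∀ v : ℕ → Bool,
      (∀ x ∈ Γ, evalB v x.2 = true) → ∃ E ∈ Δ, evalB v E = true)
    (m : ℕ) (A B : Formula) (hm : (m, Formula.disj A B) ∈ Γ) :
    ∃ d : PT, Outp T MP d C := by
  classical
  set G := Formula.disj A B with hG
  set ℓA := mxl T + 1 with hℓA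
  set ℓB := mxl T + 2 with hℓB
  have hmT : (m, G) ∈ T := hMPT _ (hΓMP _ hm)
  have hfreshA : ∀ F, (ℓA, F) ∉ T := fun F => fresh_not_mem (by omega)
  have hfreshB : ∀ F, (ℓB, F) ∉ T := fun F => fresh_not_mem (by omega)
  have hdel := lwt_del (x := (m, G)) hm
  have he : wt (m, G).2 = wt A + wt B + 1 := by simp [hG, wt]
  have hsub : ∀ x ∈ del Γ (m, G), x ∈ Γ := fun x hx => (mem_del.1 hx).1
  -- a generic single-assumption extension premise
  have hprem : ∀ (ℓX : ℕ) (X : Formula), (∀ F, (ℓX, F) ∉ T) →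
      lwt (del Γ (m, G) ++ [(ℓX, X)]) + dwt Δ < N →
      (∀ v, (∀ x ∈ del Γ (m, G) ++ [(ℓX, X)], evalB v x.2 = true) →
        ∃ E ∈ Δ, evalB v E = true) →
      ∃ d : PT, Outp (T ++ [(ℓX, X)]) (MP ++ [(ℓX, X)]) d C := by
    intro ℓX X hfresh hlt hv
    refine IH _ hlt (del Γ (m, G) ++ [(ℓX, X)]) Δ C (T ++ [(ℓX, X)])
      (MP ++ [(ℓX, X)]) le_rfl ?_ ?_ ?_ ?_ hv
    · intro x hx
      rcases List.mem_append.1 hx with h | h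
      · exact List.mem_append.2 (Or.inl (hΓMP _ (hsub _ h)))
      · exact List.mem_append.2 (Or.inr h)
    · intro x hx
      rcases List.mem_append.1 hx with h | h
      · exact List.mem_append.2 (Or.inl (hMPT _ h))
      · exact List.mem_append.2 (Or.inr h)
    · intro ℓ F F' h1 h2
      rcases List.mem_append.1 h1 with h1 | h1 <;> rcases List.mem_append.1 h2 with h2 | h2 <;>
        (try simp only [List.mem_cons, List.not_mem_nil, or_false, Prod.mk.injEq] at h1 h2)
      · exact hfunc ℓ F F' h1 h2
      · exact absurd h1 (by rw [h2.1]; exact hfresh F)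
      · exact absurd h2 (by rw [h1.1]; exact hfresh F')
      · rw [h1.2, h2.2]
    · exact fun E hE => kont_mono (fun x hx => List.mem_append.2 (Or.inl hx))
        (fun x hx => List.mem_append.2 (Or.inl hx)) (hK E hE)
  have hltA : lwt (del Γ (m, G) ++ [(ℓA, A)]) + dwt Δ < N := by
    have h2 := lwt_append (del Γ (m, G)) [(ℓA, A)]
    have h3 : lwt [(ℓA, A)] = wt A := by simp [lwt]
    have := wt_pos B
    omega
  have hltB : lwt (del Γ (m, G) ++ [(ℓB, B)]) + dwt Δ < N := by
    have h2 := lwt_append (del Γ (m, G)) [(ℓB, B)]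
    have h3 : lwt [(ℓB, B)] = wt B := by simp [lwt]
    have := wt_pos A
    omega
  obtain ⟨d₁, hw1, hmf1, hms1, hc1, ho1, holm1⟩ := hprem ℓA A hfreshA hltA (by
    intro v hv
    refine hval v ?_
    intro x hx
    by_cases hxm : x = (m, G)
    · rw [hxm]
      show evalB v G = true
      have hA : evalB v A = true := hv (ℓA, A) (List.mem_append.2 (Or.inr (by simp)))
      simp [hG, evalB, hA]
    · exact hv x (List.mem_append.2 (Or.inl (mem_del.2 ⟨hx, hxm⟩))))
  by_cases hmemA : (ℓA, A) ∈ d₁.openAss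
  rotate_left
  · refine ⟨d₁, outp_drop ⟨hw1, hmf1, hms1, hc1, ho1, holm1⟩ ?_⟩
    intro y hy
    simp only [List.mem_cons, List.not_mem_nil, or_false] at hy
    rw [hy]; exact hmemA
  obtain ⟨d₂, hw2, hmf2, hms2, hc2, ho2, holm2⟩ := hprem ℓB B hfreshB hltB (by
    intro v hv
    refine hval v ?_
    intro x hx
    by_cases hxm : x = (m, G)
    · rw [hxm]
      show evalB v G = true
      have hB : evalB v B = true := hv (ℓB, B) (List.mem_append.2 (Or.inr (by simp)))
      simp [hG, evalB, hB]
    · exact hv x (List.mem_append.2 (Or.inl (mem_del.2 ⟨hx, hxm⟩))))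
  by_cases hmemB : (ℓB, B) ∈ d₂.openAss
  rotate_left
  · refine ⟨d₂, outp_drop ⟨hw2, hmf2, hms2, hc2, ho2, holm2⟩ ?_⟩
    intro y hy
    simp only [List.mem_cons, List.not_mem_nil, or_false] at hy
    rw [hy]; exact hmemB
  have hT1mem : ∀ x, x ∈ T ++ [(ℓA, A)] → x ∈ T ∨ x = (ℓA, A) := by
    intro x hx
    rcases List.mem_append.1 hx with h | h
    · exact Or.inl h
    · simp only [List.mem_cons, List.not_mem_nil, or_false] at h; exact Or.inr h
  have hT2mem : ∀ x, x ∈ T ++ [(ℓB, B)] → x ∈ T ∨ x = (ℓB, B) := by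
    intro x hx
    rcases List.mem_append.1 hx with h | h
    · exact Or.inl h
    · simp only [List.mem_cons, List.not_mem_nil, or_false] at h; exact Or.inr h
  refine ⟨PT.orE ℓA ℓB A B (PT.ass m G) d₁ d₂,
    ⟨trivial, hw1, hw2, rfl, hc1.trans hc2.symm, ?_, hmemA, ?_, hmemB⟩,
    ?_, ?_, ?_, ?_, ?_⟩
  · intro F hF
    rcases hT1mem _ (ho1 _ hF) with h | h
    · exact absurd h (hfreshA F)
    · simp only [Prod.mk.injEq] at h; exact h.2
  · intro F hF
    rcases hT2mem _ (ho2 _ hF) with h | h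
    · exact absurd h (hfreshB F)
    · simp only [Prod.mk.injEq] at h; exact h.2
  · intro h
    simp only [hasMaxFormula] at h
    rcases h with h | h | h
    · exact h
    · exact hmf1 h
    · exact hmf2 h
  · intro h
    simp only [hasMaxSegment, isAss, not_true_eq_false, false_or] at h
    rcases h with h | h
    · exact hms1 h
    · exact hms2 h
  · show d₁.concl = C
    exact hc1
  · intro x hx
    simp only [openAss, Multiset.mem_add, Multiset.mem_filter] at hx
    rcases hx with (hx | ⟨hx, hxA⟩) | ⟨hx, hxB⟩
    · simp only [Multiset.mem_singleton] at hx; rw [hx]; exact hmT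
    · rcases hT1mem _ (ho1 _ hx) with h | h
      · exact h
      · exact absurd (by rw [h]) hxA
    · rcases hT2mem _ (ho2 _ hx) with h | h
      · exact h
      · exact absurd (by rw [h]) hxB
  · intro ℓ G' hg
    simp only [openLeafMajor] at hg
    rcases hg with hg | hg | ⟨hg, hgA⟩ | ⟨hg, hgB⟩
    · simp only [PT.ass.injEq] at hg
      rw [← hg.1, ← hg.2]; exact hΓMP _ hm
    · simp only [openLeafMajor] at hg
    · rcases List.mem_append.1 (holm1 _ _ hg) with h | h
      · exact h
      · simp only [List.mem_cons, List.not_mem_nil, or_false, Prod.mk.injEq] at h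
        exact absurd h.1 hgA
    · rcases List.mem_append.1 (holm2 _ _ hg) with h | h
      · exact h
      · simp only [List.mem_cons, List.not_mem_nil, or_false, Prod.mk.injEq] at h
        exact absurd h.1 hgB

lemma case_impL {N : ℕ} {Γ : List (ℕ × Formula)} {Δ : List Formula} {C : Formula}
    {T MP : List (ℕ × Formula)}
    (IH : ∀ M, M < N → MainStmt M)
    (hsz : lwt Γ + dwt Δ ≤ N)
    (hΓMP : ∀ x ∈ Γ, x ∈ MP)
    (hMPT : ∀ x ∈ MP, x ∈ T)
    (hfunc : ∀ ℓ F F', (ℓ, F) ∈ T → (ℓ, F') ∈ T → F = F')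
    (hK : ∀ E ∈ Δ, Kont T MP E C)
    (hval : ∀ v : ℕ → Bool,
      (∀ x ∈ Γ, evalB v x.2 = true) → ∃ E ∈ Δ, evalB v E = true)
    (m : ℕ) (A B : Formula) (hm : (m, Formula.imp A B) ∈ Γ) :
    ∃ d : PT, Outp T MP d C := by
  classical
  set G := Formula.imp A B with hG
  have hmMP : (m, G) ∈ MP := hΓMP _ hm
  have hmT : (m, G) ∈ T := hMPT _ hmMP
  set ℓB' := mxl T + 1 with hℓB
  have hfresh : ∀ F, (ℓB', F) ∉ T := fun F => fresh_not_mem (by omega)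
  have hdel := lwt_del (x := (m, G)) hm
  have he : wt (m, G).2 = wt A + wt B + 1 := by simp [hG, wt]
  have hT2mem : ∀ x, x ∈ T ++ [(ℓB', B)] → x ∈ T ∨ x = (ℓB', B) := by
    intro x hx
    rcases List.mem_append.1 hx with h | h
    · exact Or.inl h
    · simp only [List.mem_cons, List.not_mem_nil, or_false] at h; exact Or.inr h
  have hlt2 : lwt (del Γ (m, G) ++ [(ℓB', B)]) + dwt Δ < N := by
    have h2 := lwt_append (del Γ (m, G)) [(ℓB', B)]
    have h3 : lwt [(ℓB', B)] = wt B := by simp [lwt]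
    have := wt_pos A
    omega
  obtain ⟨d₂, hw2, hmf2, hms2, hc2, ho2, holm2⟩ :=
    IH _ hlt2 (del Γ (m, G) ++ [(ℓB', B)]) Δ C (T ++ [(ℓB', B)]) (MP ++ [(ℓB', B)])
      le_rfl
      (by
        intro x hx
        rcases List.mem_append.1 hx with h | h
        · exact List.mem_append.2 (Or.inl (hΓMP _ (mem_del.1 h).1))
        · exact List.mem_append.2 (Or.inr h))
      (by
        intro x hx
        rcases List.mem_append.1 hx with h | h
        · exact List.mem_append.2 (Or.inl (hMPT _ h))
        · exact List.mem_append.2 (Or.inr h))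
      (by
        intro ℓ F F' h1 h2
        rcases List.mem_append.1 h1 with h1 | h1 <;>
          rcases List.mem_append.1 h2 with h2 | h2 <;>
          (try simp only [List.mem_cons, List.not_mem_nil, or_false,
            Prod.mk.injEq] at h1 h2)
        · exact hfunc ℓ F F' h1 h2
        · exact absurd h1 (by rw [h2.1]; exact hfresh F)
        · exact absurd h2 (by rw [h1.1]; exact hfresh F')
        · rw [h1.2, h2.2])
      (fun E hE => kont_mono (fun x hx => List.mem_append.2 (Or.inl hx))
        (fun x hx => List.mem_append.2 (Or.inl hx)) (hK E hE))
      (by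
        intro v hv
        refine hval v ?_
        intro x hx
        by_cases hxm : x = (m, G)
        · rw [hxm]
          show evalB v G = true
          have hB : evalB v B = true := hv (ℓB', B) (List.mem_append.2 (Or.inr (by simp)))
          simp [hG, evalB, hB]
        · exact hv x (List.mem_append.2 (Or.inl (mem_del.2 ⟨hx, hxm⟩))))
  by_cases hmem2 : (ℓB', B) ∈ d₂.openAss
  rotate_left
  · refine ⟨d₂, outp_drop ⟨hw2, hmf2, hms2, hc2, ho2, holm2⟩ ?_⟩
    intro y hy
    simp only [List.mem_cons, List.not_mem_nil, or_false] at hy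
    rw [hy]; exact hmem2
  -- continuation for A
  have hKA : Kont T MP A C := by
    intro ℓ hcond
    refine ⟨PT.impE ℓB' A B (PT.ass m G) (PT.ass ℓ A) d₂,
      ⟨trivial, trivial, hw2, rfl, rfl, ?_, hmem2⟩, ?_, ?_, ?_, ?_, ?_⟩
    · intro F hF
      rcases hT2mem _ (ho2 _ hF) with h | h
      · exact absurd h (hfresh F)
      · simp only [Prod.mk.injEq] at h; exact h.2
    · intro h
      simp only [hasMaxFormula] at h
      rcases h with h | h | h
      · exact h
      · exact h
      · exact hmf2 h
    · intro h
      simp only [hasMaxSegment, isAss, not_true_eq_false, false_or] at h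
      exact hms2 h
    · show d₂.concl = C
      exact hc2
    · intro x hx
      simp only [openAss, Multiset.mem_add, Multiset.mem_filter,
        Multiset.mem_singleton] at hx
      rcases hx with (hx | hx) | ⟨hx, hxB⟩
      · rw [hx]; exact Or.inl hmT
      · rw [hx]; exact Or.inr rfl
      · rcases hT2mem _ (ho2 _ hx) with h | h
        · exact Or.inl h
        · exact absurd (by rw [h]) hxB
    · intro ℓ' G' hg
      simp only [openLeafMajor] at hg
      rcases hg with hg | hg | hg | ⟨hg, hgB⟩
      · simp only [PT.ass.injEq] at hg
        rw [← hg.1, ← hg.2]; exact hmMP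
      · simp only [openLeafMajor] at hg
      · simp only [openLeafMajor] at hg
      · rcases List.mem_append.1 (holm2 _ _ hg) with h | h
        · exact h
        · simp only [List.mem_cons, List.not_mem_nil, or_false, Prod.mk.injEq] at h
          exact absurd h.1 hgB
  have hlt1 : lwt (del Γ (m, G)) + dwt (Δ ++ [A]) < N := by
    have h2 := dwt_append Δ [A]
    have h3 : dwt [A] = wt A := by simp [dwt]
    have := wt_pos B
    omega
  refine IH _ hlt1 (del Γ (m, G)) (Δ ++ [A]) C T MP le_rfl
    (fun x hx => hΓMP _ (mem_del.1 hx).1) hMPT hfunc ?_ ?_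
  · intro E hE
    rcases List.mem_append.1 hE with h | h
    · exact hK E h
    · simp only [List.mem_cons, List.not_mem_nil, or_false] at h
      rw [h]; exact hKA
  · intro v hv
    by_cases hiv : evalB v G = true
    · have hsat : ∀ x ∈ Γ, evalB v x.2 = true := by
        intro x hx
        by_cases hxm : x = (m, G)
        · rw [hxm]; exact hiv
        · exact hv x (mem_del.2 ⟨hx, hxm⟩)
      obtain ⟨E, hE, hEv⟩ := hval v hsat
      exact ⟨E, List.mem_append.2 (Or.inl hE), hEv⟩
    · have hA : evalB v A = true := by
        by_cases h : evalB v A = true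
        · exact h
        · rw [Bool.not_eq_true] at h
          exact absurd (show evalB v G = true by rw [hG]; simp [evalB, h]) hiv
      exact ⟨A, List.mem_append.2 (Or.inr (by simp)), hA⟩

lemma case_negL {N : ℕ} {Γ : List (ℕ × Formula)} {Δ : List Formula} {C : Formula}
    {T MP : List (ℕ × Formula)}
    (IH : ∀ M, M < N → MainStmt M)
    (hsz : lwt Γ + dwt Δ ≤ N)
    (hΓMP : ∀ x ∈ Γ, x ∈ MP)
    (hMPT : ∀ x ∈ MP, x ∈ T)
    (hfunc : ∀ ℓ F F', (ℓ, F) ∈ T → (ℓ, F') ∈ T → F = F')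
    (hK : ∀ E ∈ Δ, Kont T MP E C)
    (hval : ∀ v : ℕ → Bool,
      (∀ x ∈ Γ, evalB v x.2 = true) → ∃ E ∈ Δ, evalB v E = true)
    (m : ℕ) (A : Formula) (hm : (m, Formula.neg A) ∈ Γ) :
    ∃ d : PT, Outp T MP d C := by
  classical
  have hmMP : (m, Formula.neg A) ∈ MP := hΓMP _ hm
  have hmT : (m, Formula.neg A) ∈ T := hMPT _ hmMP
  -- the continuation for `A`
  have hKA : Kont T MP A C := by
    intro ℓ hcond
    refine ⟨PT.negE A C (PT.ass m (Formula.neg A)) (PT.ass ℓ A),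
      ⟨trivial, trivial, rfl, rfl⟩, ?_, ?_, rfl, ?_, ?_⟩
    · intro h
      simp only [hasMaxFormula] at h
      rcases h with h | h <;> exact h
    · intro h
      simp only [hasMaxSegment, isAss, not_true_eq_false, false_or] at h
    · intro x hx
      simp only [openAss, Multiset.mem_add, Multiset.mem_singleton] at hx
      rcases hx with hx | hx
      · rw [hx]; exact Or.inl hmT
      · rw [hx]; exact Or.inr rfl
    · intro ℓ' G hg
      simp only [openLeafMajor] at hg
      rcases hg with hg | hg | hg
      · simp only [PT.ass.injEq] at hg
        rw [← hg.1, ← hg.2]; exact hmMP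
      · simp only [openLeafMajor] at hg
      · simp only [openLeafMajor] at hg
  have hlt : lwt (del Γ (m, Formula.neg A)) + dwt (Δ ++ [A]) < N := by
    have hdel := lwt_del (x := (m, Formula.neg A)) hm
    have he : wt (m, Formula.neg A).2 = wt A + 1 := by simp [wt]
    have h2 := dwt_append Δ [A]
    have h3 : dwt [A] = wt A := by simp [dwt]
    omega
  refine IH _ hlt (del Γ (m, Formula.neg A)) (Δ ++ [A]) C T MP le_rfl
    (fun x hx => hΓMP _ (mem_del.1 hx).1) hMPT hfunc ?_ ?_
  · intro E hE
    rcases List.mem_append.1 hE with h | h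
    · exact hK E h
    · simp only [List.mem_cons, List.not_mem_nil, or_false] at h
      rw [h]; exact hKA
  · intro v hv
    by_cases hA : evalB v A = true
    · exact ⟨A, List.mem_append.2 (Or.inr (by simp)), hA⟩
    · have hsat : ∀ x ∈ Γ, evalB v x.2 = true := by
        intro x hx
        by_cases hxm : x = (m, Formula.neg A)
        · rw [hxm]
          show evalB v (Formula.neg A) = true
          simp [evalB]
          simpa using hA
        · exact hv x (mem_del.2 ⟨hx, hxm⟩)
      obtain ⟨E, hE, hEv⟩ := hval v hsat
      exact ⟨E, List.mem_append.2 (Or.inl hE), hEv⟩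

lemma case_conjR {N : ℕ} {Γ : List (ℕ × Formula)} {Δ : List Formula} {C : Formula}
    {T MP : List (ℕ × Formula)}
    (IH : ∀ M, M < N → MainStmt M)
    (hsz : lwt Γ + dwt Δ ≤ N)
    (hΓMP : ∀ x ∈ Γ, x ∈ MP)
    (hMPT : ∀ x ∈ MP, x ∈ T)
    (hfunc : ∀ ℓ F F', (ℓ, F) ∈ T → (ℓ, F') ∈ T → F = F')
    (hK : ∀ E ∈ Δ, Kont T MP E C)
    (hval : ∀ v : ℕ → Bool,
      (∀ x ∈ Γ, evalB v x.2 = true) → ∃ E ∈ Δ, evalB v E = true)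
    (A B : Formula) (hm : Formula.conj A B ∈ Δ) :
    ∃ d : PT, Outp T MP d C := by
  classical
  set E := Formula.conj A B with hE
  have hltB : lwt Γ + dwt (delF Δ E ++ [B]) < N := by
    have h1 := dwt_delF (E := E) hm
    have h2 : wt E = wt A + wt B + 1 := by simp [hE, wt]
    have h5 := dwt_append (delF Δ E) [B]
    have h6 : dwt [B] = wt B := by simp [dwt]
    have := wt_pos A
    omega
  -- continuation for A: prove B (recursively), then ∧I
  have hKA : Kont T MP A C := by
    intro ℓA' hcondA
    set T₂ := T ++ [(ℓA', A)] with hT₂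
    have hTT₂ : ∀ x ∈ T, x ∈ T₂ := fun x hx => List.mem_append.2 (Or.inl hx)
    have hT₂mem : ∀ x, x ∈ T₂ → x ∈ T ∨ x = (ℓA', A) := by
      intro x hx
      rcases List.mem_append.1 hx with h | h
      · exact Or.inl h
      · simp only [List.mem_cons, List.not_mem_nil, or_false] at h; exact Or.inr h
    -- the continuation for B closes with ∧I
    have hKB : Kont T₂ MP B C := by
      intro ℓB' hcondB
      set ℓs := max (mxl T₂) (max ℓA' ℓB') + 1 with hℓs
      have hfreshs : ∀ F, (ℓs, F) ∉ T₂ := fun F => fresh_not_mem (by omega)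
      obtain ⟨r, hwr, hmfr, hmsr, hcr, hor, holmr⟩ :=
        hK _ hm ℓs (fun F hF => absurd (hTT₂ _ hF) (hfreshs F))
      by_cases hmr : (ℓs, E) ∈ r.openAss
      rotate_left
      · refine ⟨r, hwr, hmfr, hmsr, hcr, fun x hx => ?_, holmr⟩
        rcases hor x hx with h | h
        · exact Or.inl (hTT₂ _ h)
        · rw [h] at hx; exact absurd hx hmr
      refine ⟨PT.andI ℓs A B (PT.ass ℓA' A) (PT.ass ℓB' B) r,
        ⟨trivial, trivial, hwr, rfl, rfl, ?_, hmr⟩, ?_, ?_, ?_, ?_, ?_⟩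
      · intro F hF
        rcases hor _ hF with h | h
        · exact absurd (hTT₂ _ h) (hfreshs F)
        · simp only [Prod.mk.injEq] at h; exact h.2
      · intro h
        simp only [hasMaxFormula] at h
        rcases h with h | h | h | h
        · exact h
        · exact h
        · exact hmfr h
        · exact absurd (hTT₂ _ (hMPT _ (holmr _ _ h))) (hfreshs _)
      · intro h
        simp only [hasMaxSegment] at h
        rcases h with h | h | h
        · simp only [hasMaxSegment] at h
        · simp only [hasMaxSegment] at h
        · exact hmsr h
      · show r.concl = C
        exact hcr
      · intro x hx
        simp only [openAss, Multiset.mem_add, Multiset.mem_filter,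
          Multiset.mem_singleton] at hx
        rcases hx with (hx | hx) | ⟨hx, hxs⟩
        · rw [hx]; exact Or.inl (List.mem_append.2 (Or.inr (by simp)))
        · rw [hx]; exact Or.inr rfl
        · rcases hor _ hx with h | h
          · exact Or.inl (hTT₂ _ h)
          · exact absurd (by rw [h]) hxs
      · intro ℓ'' G hg
        simp only [openLeafMajor] at hg
        rcases hg with hg | hg | ⟨hg, _⟩
        · simp only [openLeafMajor] at hg
        · simp only [openLeafMajor] at hg
        · exact holmr _ _ hg
    -- recursive call for the premise ⟹ B
    obtain ⟨d₂, hw2, hmf2, hms2, hc2, ho2, holm2⟩ :=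
      IH _ hltB Γ (delF Δ E ++ [B]) C T₂ MP le_rfl hΓMP
        (fun x hx => hTT₂ _ (hMPT _ hx))
        (by
          intro ℓ F F' h1 h2
          rcases hT₂mem _ h1 with h1 | h1 <;> rcases hT₂mem _ h2 with h2 | h2 <;>
            (try simp only [Prod.mk.injEq] at h1 h2)
          · exact hfunc ℓ F F' h1 h2
          · rw [h2.2]; exact (hcondA F (h2.1 ▸ h1)).1
          · rw [h1.2]; exact ((hcondA F' (h1.1 ▸ h2)).1).symm
          · rw [h1.2, h2.2])
        (by
          intro E' hE'
          rcases List.mem_append.1 hE' with h | h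
          · exact kont_mono hTT₂ (fun x hx => hx) (hK E' (mem_delF.1 h).1)
          · simp only [List.mem_cons, List.not_mem_nil, or_false] at h
            rw [h]; exact hKB)
        (by
          intro v hv
          by_cases hB : evalB v B = true
          · exact ⟨B, List.mem_append.2 (Or.inr (by simp)), hB⟩
          obtain ⟨E', hE', hEv⟩ := hval v hv
          refine ⟨E', List.mem_append.2 (Or.inl (mem_delF.2 ⟨hE', ?_⟩)), hEv⟩
          intro hEeq
          rw [hEeq, hE] at hEv
          rw [Bool.not_eq_true] at hB
          simp [evalB, hB] at hEv)
    refine ⟨d₂, hw2, hmf2, hms2, hc2, fun x hx => hT₂mem _ (ho2 _ hx), holm2⟩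
  have hltA : lwt Γ + dwt (delF Δ E ++ [A]) < N := by
    have h1 := dwt_delF (E := E) hm
    have h2 : wt E = wt A + wt B + 1 := by simp [hE, wt]
    have h5 := dwt_append (delF Δ E) [A]
    have h6 : dwt [A] = wt A := by simp [dwt]
    have := wt_pos B
    omega
  refine IH _ hltA Γ (delF Δ E ++ [A]) C T MP le_rfl hΓMP hMPT hfunc ?_ ?_
  · intro E' hE'
    rcases List.mem_append.1 hE' with h | h
    · exact hK E' (mem_delF.1 h).1
    · simp only [List.mem_cons, List.not_mem_nil, or_false] at h
      rw [h]; exact hKA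
  · intro v hv
    by_cases hA : evalB v A = true
    · exact ⟨A, List.mem_append.2 (Or.inr (by simp)), hA⟩
    obtain ⟨E', hE', hEv⟩ := hval v hv
    refine ⟨E', List.mem_append.2 (Or.inl (mem_delF.2 ⟨hE', ?_⟩)), hEv⟩
    intro hEeq
    rw [hEeq, hE] at hEv
    rw [Bool.not_eq_true] at hA
    simp [evalB, hA] at hEv

lemma case_disjR {N : ℕ} {Γ : List (ℕ × Formula)} {Δ : List Formula} {C : Formula}
    {T MP : List (ℕ × Formula)}
    (IH : ∀ M, M < N → MainStmt M)
    (hsz : lwt Γ + dwt Δ ≤ N)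
    (hΓMP : ∀ x ∈ Γ, x ∈ MP)
    (hMPT : ∀ x ∈ MP, x ∈ T)
    (hfunc : ∀ ℓ F F', (ℓ, F) ∈ T → (ℓ, F') ∈ T → F = F')
    (hK : ∀ E ∈ Δ, Kont T MP E C)
    (hval : ∀ v : ℕ → Bool,
      (∀ x ∈ Γ, evalB v x.2 = true) → ∃ E ∈ Δ, evalB v E = true)
    (A B : Formula) (hm : Formula.disj A B ∈ Δ) :
    ∃ d : PT, Outp T MP d C := by
  classical
  set E := Formula.disj A B with hE
  -- continuation for A via ∨I₁
  have hKA : Kont T MP A C := by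
    intro ℓ' hcond'
    set ℓs := max (mxl T) ℓ' + 1 with hℓs
    have hfreshs : ∀ F, (ℓs, F) ∉ T := fun F => fresh_not_mem (by omega)
    obtain ⟨r, hwr, hmfr, hmsr, hcr, hor, holmr⟩ :=
      hK _ hm ℓs (fun F hF => absurd hF (hfreshs F))
    by_cases hmr : (ℓs, E) ∈ r.openAss
    rotate_left
    · refine ⟨r, hwr, hmfr, hmsr, hcr, fun x hx => ?_, holmr⟩
      rcases hor x hx with h | h
      · exact Or.inl h
      · rw [h] at hx; exact absurd hx hmr
    refine ⟨PT.orI₁ ℓs A B (PT.ass ℓ' A) r,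
      ⟨trivial, hwr, rfl, ?_, hmr⟩, ?_, ?_, ?_, ?_, ?_⟩
    · intro F hF
      rcases hor _ hF with h | h
      · exact absurd h (hfreshs F)
      · simp only [Prod.mk.injEq] at h; exact h.2
    · intro h
      simp only [hasMaxFormula] at h
      rcases h with h | h | h
      · exact h
      · exact hmfr h
      · exact absurd (hMPT _ (holmr _ _ h)) (hfreshs _)
    · intro h
      simp only [hasMaxSegment] at h
      rcases h with h | h
      · simp only [hasMaxSegment] at h
      · exact hmsr h
    · show r.concl = C
      exact hcr
    · intro x hx
      simp only [openAss, Multiset.mem_add, Multiset.mem_filter,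
        Multiset.mem_singleton] at hx
      rcases hx with hx | ⟨hx, hxs⟩
      · rw [hx]; exact Or.inr rfl
      · rcases hor _ hx with h | h
        · exact Or.inl h
        · exact absurd (by rw [h]) hxs
    · intro ℓ'' G hg
      simp only [openLeafMajor] at hg
      rcases hg with hg | ⟨hg, _⟩
      · simp only [openLeafMajor] at hg
      · exact holmr _ _ hg
  -- continuation for B via ∨I₂
  have hKB : Kont T MP B C := by
    intro ℓ' hcond'
    set ℓs := max (mxl T) ℓ' + 1 with hℓs
    have hfreshs : ∀ F, (ℓs, F) ∉ T := fun F => fresh_not_mem (by omega)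
    obtain ⟨r, hwr, hmfr, hmsr, hcr, hor, holmr⟩ :=
      hK _ hm ℓs (fun F hF => absurd hF (hfreshs F))
    by_cases hmr : (ℓs, E) ∈ r.openAss
    rotate_left
    · refine ⟨r, hwr, hmfr, hmsr, hcr, fun x hx => ?_, holmr⟩
      rcases hor x hx with h | h
      · exact Or.inl h
      · rw [h] at hx; exact absurd hx hmr
    refine ⟨PT.orI₂ ℓs A B (PT.ass ℓ' B) r,
      ⟨trivial, hwr, rfl, ?_, hmr⟩, ?_, ?_, ?_, ?_, ?_⟩
    · intro F hF
      rcases hor _ hF with h | h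
      · exact absurd h (hfreshs F)
      · simp only [Prod.mk.injEq] at h; exact h.2
    · intro h
      simp only [hasMaxFormula] at h
      rcases h with h | h | h
      · exact h
      · exact hmfr h
      · exact absurd (hMPT _ (holmr _ _ h)) (hfreshs _)
    · intro h
      simp only [hasMaxSegment] at h
      rcases h with h | h
      · simp only [hasMaxSegment] at h
      · exact hmsr h
    · show r.concl = C
      exact hcr
    · intro x hx
      simp only [openAss, Multiset.mem_add, Multiset.mem_filter,
        Multiset.mem_singleton] at hx
      rcases hx with hx | ⟨hx, hxs⟩
      · rw [hx]; exact Or.inr rfl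
      · rcases hor _ hx with h | h
        · exact Or.inl h
        · exact absurd (by rw [h]) hxs
    · intro ℓ'' G hg
      simp only [openLeafMajor] at hg
      rcases hg with hg | ⟨hg, _⟩
      · simp only [openLeafMajor] at hg
      · exact holmr _ _ hg
  have hlt : lwt Γ + dwt (delF Δ E ++ [A, B]) < N := by
    have h1 := dwt_delF (E := E) hm
    have h2 : wt E = wt A + wt B + 1 := by simp [hE, wt]
    have h5 := dwt_append (delF Δ E) [A, B]
    have h6 : dwt [A, B] = wt A + wt B := by simp [dwt]
    omega
  refine IH _ hlt Γ (delF Δ E ++ [A, B]) C T MP le_rfl hΓMP hMPT hfunc ?_ ?_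
  · intro E' hE'
    rcases List.mem_append.1 hE' with h | h
    · exact hK E' (mem_delF.1 h).1
    · simp only [List.mem_cons, List.not_mem_nil, or_false] at h
      rcases h with h | h
      · rw [h]; exact hKA
      · rw [h]; exact hKB
  · intro v hv
    by_cases hA : evalB v A = true
    · exact ⟨A, List.mem_append.2 (Or.inr (by simp)), hA⟩
    by_cases hB : evalB v B = true
    · exact ⟨B, List.mem_append.2 (Or.inr (by simp)), hB⟩
    obtain ⟨E', hE', hEv⟩ := hval v hv
    refine ⟨E', List.mem_append.2 (Or.inl (mem_delF.2 ⟨hE', ?_⟩)), hEv⟩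
    intro hEeq
    rw [hEeq, hE] at hEv
    rw [Bool.not_eq_true] at hA hB
    simp [evalB, hA, hB] at hEv

lemma case_impR {N : ℕ} {Γ : List (ℕ × Formula)} {Δ : List Formula} {C : Formula}
    {T MP : List (ℕ × Formula)}
    (IH : ∀ M, M < N → MainStmt M)
    (hsz : lwt Γ + dwt Δ ≤ N)
    (hΓMP : ∀ x ∈ Γ, x ∈ MP)
    (hMPT : ∀ x ∈ MP, x ∈ T)
    (hfunc : ∀ ℓ F F', (ℓ, F) ∈ T → (ℓ, F') ∈ T → F = F')
    (hK : ∀ E ∈ Δ, Kont T MP E C)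
    (hval : ∀ v : ℕ → Bool,
      (∀ x ∈ Γ, evalB v x.2 = true) → ∃ E ∈ Δ, evalB v E = true)
    (A B : Formula) (hm : Formula.imp A B ∈ Δ) :
    ∃ d : PT, Outp T MP d C := by
  classical
  set E := Formula.imp A B with hE
  set ℓA := mxl T + 1 with hℓA
  set ℓAB := mxl T + 2 with hℓAB
  have hfreshA : ∀ F, (ℓA, F) ∉ T := fun F => fresh_not_mem (by omega)
  have hfreshAB : ∀ F, (ℓAB, F) ∉ T := fun F => fresh_not_mem (by omega)
  obtain ⟨q, hwq, hmfq, hmsq, hcq, hoq, holmq⟩ :=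
    hK _ hm ℓAB (fun F hF => absurd hF (hfreshAB F))
  by_cases hmemq : (ℓAB, E) ∈ q.openAss
  rotate_left
  · refine ⟨q, hwq, hmfq, hmsq, hcq, fun x hx => ?_, holmq⟩
    rcases hoq x hx with h | h
    · exact h
    · rw [h] at hx; exact absurd hx hmemq
  set T' := T ++ [(ℓA, A)] with hT'
  set MP' := MP ++ [(ℓA, A)] with hMP'
  have hTT' : ∀ x ∈ T, x ∈ T' := fun x hx => List.mem_append.2 (Or.inl hx)
  have hT1mem : ∀ x, x ∈ T' → x ∈ T ∨ x = (ℓA, A) := by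
    intro x hx
    rcases List.mem_append.1 hx with h | h
    · exact Or.inl h
    · simp only [List.mem_cons, List.not_mem_nil, or_false] at h; exact Or.inr h
  -- continuation for B (in the extended context)
  have hKB : Kont T' MP' B C := by
    intro ℓ' hcond'
    set ℓs := max (mxl T') ℓ' + 1 with hℓs
    have hfreshs : ∀ F, (ℓs, F) ∉ T' := fun F => fresh_not_mem (by omega)
    have hsne : ℓs ≠ ℓ' := by omega
    obtain ⟨r, hwr, hmfr, hmsr, hcr, hor, holmr⟩ :=
      hK _ hm ℓs (fun F hF => absurd (hTT' _ hF) (hfreshs F))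
    by_cases hmr : (ℓs, E) ∈ r.openAss
    rotate_left
    · refine ⟨r, hwr, hmfr, hmsr, hcr, fun x hx => ?_, fun ℓ'' G hg =>
        List.mem_append.2 (Or.inl (holmr _ _ hg))⟩
      rcases hor x hx with h | h
      · exact Or.inl (hTT' _ h)
      · rw [h] at hx; exact absurd hx hmr
    refine ⟨PT.impI ℓs A B (PT.ass ℓ' B) r,
      ⟨trivial, hwr, rfl, ?_, hmr⟩, ?_, ?_, ?_, ?_, ?_⟩
    · intro F hF
      rcases hor _ hF with h | h
      · exact absurd (hTT' _ h) (hfreshs F)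
      · simp only [Prod.mk.injEq] at h; exact h.2
    · intro h
      simp only [hasMaxFormula] at h
      rcases h with h | h | h
      · exact h
      · exact hmfr h
      · exact absurd (hTT' _ (hMPT _ (holmr _ _ h))) (hfreshs _)
    · intro h
      simp only [hasMaxSegment] at h
      rcases h with h | h
      · simp only [hasMaxSegment] at h
      · exact hmsr h
    · show r.concl = C
      exact hcr
    · intro x hx
      simp only [openAss, Multiset.mem_add, Multiset.mem_filter,
        Multiset.mem_singleton] at hx
      rcases hx with hx | ⟨hx, hxs⟩
      · rw [hx]; exact Or.inr rfl
      · rcases hor _ hx with h | h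
        · exact Or.inl (hTT' _ h)
        · exact absurd (by rw [h]) hxs
    · intro ℓ'' G hg
      simp only [openLeafMajor] at hg
      rcases hg with hg | ⟨hg, _⟩
      · simp only [openLeafMajor] at hg
      · exact List.mem_append.2 (Or.inl (holmr _ _ hg))
  have hlt : lwt (Γ ++ [(ℓA, A)]) + dwt (delF Δ E ++ [B]) < N := by
    have h1 := dwt_delF (E := E) hm
    have h2 : wt E = wt A + wt B + 1 := by simp [hE, wt]
    have h3 := lwt_append Γ [(ℓA, A)]
    have h4 : lwt [(ℓA, A)] = wt A := by simp [lwt]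
    have h5 := dwt_append (delF Δ E) [B]
    have h6 : dwt [B] = wt B := by simp [dwt]
    omega
  obtain ⟨d₁, hw1, hmf1, hms1, hc1, ho1, holm1⟩ :=
    IH _ hlt (Γ ++ [(ℓA, A)]) (delF Δ E ++ [B]) C T' MP' le_rfl
      (by
        intro x hx
        rcases List.mem_append.1 hx with h | h
        · exact List.mem_append.2 (Or.inl (hΓMP _ h))
        · exact List.mem_append.2 (Or.inr h))
      (by
        intro x hx
        rcases List.mem_append.1 hx with h | h
        · exact List.mem_append.2 (Or.inl (hMPT _ h))
        · exact List.mem_append.2 (Or.inr h))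
      (by
        intro ℓ F F' h1 h2
        rcases List.mem_append.1 h1 with h1 | h1 <;>
          rcases List.mem_append.1 h2 with h2 | h2 <;>
          (try simp only [List.mem_cons, List.not_mem_nil, or_false,
            Prod.mk.injEq] at h1 h2)
        · exact hfunc ℓ F F' h1 h2
        · exact absurd h1 (by rw [h2.1]; exact hfreshA F)
        · exact absurd h2 (by rw [h1.1]; exact hfreshA F')
        · rw [h1.2, h2.2])
      (by
        intro E' hE'
        rcases List.mem_append.1 hE' with h | h
        · exact kont_mono hTT' (fun x hx => List.mem_append.2 (Or.inl hx))
            (hK E' (mem_delF.1 h).1)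
        · simp only [List.mem_cons, List.not_mem_nil, or_false] at h
          rw [h]; exact hKB)
      (by
        intro v hv
        have hA : evalB v A = true := hv (ℓA, A) (List.mem_append.2 (Or.inr (by simp)))
        by_cases hB : evalB v B = true
        · exact ⟨B, List.mem_append.2 (Or.inr (by simp)), hB⟩
        · obtain ⟨E', hE', hEv⟩ := hval v
            (fun x hx => hv x (List.mem_append.2 (Or.inl hx)))
          refine ⟨E', List.mem_append.2 (Or.inl (mem_delF.2 ⟨hE', ?_⟩)), hEv⟩
          intro hEeq
          rw [hEeq, hE] at hEv
          rw [Bool.not_eq_true] at hB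
          simp [evalB, hA, hB] at hEv)
  by_cases hmem1 : (ℓA, A) ∈ d₁.openAss
  rotate_left
  · refine ⟨d₁, outp_drop ⟨hw1, hmf1, hms1, hc1, ho1, holm1⟩ ?_⟩
    intro y hy
    simp only [List.mem_cons, List.not_mem_nil, or_false] at hy
    rw [hy]; exact hmem1
  refine ⟨PT.tr ℓA ℓAB A B d₁ q,
    ⟨hw1, hwq, hc1.trans hcq.symm, ?_, hmem1, ?_, hmemq⟩, ?_, ?_, ?_, ?_, ?_⟩
  · intro F hF
    rcases hT1mem _ (ho1 _ hF) with h | h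
    · exact absurd h (hfreshA F)
    · simp only [Prod.mk.injEq] at h; exact h.2
  · intro F hF
    rcases hoq _ hF with h | h
    · exact absurd h (hfreshAB F)
    · simp only [Prod.mk.injEq] at h; exact h.2
  · intro h
    simp only [hasMaxFormula] at h
    rcases h with h | h | h
    · exact hmf1 h
    · exact hmfq h
    · exact absurd (hMPT _ (holmq _ _ h)) (hfreshAB _)
  · intro h
    simp only [hasMaxSegment] at h
    rcases h with h | h
    · exact hms1 h
    · exact hmsq h
  · show d₁.concl = C
    exact hc1
  · intro x hx
    simp only [openAss, Multiset.mem_add, Multiset.mem_filter] at hx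
    rcases hx with ⟨hx, hxA⟩ | ⟨hx, hxAB⟩
    · rcases hT1mem _ (ho1 _ hx) with h | h
      · exact h
      · exact absurd (by rw [h]) hxA
    · rcases hoq _ hx with h | h
      · exact h
      · exact absurd (by rw [h]) hxAB
  · intro ℓ G' hg
    simp only [openLeafMajor] at hg
    rcases hg with ⟨hg, hgA⟩ | ⟨hg, hgAB⟩
    · rcases List.mem_append.1 (holm1 _ _ hg) with h | h
      · exact h
      · simp only [List.mem_cons, List.not_mem_nil, or_false, Prod.mk.injEq] at h
        exact absurd h.1 hgA
    · exact holmq _ _ hg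

lemma case_negR {N : ℕ} {Γ : List (ℕ × Formula)} {Δ : List Formula} {C : Formula}
    {T MP : List (ℕ × Formula)}
    (IH : ∀ M, M < N → MainStmt M)
    (hsz : lwt Γ + dwt Δ ≤ N)
    (hΓMP : ∀ x ∈ Γ, x ∈ MP)
    (hMPT : ∀ x ∈ MP, x ∈ T)
    (hfunc : ∀ ℓ F F', (ℓ, F) ∈ T → (ℓ, F') ∈ T → F = F')
    (hK : ∀ E ∈ Δ, Kont T MP E C)
    (hval : ∀ v : ℕ → Bool,
      (∀ x ∈ Γ, evalB v x.2 = true) → ∃ E ∈ Δ, evalB v E = true)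
    (A : Formula) (hm : Formula.neg A ∈ Δ) :
    ∃ d : PT, Outp T MP d C := by
  classical
  set ℓA := mxl T + 1 with hℓA
  set ℓnA := mxl T + 2 with hℓnA
  have hfreshA : ∀ F, (ℓA, F) ∉ T := fun F => fresh_not_mem (by omega)
  have hfreshnA : ∀ F, (ℓnA, F) ∉ T := fun F => fresh_not_mem (by omega)
  obtain ⟨q, hwq, hmfq, hmsq, hcq, hoq, holmq⟩ :=
    hK _ hm ℓnA (fun F hF => absurd hF (hfreshnA F))
  by_cases hmemq : (ℓnA, Formula.neg A) ∈ q.openAss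
  rotate_left
  · refine ⟨q, hwq, hmfq, hmsq, hcq, fun x hx => ?_, holmq⟩
    rcases hoq x hx with h | h
    · exact h
    · rw [h] at hx; exact absurd hx hmemq
  have hlt : lwt (Γ ++ [(ℓA, A)]) + dwt (delF Δ (Formula.neg A)) < N := by
    have h1 := dwt_delF (E := Formula.neg A) hm
    have h2 : wt (Formula.neg A) = wt A + 1 := by simp [wt]
    have h3 := lwt_append Γ [(ℓA, A)]
    have h4 : lwt [(ℓA, A)] = wt A := by simp [lwt]
    omega
  obtain ⟨d₁, hw1, hmf1, hms1, hc1, ho1, holm1⟩ :=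
    IH _ hlt (Γ ++ [(ℓA, A)]) (delF Δ (Formula.neg A)) C (T ++ [(ℓA, A)])
      (MP ++ [(ℓA, A)]) le_rfl
      (by
        intro x hx
        rcases List.mem_append.1 hx with h | h
        · exact List.mem_append.2 (Or.inl (hΓMP _ h))
        · exact List.mem_append.2 (Or.inr h))
      (by
        intro x hx
        rcases List.mem_append.1 hx with h | h
        · exact List.mem_append.2 (Or.inl (hMPT _ h))
        · exact List.mem_append.2 (Or.inr h))
      (by
        intro ℓ F F' h1 h2
        rcases List.mem_append.1 h1 with h1 | h1 <;>
          rcases List.mem_append.1 h2 with h2 | h2 <;>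
          (try simp only [List.mem_cons, List.not_mem_nil, or_false,
            Prod.mk.injEq] at h1 h2)
        · exact hfunc ℓ F F' h1 h2
        · exact absurd h1 (by rw [h2.1]; exact hfreshA F)
        · exact absurd h2 (by rw [h1.1]; exact hfreshA F')
        · rw [h1.2, h2.2])
      (fun E hE => kont_mono (fun x hx => List.mem_append.2 (Or.inl hx))
        (fun x hx => List.mem_append.2 (Or.inl hx)) (hK E (mem_delF.1 hE).1))
      (by
        intro v hv
        have hA : evalB v A = true := hv (ℓA, A) (List.mem_append.2 (Or.inr (by simp)))
        obtain ⟨E, hE, hEv⟩ := hval v (fun x hx => hv x (List.mem_append.2 (Or.inl hx)))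
        refine ⟨E, mem_delF.2 ⟨hE, ?_⟩, hEv⟩
        intro hEeq
        rw [hEeq] at hEv
        simp [evalB, hA] at hEv)
  by_cases hmem1 : (ℓA, A) ∈ d₁.openAss
  rotate_left
  · refine ⟨d₁, outp_drop ⟨hw1, hmf1, hms1, hc1, ho1, holm1⟩ ?_⟩
    intro y hy
    simp only [List.mem_cons, List.not_mem_nil, or_false] at hy
    rw [hy]; exact hmem1
  have hT1mem : ∀ x, x ∈ T ++ [(ℓA, A)] → x ∈ T ∨ x = (ℓA, A) := by
    intro x hx
    rcases List.mem_append.1 hx with h | h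
    · exact Or.inl h
    · simp only [List.mem_cons, List.not_mem_nil, or_false] at h; exact Or.inr h
  refine ⟨PT.negI ℓA ℓnA A d₁ q,
    ⟨hw1, hwq, hc1.trans hcq.symm, ?_, hmem1, ?_, hmemq⟩, ?_, ?_, ?_, ?_, ?_⟩
  · intro F hF
    rcases hT1mem _ (ho1 _ hF) with h | h
    · exact absurd h (hfreshA F)
    · simp only [Prod.mk.injEq] at h; exact h.2
  · intro F hF
    rcases hoq _ hF with h | h
    · exact absurd h (hfreshnA F)
    · simp only [Prod.mk.injEq] at h; exact h.2
  · intro h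
    simp only [hasMaxFormula] at h
    rcases h with h | h | h
    · exact hmf1 h
    · exact hmfq h
    · exact absurd (hMPT _ (holmq _ _ h)) (hfreshnA _)
  · intro h
    simp only [hasMaxSegment] at h
    rcases h with h | h
    · exact hms1 h
    · exact hmsq h
  · show d₁.concl = C
    exact hc1
  · intro x hx
    simp only [openAss, Multiset.mem_add, Multiset.mem_filter] at hx
    rcases hx with ⟨hx, hxA⟩ | ⟨hx, hxnA⟩
    · rcases hT1mem _ (ho1 _ hx) with h | h
      · exact h
      · exact absurd (by rw [h]) hxA
    · rcases hoq _ hx with h | h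
      · exact h
      · exact absurd (by rw [h]) hxnA
  · intro ℓ G' hg
    simp only [openLeafMajor] at hg
    rcases hg with ⟨hg, hgA⟩ | ⟨hg, hgnA⟩
    · rcases List.mem_append.1 (holm1 _ _ hg) with h | h
      · exact h
      · simp only [List.mem_cons, List.not_mem_nil, or_false, Prod.mk.injEq] at h
        exact absurd h.1 hgA
    · exact holmq _ _ hg



theorem mainthm : ∀ N, MainStmt N := by
  intro N
  induction N using Nat.strong_induction_on with
  | _ N IH =>
    intro Γ Δ C T MP hsz hΓMP hMPT hfunc hK hval
    cases hGf : Γ.find? (fun x => !x.2.isAtomB) with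
    | some y =>
        obtain ⟨m, G⟩ := y
        have hmem : (m, G) ∈ Γ := List.mem_of_find?_eq_some hGf
        have hna : isAtomB G = false := by
          have := List.find?_some hGf
          simpa using this
        cases G with
        | atom n => simp [isAtomB] at hna
        | conj A B => exact case_conjL IH hsz hΓMP hMPT hfunc hK hval m A B hmem
        | disj A B => exact case_disjL IH hsz hΓMP hMPT hfunc hK hval m A B hmem
        | imp A B => exact case_impL IH hsz hΓMP hMPT hfunc hK hval m A B hmem
        | neg A => exact case_negL IH hsz hΓMP hMPT hfunc hK hval m A hmem
    | none =>
        have hΓa : ∀ x ∈ Γ, ∃ n, x.2 = Formula.atom n := by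
          intro x hx
          have := List.find?_eq_none.1 hGf x hx
          simp only [Bool.not_eq_true'] at this
          exact isAtomB_iff.1 (by simpa using this)
        cases hDf : Δ.find? (fun E => !E.isAtomB) with
        | some E =>
            have hmem : E ∈ Δ := List.mem_of_find?_eq_some hDf
            have hna : isAtomB E = false := by
              have := List.find?_some hDf
              simpa using this
            cases E with
            | atom n => simp [isAtomB] at hna
            | conj A B => exact case_conjR IH hsz hΓMP hMPT hfunc hK hval A B hmem
            | disj A B => exact case_disjR IH hsz hΓMP hMPT hfunc hK hval A B hmem
            | imp A B => exact case_impR IH hsz hΓMP hMPT hfunc hK hval A B hmem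
            | neg A => exact case_negR IH hsz hΓMP hMPT hfunc hK hval A hmem
        | none =>
            have hΔa : ∀ E ∈ Δ, ∃ n, E = Formula.atom n := by
              intro E hE
              have := List.find?_eq_none.1 hDf E hE
              simp only [Bool.not_eq_true'] at this
              exact isAtomB_iff.1 (by simpa using this)
            exact case_atomic IH hsz hΓMP hMPT hfunc hK hval hΓa hΔa

end PT

namespace PT

open Formula

/-- Labelling a list of formulas with consecutive labels starting at `n`. -/
def lab : ℕ → List Formula → List (ℕ × Formula)
  | _, [] => []
  | n, F :: l => (n, F) :: lab (n + 1) l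

lemma lab_mem_ge : ∀ (l : List Formula) (n : ℕ) (x : ℕ × Formula),
    x ∈ lab n l → n ≤ x.1 ∧ x.2 ∈ l := by
  intro l
  induction l with
  | nil => intro n x h; simp [lab] at h
  | cons F l ih =>
      intro n x h
      simp only [lab, List.mem_cons] at h
      rcases h with h | h
      · rw [h]; simp
      · obtain ⟨h1, h2⟩ := ih (n + 1) x h
        exact ⟨by omega, List.mem_cons.2 (Or.inr h2)⟩

lemma lab_func : ∀ (l : List Formula) (n ℓ : ℕ) (F F' : Formula),
    (ℓ, F) ∈ lab n l → (ℓ, F') ∈ lab n l → F = F' := by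
  intro l
  induction l with
  | nil => intro n ℓ F F' h; simp [lab] at h
  | cons G l ih =>
      intro n ℓ F F' h1 h2
      simp only [lab, List.mem_cons] at h1 h2
      rcases h1 with h1 | h1 <;> rcases h2 with h2 | h2 <;>
        (try simp only [Prod.mk.injEq] at h1 h2)
      · rw [h1.2, h2.2]
      · have := (lab_mem_ge l (n + 1) _ h2).1
        simp only [h1.1] at this; omega
      · have := (lab_mem_ge l (n + 1) _ h1).1
        simp only [h2.1] at this; omega
      · exact ih (n + 1) ℓ F F' h1 h2

lemma lab_mem_of : ∀ (l : List Formula) (n : ℕ) (F : Formula),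
    F ∈ l → ∃ ℓ, (ℓ, F) ∈ lab n l := by
  intro l
  induction l with
  | nil => intro n F h; simp at h
  | cons G l ih =>
      intro n F h
      rcases List.mem_cons.1 h with h | h
      · exact ⟨n, by simp [lab, h]⟩
      · obtain ⟨ℓ, hℓ⟩ := ih (n + 1) F h
        exact ⟨ℓ, by simp [lab, hℓ]⟩

end PT

/-- Every deduction in the system C can be converted into a
deduction in normal form: for every deduction of a formula `A` from
assumptions `Γ` there is a deduction of `A` from assumptions among `Γ` that
contains no maximal formulas and no maximal segments. -/
theorem normalisation (d : PT) (hd : d.wf) :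
    ∃ d' : PT, d'.wf ∧ d'.concl = d.concl ∧ d'.assumptions ⊆ d.assumptions ∧
      d'.normal := by
  classical
  set L : List Formula := d.openAss.toList.map Prod.snd with hL
  set T : List (ℕ × Formula) := PT.lab 0 L with hT
  have hKC : PT.Kont T T d.concl d.concl := by
    intro ℓ hcond
    refine ⟨PT.ass ℓ d.concl, trivial, ?_, ?_, rfl, ?_, ?_⟩
    · intro h; simp only [PT.hasMaxFormula] at h
    · intro h; simp only [PT.hasMaxSegment] at h
    · intro x hx
      simp only [PT.openAss, Multiset.mem_singleton] at hx
      exact Or.inr hx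
    · intro ℓ' G hg
      simp only [PT.openLeafMajor] at hg
  have hval : ∀ v : ℕ → Bool,
      (∀ x ∈ T, Formula.evalB v x.2 = true) →
      ∃ E ∈ [d.concl], Formula.evalB v E = true := by
    intro v hv
    refine ⟨d.concl, by simp, PT.sound d hd v ?_⟩
    intro x hx
    have hxL : x.2 ∈ L := by
      rw [hL]
      exact List.mem_map.2 ⟨x, Multiset.mem_toList.2 hx, rfl⟩
    obtain ⟨ℓ, hℓ⟩ := PT.lab_mem_of L 0 x.2 hxL
    exact hv (ℓ, x.2) hℓ
  obtain ⟨d', hw', hmf', hms', hc', ho', _⟩ :=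
    PT.mainthm (PT.lwt T + PT.dwt [d.concl]) T [d.concl] d.concl T T le_rfl
      (fun x hx => hx) (fun x hx => hx)
      (fun ℓ F F' h1 h2 => PT.lab_func L 0 ℓ F F' h1 h2)
      (by
        intro E hE
        simp only [List.mem_cons, List.not_mem_nil, or_false] at hE
        rw [hE]; exact hKC)
      hval
  refine ⟨d', hw', hc', ?_, hmf', hms'⟩
  intro F hF
  obtain ⟨ℓ, hℓ⟩ := hF
  have hx := ho' _ hℓ
  have hFL : F ∈ L := ((PT.lab_mem_ge L 0 _ hx).2 : (ℓ, F).2 ∈ L)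
  rw [hL] at hFL
  obtain ⟨y, hy, hy2⟩ := List.mem_map.1 hFL
  exact ⟨y.1, by rw [← hy2] at *; exact Multiset.mem_toList.1 (by simpa using hy)⟩
end

section
/- In a deduction in normal form in the system C, on any branch, every formula occurrence that is the major premise of an elimination rule precedes every formula occurrence that is a major assumption discharged by an introduction rule. -/
namespace PT

/-- The immediate subdeductions of a deduction, in the order in which the
constructor lists them (major premise first for eliminations). -/
def children : PT → List PT
  | .ass _ _ => []
  | .andI _ _ _ p q r => [p, q, r]
  | .andE _ _ _ _ p q => [p, q]
  | .orI₁ _ _ _ p q => [p, q]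
  | .orI₂ _ _ _ p q => [p, q]
  | .orE _ _ _ _ p q r => [p, q, r]
  | .impI _ _ _ p q => [p, q]
  | .tr _ _ _ _ p q => [p, q]
  | .impE _ _ _ p q r => [p, q, r]
  | .negI _ _ _ p q => [p, q]
  | .negE _ _ p q => [p, q]

/-- The subdeduction at a position (a path of child indices from the root). -/
def subtreeAt : List ℕ → PT → Option PT
  | [], d => some d
  | i :: p, d => (d.children[i]?).bind fun c => subtreeAt p c

/-- The node of `d` sitting at position `q`. -/
def nodeAt (d : PT) (q : List ℕ) : Option PT := subtreeAt q d

/-- The discharges effected by the last rule application of a deduction, as a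
list of triples `(k, ℓ, F)`: assumptions of class `ℓ`, of form `F`, are
discharged above the `k`-th immediate subdeduction. -/
def discharges : PT → List (ℕ × ℕ × Formula)
  | .ass _ _ => []
  | .andI ℓ A B _ _ _ => [(2, ℓ, Formula.conj A B)]
  | .andE ℓA ℓB A B _ _ => [(1, ℓA, A), (1, ℓB, B)]
  | .orI₁ ℓ A B _ _ => [(1, ℓ, Formula.disj A B)]
  | .orI₂ ℓ A B _ _ => [(1, ℓ, Formula.disj A B)]
  | .orE ℓA ℓB A B _ _ _ => [(1, ℓA, A), (2, ℓB, B)]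
  | .impI ℓ A B _ _ => [(1, ℓ, Formula.imp A B)]
  | .tr ℓA ℓAB A B _ _ => [(0, ℓA, A), (1, ℓAB, Formula.imp A B)]
  | .impE ℓ _ B _ _ _ => [(2, ℓ, B)]
  | .negI ℓA ℓnA A _ _ => [(0, ℓA, A), (1, ℓnA, Formula.neg A)]
  | .negE _ _ _ _ => []

/-- The discharge of the *major assumption* of a general introduction rule
(the discharged formula with the governed connective as main operator). -/
def majorDischarges : PT → List (ℕ × ℕ × Formula)
  | .andI ℓ A B _ _ _ => [(2, ℓ, Formula.conj A B)]
  | .orI₁ ℓ A B _ _ => [(1, ℓ, Formula.disj A B)]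
  | .orI₂ ℓ A B _ _ => [(1, ℓ, Formula.disj A B)]
  | .impI ℓ A B _ _ => [(1, ℓ, Formula.imp A B)]
  | .tr _ ℓAB A B _ _ => [(1, ℓAB, Formula.imp A B)]
  | .negI _ ℓnA A _ _ => [(1, ℓnA, Formula.neg A)]
  | _ => []

/-- Indices of the subdeductions concluding the *specific premises* of a rule
(`TR` and `¬I` have none). -/
def specificIdx : PT → List ℕ
  | .andI _ _ _ _ _ _ => [0, 1]
  | .orI₁ _ _ _ _ _ => [0]
  | .orI₂ _ _ _ _ _ => [0]
  | .impI _ _ _ _ _ => [0]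
  | _ => []

/-- Indices of the subdeductions concluding the *arbitrary premises* of a rule. -/
def arbIdx : PT → List ℕ
  | .andI _ _ _ _ _ _ => [2]
  | .andE _ _ _ _ _ _ => [1]
  | .orI₁ _ _ _ _ _ => [1]
  | .orI₂ _ _ _ _ _ => [1]
  | .orE _ _ _ _ _ _ _ => [1, 2]
  | .impI _ _ _ _ _ => [1]
  | .tr _ _ _ _ _ _ => [0, 1]
  | .impE _ _ _ _ _ _ => [2]
  | .negI _ _ _ _ _ => [0, 1]
  | _ => []

/-- The last rule application is an elimination rule. -/
def isElim : PT → Prop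
  | .andE _ _ _ _ _ _ => True
  | .orE _ _ _ _ _ _ _ => True
  | .impE _ _ _ _ _ _ => True
  | .negE _ _ _ _ => True
  | _ => False

/-- The last rule application is an introduction rule. -/
def isIntro : PT → Prop
  | .andI _ _ _ _ _ _ => True
  | .orI₁ _ _ _ _ _ => True
  | .orI₂ _ _ _ _ _ => True
  | .impI _ _ _ _ _ => True
  | .tr _ _ _ _ _ _ => True
  | .negI _ _ _ _ _ => True
  | _ => False

/-- The last rule application is an introduction rule other than `¬I` or `TR`. -/
def isIntroNotTRNegI : PT → Prop
  | .andI _ _ _ _ _ _ => True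
  | .orI₁ _ _ _ _ _ => True
  | .orI₂ _ _ _ _ _ => True
  | .impI _ _ _ _ _ => True
  | _ => False

def isNegE : PT → Prop
  | .negE _ _ _ _ => True
  | _ => False

def isImpE : PT → Prop
  | .impE _ _ _ _ _ _ => True
  | _ => False

/-- `openLeafPath p d ℓ F`: the node of `d` at position `p` is the assumption
occurrence `ass ℓ F`, and this particular occurrence is still open
(undischarged) at the root of `d`. -/
def openLeafPath : List ℕ → PT → ℕ → Formula → Prop
  | [], d, ℓ, F => d = .ass ℓ F
  | i :: p, d, ℓ, F =>
      (∃ c, d.children[i]? = some c ∧ openLeafPath p c ℓ F) ∧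
      ∀ G, (i, ℓ, G) ∉ d.discharges

/-- The assumption occurrence of `d` at position `pos` is discharged by the
rule application at position `q`. -/
def DischargedBy (d : PT) (pos q : List ℕ) : Prop :=
  ∃ e k ℓ F rest c, d.nodeAt q = some e ∧ (k, ℓ, F) ∈ e.discharges ∧
    pos = q ++ k :: rest ∧ e.children[k]? = some c ∧ openLeafPath rest c ℓ F

/-- The assumption occurrence of `d` at position `pos` is the major assumption
discharged by the (introduction) rule application at position `q`. -/
def MajorDischargedBy (d : PT) (pos q : List ℕ) : Prop :=
  ∃ e k ℓ F rest c, d.nodeAt q = some e ∧ (k, ℓ, F) ∈ e.majorDischarges ∧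
    pos = q ++ k :: rest ∧ e.children[k]? = some c ∧ openLeafPath rest c ℓ F

/-- One step of a branch (Definition of branches): from a formula occurrence at
position `p` to the next occurrence at position `p'`.  (The conclusion of the
rule application at position `q` is the occurrence at `q` itself; its premises
are the conclusions of its immediate subdeductions, at positions `q ++ [k]`.)

(i) if `p` is the major premise of an elimination rule other than `¬E`, `p'`
    is an assumption discharged by it; if `p` is the major premise of `¬E`,
    `p'` is the conclusion of the rule;
(ii) if `p` is a specific premise of an introduction rule, `p'` is a major
    assumption discharged by it;
(iii) if `p` is an arbitrary premise of a rule, `p'` is the conclusion of the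
    rule. -/
def BranchStep (d : PT) (p p' : List ℕ) : Prop :=
  (∃ q e, d.nodeAt q = some e ∧ e.isElim ∧ ¬ e.isNegE ∧ p = q ++ [0] ∧
      DischargedBy d p' q) ∨
  (∃ q e, d.nodeAt q = some e ∧ e.isNegE ∧ p = q ++ [0] ∧ p' = q) ∨
  (∃ q e k, d.nodeAt q = some e ∧ k ∈ e.specificIdx ∧ p = q ++ [k] ∧
      MajorDischargedBy d p' q) ∨
  (∃ q e k, d.nodeAt q = some e ∧ k ∈ e.arbIdx ∧ p = q ++ [k] ∧ p' = q)

/-- A branch starts with an assumption of the deduction that is neither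
discharged by an elimination rule nor the major assumption discharged by an
introduction rule other than `¬I` or `TR`. -/
def BranchStart (d : PT) (pos : List ℕ) : Prop :=
  (∃ ℓ F, d.nodeAt pos = some (.ass ℓ F)) ∧
  (¬ ∃ q e, d.nodeAt q = some e ∧ e.isElim ∧ DischargedBy d pos q) ∧
  (¬ ∃ q e, d.nodeAt q = some e ∧ e.isIntroNotTRNegI ∧ MajorDischargedBy d pos q)

/-- A branch ends with the conclusion of the deduction or with the minor
premise of `⊃E` or of `¬E`. -/
def BranchEnd (d : PT) (pos : List ℕ) : Prop :=
  pos = [] ∨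
  ∃ q e, d.nodeAt q = some e ∧ (e.isImpE ∨ e.isNegE) ∧ pos = q ++ [1]

/-- `σ` is a branch in the deduction `d`: a sequence of (positions of) formula
occurrences linked by `BranchStep`, starting and ending as prescribed. -/
def IsBranch (d : PT) (σ : List (List ℕ)) : Prop :=
  ∃ p₀ pn, σ.head? = some p₀ ∧ σ.getLast? = some pn ∧
    BranchStart d p₀ ∧ BranchEnd d pn ∧ List.Chain' (BranchStep d) σ

/-- The occurrence of `d` at position `pos` is the major premise of an
application of an elimination rule. -/
def IsElimMajorPos (d : PT) (pos : List ℕ) : Prop :=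
  ∃ q e, d.nodeAt q = some e ∧ e.isElim ∧ pos = q ++ [0]

/-- The occurrence of `d` at position `pos` is a major assumption discharged by
an application of an introduction rule. -/
def IsIntroMajorDischargedPos (d : PT) (pos : List ℕ) : Prop :=
  ∃ q e, d.nodeAt q = some e ∧ e.isIntro ∧ MajorDischargedBy d pos q

end PT

/-! Call an occurrence of a deduction an *I-part* occurrence if it is a major assumption discharged
by an introduction rule or the conclusion of a rule application. In a normal deduction no I-part
occurrence is the major premise of an elimination: in the first case it would be a maximal formula,
in the second it would end a maximal segment. So a branch step out of an I-part occurrence is never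
an elimination step: it goes from a specific premise to the major assumption of the introduction,
or from an arbitrary premise to the conclusion of the rule, and both are again I-part occurrences.
Hence, once a branch reaches a major assumption of an introduction, no major premise of an
elimination follows. -/

theorem List.IsChain.getElem_of_le {α : Type*} {R : α → α → Prop} {P : α → Prop}
    {l : List α} (hl : l.IsChain R) (hR : ∀ a b, R a b → P a → P b) {i j : ℕ}
    (hij : i ≤ j) (hj : j < l.length) (hi : P (l[i]'(hij.trans_lt hj))) : P l[j] := by
  induction j, hij using Nat.le_induction with
  | base => exact hi
  | succ j hij ih => exact hR _ _ (hl.getElem j hj) (ih (by omega) hi)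

namespace PT

lemma subtreeAt_append (a b : List ℕ) (d : PT) :
    subtreeAt (a ++ b) d = (subtreeAt a d).bind (subtreeAt b) := by
  induction a generalizing d with
  | nil => rfl
  | cons i a ih =>
    simp only [List.cons_append, subtreeAt, Option.bind_assoc]
    cases d.children[i]? <;> simp [ih]

lemma nodeAt_append_of_nodeAt {d e : PT} {q : List ℕ} (hq : d.nodeAt q = some e)
    (r : List ℕ) : d.nodeAt (q ++ r) = e.subtreeAt r := by
  rw [nodeAt, subtreeAt_append, ← nodeAt, hq, Option.bind_some]

lemma hasMaxFormula_of_mem_children {d c : PT} (h : c ∈ d.children)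
    (hc : c.hasMaxFormula) : d.hasMaxFormula := by
  cases d <;> simp only [children, List.mem_cons, List.not_mem_nil, or_false] at h <;>
    rcases h with rfl | rfl | rfl <;> simp [hasMaxFormula, hc]

lemma hasMaxSegment_of_mem_children {d c : PT} (h : c ∈ d.children)
    (hc : c.hasMaxSegment) : d.hasMaxSegment := by
  cases d <;> simp only [children, List.mem_cons, List.not_mem_nil, or_false] at h <;>
    rcases h with rfl | rfl | rfl <;> simp [hasMaxSegment, hc]

lemma normal.of_mem_children {d c : PT} (hd : d.normal) (h : c ∈ d.children) : c.normal :=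
  ⟨fun hc => hd.1 (hasMaxFormula_of_mem_children h hc),
    fun hc => hd.2 (hasMaxSegment_of_mem_children h hc)⟩

lemma normal.nodeAt {d e : PT} (hd : d.normal) {q : List ℕ} (h : d.nodeAt q = some e) :
    e.normal := by
  induction q generalizing d with
  | nil => cases h; exact hd
  | cons i q ih =>
    obtain ⟨c, hc, hsub⟩ := Option.bind_eq_some_iff.mp h
    exact ih (hd.of_mem_children (List.mem_of_getElem? hc)) hsub

lemma openLeafMajor_of_child {c c' : PT} {i ℓ : ℕ} {F : Formula}
    (hc : c.children[i]? = some c') (hnd : ∀ G, (i, ℓ, G) ∉ c.discharges)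
    (h : c'.openLeafMajor ℓ F) : c.openLeafMajor ℓ F := by
  cases c <;> rcases i with _ | _ | _ | i <;> simp_all [children, discharges, openLeafMajor, forall_and]

lemma openLeafMajor_of_openLeafPath {c t : PT} {ℓ : ℕ} {F : Formula} {p : List ℕ}
    (h : openLeafPath (p ++ [0]) c ℓ F) (ht : c.subtreeAt p = some t) (he : t.isElim) :
    c.openLeafMajor ℓ F := by
  induction p generalizing c with
  | nil =>
    obtain rfl : c = t := Option.some.inj ht
    obtain ⟨⟨c₀, hc₀, rfl⟩, -⟩ := h
    cases c <;> simp_all [isElim, children, openLeafMajor]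
  | cons i p ih =>
    obtain ⟨⟨c', hc', hpath⟩, hnd⟩ := h
    obtain ⟨c'', hc'', ht'⟩ := Option.bind_eq_some_iff.mp ht
    cases hc'.symm.trans hc''
    exact openLeafMajor_of_child hc' hnd (ih hpath ht')

lemma hasMaxFormula_of_mem_majorDischarges {e c : PT} {k ℓ : ℕ} {F : Formula}
    (hk : (k, ℓ, F) ∈ e.majorDischarges) (hc : e.children[k]? = some c)
    (h : c.openLeafMajor ℓ F) : e.hasMaxFormula := by
  cases e <;> simp only [majorDischarges, List.mem_cons, List.not_mem_nil, or_false,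
    Prod.mk.injEq] at hk <;> obtain ⟨rfl, rfl, rfl⟩ := hk <;> simp_all [children, hasMaxFormula]

lemma ne_zero_of_mem_majorDischarges {e : PT} {k ℓ : ℕ} {F : Formula}
    (hk : (k, ℓ, F) ∈ e.majorDischarges) : k ≠ 0 := by
  cases e <;> simp_all [majorDischarges]

lemma hasMaxSegment_of_isElim {e t : PT} (he : e.isElim) (ht : e.children[0]? = some t)
    (hta : ¬ t.isAss) : e.hasMaxSegment := by
  cases e <;> simp_all [isElim, children, hasMaxSegment]

lemma not_isElimMajorPos_of_majorDischargedBy {d : PT} (hn : d.normal) {pos q : List ℕ}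
    (hmd : MajorDischargedBy d pos q) : ¬ IsElimMajorPos d pos := by
  obtain ⟨e, k, ℓ, F, rest, c, hq, hk, rfl, hc, hpath⟩ := hmd
  rintro ⟨q', e', hq', he', hpos⟩
  obtain rfl | ⟨rest, x, rfl⟩ := rest.eq_nil_or_concat'
  · have hk0 : [k] = [0] := (List.append_inj' hpos rfl).2
    exact ne_zero_of_mem_majorDischarges hk (List.singleton_inj.mp hk0)
  · have hpos' : (q ++ k :: rest) ++ [x] = q' ++ [0] := by simpa using hpos
    obtain ⟨rfl, hx⟩ := List.append_inj' hpos' rfl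
    cases List.singleton_inj.mp hx
    have hsub : c.subtreeAt rest = some e' := by
      simpa [nodeAt_append_of_nodeAt hq, subtreeAt, hc] using hq'
    exact (hn.nodeAt hq).1 <| hasMaxFormula_of_mem_majorDischarges hk hc <|
      openLeafMajor_of_openLeafPath hpath hsub he'

def InIntroPart (d : PT) (p : List ℕ) : Prop :=
  IsIntroMajorDischargedPos d p ∨ ∃ t, d.nodeAt p = some t ∧ ¬ t.isAss

lemma InIntroPart.not_isElimMajorPos {d : PT} (hn : d.normal) {p : List ℕ}
    (hp : InIntroPart d p) : ¬ IsElimMajorPos d p := by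
  rintro ⟨q, e, hq, he, rfl⟩
  rcases hp with ⟨q', e', hq', -, hmd⟩ | ⟨t, ht, hta⟩
  · exact not_isElimMajorPos_of_majorDischargedBy hn hmd ⟨q, e, hq, he, rfl⟩
  · have hc : e.children[0]? = some t := by
      simpa [nodeAt_append_of_nodeAt hq, subtreeAt] using ht
    exact (hn.nodeAt hq).2 (hasMaxSegment_of_isElim he hc hta)

lemma isIntro_of_mem_specificIdx {e : PT} {k : ℕ} (h : k ∈ e.specificIdx) : e.isIntro := by
  cases e <;> simp_all [specificIdx, isIntro]

lemma not_isAss_of_mem_arbIdx {e : PT} {k : ℕ} (h : k ∈ e.arbIdx) : ¬ e.isAss := by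
  cases e <;> simp_all [arbIdx, isAss]

lemma isElim_of_isNegE {e : PT} (h : e.isNegE) : e.isElim := by
  cases e <;> simp_all [isNegE, isElim]

lemma InIntroPart.of_branchStep {d : PT} (hn : d.normal) {p p' : List ℕ}
    (hp : InIntroPart d p) (hs : BranchStep d p p') : InIntroPart d p' := by
  rcases hs with ⟨q, e, hq, he, -, rfl, -⟩ | ⟨q, e, hq, he, rfl, -⟩ |
    ⟨q, e, k, hq, hk, -, hmd⟩ | ⟨q, e, k, hq, hk, -, rfl⟩
  · exact absurd ⟨q, e, hq, he, rfl⟩ (hp.not_isElimMajorPos hn)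
  · exact absurd ⟨q, e, hq, isElim_of_isNegE he, rfl⟩ (hp.not_isElimMajorPos hn)
  · exact Or.inl ⟨q, e, hq, isIntro_of_mem_specificIdx hk, hmd⟩
  · exact Or.inr ⟨e, hq, not_isAss_of_mem_arbIdx hk⟩

end PT

theorem elim_major_precedes_intro_major_on_branch_general
    (d : PT) (hn : d.normal) (σ : List (List ℕ))
    (hσ : d.IsBranch σ) :
    ∀ (i j : ℕ) (pi pj : List ℕ), σ[i]? = some pi → σ[j]? = some pj →
      d.IsElimMajorPos pi → d.IsIntroMajorDischargedPos pj → i < j := by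
  intro i j pi pj hi hj helim hintro
  by_contra! hji
  obtain ⟨-, -, -, -, -, -, hchain⟩ := hσ
  obtain ⟨hi', rfl⟩ := List.getElem?_eq_some_iff.mp hi
  obtain ⟨hj', rfl⟩ := List.getElem?_eq_some_iff.mp hj
  have hIpart : PT.InIntroPart d σ[i] :=
    hchain.getElem_of_le (fun _ _ hs hp => hp.of_branchStep hn hs) hji hi' (Or.inl hintro)
  exact hIpart.not_isElimMajorPos hn helim

/-- In a deduction in normal form in the system C, on any
branch, every formula occurrence that is the major premise of an elimination
rule precedes every formula occurrence that is a major assumption discharged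
by an introduction rule. -/
theorem elim_major_precedes_intro_major_on_branch
    (d : PT) (hd : d.wf) (hn : d.normal) (σ : List (List ℕ))
    (hσ : d.IsBranch σ) :
    ∀ (i j : ℕ) (pi pj : List ℕ), σ[i]? = some pi → σ[j]? = some pj →
      d.IsElimMajorPos pi → d.IsIntroMajorDischargedPos pj → i < j :=
  elim_major_precedes_intro_major_on_branch_general d hn σ hσ
end
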